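/- arXiv:1411.1624 — 8 statements merged into one kernel-verified Lean document; each statement's English description precedes it below -/
import Mathlib

section
/- Let (X_n) be a sequence of real random variables and (κ_n) a sequence with κ_n > 0 and liminf_n κ_n > 0. Assume the regular decay hypothesis for the right tails at (κ_n) with limit function I, that I(ρ) ≥ ρ for every ρ ≥ 1, and that there exists η > 0 with limsup_n E_n[e^{(1+η)X_n}] < ∞. Then, with c_n := E_n[(e^{X_n} − e^{κ_n})^+], one has log c_n ~ log F̄_n(κ_n) + κ_n, i.e. (log c_n)/(log F̄_n(κ_n) + κ_n) → 1 as n → ∞. -/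
/-!
Write `L n = log F̄ₙ(κₙ)` and `d n = L n + κ n`. If `B` eventually bounds `E_n[e^{(1+η)X_n}]`,
Markov's inequality gives `L n + (1 + η) κ n ≤ log B`. Hence `d n → -∞`, and every error term
below, being linear in `L n` and `κ n`, is a small multiple of `d n` plus a constant.

Lower bound: `c n ≥ (e^{ρκₙ} - e^{κₙ}) F̄ₙ(ρκₙ)` for `ρ > 1`; as `I ρ → 1` when `ρ ↓ 1`, for
every `θ > 0` some `ρ > 1` has `log F̄ₙ(ρκₙ) ≥ (1 + θ) L n` eventually, and `κ n ≥ δ` keeps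
`log (e^{ρκₙ} - e^{κₙ}) - κ n` bounded below.

Upper bound: cut `(κₙ, ∞)` at the points `ρⱼκₙ` of a fine grid `1 = ρ₀ < ⋯ < ρ_J = R`. The
piece over `(ρⱼκₙ, ρⱼ₊₁κₙ]` contributes at most `e^{ρⱼ₊₁κₙ} F̄ₙ(ρⱼκₙ)`, and `I ρ ≥ ρ` gives,
for a small `s > 0`, `log F̄ₙ(ρⱼκₙ) ≤ (1 - s) ρⱼ L n` eventually at the finitely many grid
points. Hölder's inequality with exponent `1 + η` bounds the piece beyond `Rκₙ` by a constant times
`F̄ₙ(Rκₙ)^{η/(1+η)}`, which is at most `F̄ₙ(κₙ)` once `R ≥ 2(1 + η)/η`.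
-/

open MeasureTheory Filter Topology Set Real
open scoped ENNReal

section CallPrice

variable {μ : Measure ℝ}

theorem ofReal_exp_mul_measure_Ioi_le_lintegral {t : ℝ} (ht : 0 ≤ t) (a : ℝ) :
    ENNReal.ofReal (exp (t * a)) * μ (Ioi a) ≤ ∫⁻ y, ENNReal.ofReal (exp (t * y)) ∂μ :=
  (mul_le_mul_right (measure_mono fun y (hy : a < y) => ENNReal.ofReal_le_ofReal
    (exp_le_exp.2 (mul_le_mul_of_nonneg_left hy.le ht))) _).trans
    (mul_meas_ge_le_lintegral₀ (by fun_prop) _)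

theorem setLIntegral_Ioi_eq_sum_Ioc_add {b : ℕ → ℝ} (hb : Monotone b) (f : ℝ → ℝ≥0∞) (J : ℕ) :
    ∫⁻ y in Ioi (b 0), f y ∂μ =
      ∑ j ∈ Finset.range J, ∫⁻ y in Ioc (b j) (b (j + 1)), f y ∂μ + ∫⁻ y in Ioi (b J), f y ∂μ := by
  induction J with
  | zero => simp
  | succ J ih =>
    rw [ih, Finset.sum_range_succ, add_assoc, ← lintegral_union measurableSet_Ioi
      (Ioc_disjoint_Ioi le_rfl), Ioc_union_Ioi_eq_Ioi (hb J.le_succ)]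

theorem setLIntegral_ofReal_exp_Ioc_le (a b : ℝ) :
    ∫⁻ y in Ioc a b, ENNReal.ofReal (exp y) ∂μ ≤ ENNReal.ofReal (exp b) * μ (Ioi a) :=
  calc ∫⁻ y in Ioc a b, ENNReal.ofReal (exp y) ∂μ ≤ ∫⁻ _ in Ioc a b, ENNReal.ofReal (exp b) ∂μ :=
        setLIntegral_mono measurable_const fun _ hy => ENNReal.ofReal_le_ofReal (exp_le_exp.2 hy.2)
    _ ≤ ENNReal.ofReal (exp b) * μ (Ioi a) := by
        rw [setLIntegral_const]
        exact mul_le_mul_right (measure_mono Ioc_subset_Ioi_self) _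

theorem setLIntegral_ofReal_exp_Ioi_le {η : ℝ} (hη : 0 < η) (a : ℝ) :
    ∫⁻ y in Ioi a, ENNReal.ofReal (exp y) ∂μ ≤
      (∫⁻ y, ENNReal.ofReal (exp ((1 + η) * y)) ∂μ) ^ (1 / (1 + η)) *
        μ (Ioi a) ^ (η / (1 + η)) := by
  have hpq : (1 + η).HolderConjugate ((1 + η) / η) :=
    Real.holderConjugate_iff.2 ⟨by linarith, by field_simp⟩
  have h := ENNReal.lintegral_mul_le_Lp_mul_Lq (μ.restrict (Ioi a)) hpq
    (f := fun y => ENNReal.ofReal (exp y)) (g := 1) (by fun_prop) aemeasurable_const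
  have hpow (y : ℝ) : ENNReal.ofReal (exp y) ^ (1 + η) = ENNReal.ofReal (exp ((1 + η) * y)) := by
    rw [ENNReal.ofReal_rpow_of_pos (exp_pos y), ← exp_mul, mul_comm]
  simp only [Pi.mul_apply, Pi.one_apply, mul_one, ENNReal.one_rpow, lintegral_one,
    Measure.restrict_apply_univ, hpow, one_div_div] at h
  exact h.trans
    (mul_le_mul' (ENNReal.rpow_le_rpow (setLIntegral_le_lintegral _ _) (by positivity)) le_rfl)

theorem lintegral_call_le_setLIntegral (a : ℝ) :
    ∫⁻ y, ENNReal.ofReal (max (exp y - exp a) 0) ∂μ ≤ ∫⁻ y in Ioi a, ENNReal.ofReal (exp y) ∂μ := by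
  rw [← lintegral_indicator measurableSet_Ioi]
  refine lintegral_mono fun y => ?_
  by_cases hy : a < y
  · rw [indicator_of_mem (mem_Ioi.2 hy)]
    exact ENNReal.ofReal_le_ofReal (max_le (by linarith [exp_pos a]) (exp_pos y).le)
  · rw [max_eq_right (sub_nonpos.2 (exp_le_exp.2 (not_lt.1 hy))), ENNReal.ofReal_zero]
    exact zero_le

theorem ofReal_exp_sub_exp_mul_measure_Ioi_le_lintegral_call (a b : ℝ) :
    ENNReal.ofReal (exp b - exp a) * μ (Ioi b) ≤
      ∫⁻ y, ENNReal.ofReal (max (exp y - exp a) 0) ∂μ := by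
  rw [← setLIntegral_const]
  refine (setLIntegral_mono (by fun_prop) fun y hy => ?_).trans (setLIntegral_le_lintegral _ _)
  exact ENNReal.ofReal_le_ofReal (le_max_of_le_left (by linarith [exp_le_exp.2 (mem_Ioi.1 hy).le]))

theorem integral_call_eq_toReal_lintegral (a : ℝ) :
    ∫ y, max (exp y - exp a) 0 ∂μ = (∫⁻ y, ENNReal.ofReal (max (exp y - exp a) 0) ∂μ).toReal :=
  integral_eq_lintegral_of_nonneg_ae (.of_forall fun _ => le_max_right _ _) (by fun_prop)

theorem log_measureReal_Ioi_add_mul_le {t B : ℝ} (ht : 0 ≤ t) (hB : 0 ≤ B)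
    (hm : ∫⁻ y, ENNReal.ofReal (exp (t * y)) ∂μ ≤ ENNReal.ofReal B) {a : ℝ}
    (ha : 0 < μ.real (Ioi a)) :
    log (μ.real (Ioi a)) + t * a ≤ log B := by
  have h := ENNReal.toReal_le_of_le_ofReal hB
    ((ofReal_exp_mul_measure_Ioi_le_lintegral ht a).trans hm)
  rw [ENNReal.toReal_mul, ENNReal.toReal_ofReal (exp_pos _).le, ← measureReal_def] at h
  rw [← log_exp (t * a), ← log_mul ha.ne' (exp_pos _).ne']
  exact log_le_log (by positivity) (by linarith)

variable [IsFiniteMeasure μ] {η : ℝ}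

theorem lintegral_call_ne_top (hη : 0 < η) (hm : ∫⁻ y, ENNReal.ofReal (exp ((1 + η) * y)) ∂μ ≠ ⊤)
    (a : ℝ) : ∫⁻ y, ENNReal.ofReal (max (exp y - exp a) 0) ∂μ ≠ ⊤ :=
  ne_top_of_le_ne_top
    (ENNReal.mul_ne_top (ENNReal.rpow_ne_top_of_nonneg (by positivity) hm)
      (ENNReal.rpow_ne_top_of_nonneg (by positivity) (measure_ne_top _ _)))
    ((lintegral_call_le_setLIntegral a).trans (setLIntegral_ofReal_exp_Ioi_le hη a))

theorem exp_sub_exp_mul_measureReal_Ioi_le_integral_call (hη : 0 < η)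
    (hm : ∫⁻ y, ENNReal.ofReal (exp ((1 + η) * y)) ∂μ ≠ ⊤) {a b : ℝ} (hab : a ≤ b) :
    (exp b - exp a) * μ.real (Ioi b) ≤ ∫ y, max (exp y - exp a) 0 ∂μ := by
  rw [integral_call_eq_toReal_lintegral, measureReal_def,
    ← ENNReal.toReal_ofReal (sub_nonneg.2 (exp_le_exp.2 hab)), ← ENNReal.toReal_mul]
  exact ENNReal.toReal_mono (lintegral_call_ne_top hη hm a)
    (ofReal_exp_sub_exp_mul_measure_Ioi_le_lintegral_call a b)

theorem integral_call_le_of_grid {B M : ℝ} (hη : 0 < η) (hB : 0 ≤ B)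
    (hm : ∫⁻ y, ENNReal.ofReal (exp ((1 + η) * y)) ∂μ ≤ ENNReal.ofReal B)
    {b : ℕ → ℝ} (hb : Monotone b) (J : ℕ)
    (hgrid : ∀ j < J, exp (b (j + 1)) * μ.real (Ioi (b j)) ≤ M)
    (htail : B ^ (1 / (1 + η)) * μ.real (Ioi (b J)) ^ (η / (1 + η)) ≤ M) :
    ∫ y, max (exp y - exp (b 0)) 0 ∂μ ≤ (J + 1) * M := by
  have hM : 0 ≤ M := le_trans (by positivity) htail
  rw [integral_call_eq_toReal_lintegral]
  refine ENNReal.toReal_le_of_le_ofReal (by positivity) ?_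
  calc ∫⁻ y, ENNReal.ofReal (max (exp y - exp (b 0)) 0) ∂μ
      ≤ ∫⁻ y in Ioi (b 0), ENNReal.ofReal (exp y) ∂μ := lintegral_call_le_setLIntegral _
    _ = ∑ j ∈ Finset.range J, ∫⁻ y in Ioc (b j) (b (j + 1)), ENNReal.ofReal (exp y) ∂μ +
          ∫⁻ y in Ioi (b J), ENNReal.ofReal (exp y) ∂μ := setLIntegral_Ioi_eq_sum_Ioc_add hb _ J
    _ ≤ ∑ _j ∈ Finset.range J, ENNReal.ofReal M + ENNReal.ofReal M := by
      gcongr with j hj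
      · refine (setLIntegral_ofReal_exp_Ioc_le _ _).trans ?_
        rw [← ofReal_measureReal, ← ENNReal.ofReal_mul (exp_pos _).le]
        exact ENNReal.ofReal_le_ofReal (hgrid j (Finset.mem_range.1 hj))
      · refine (setLIntegral_ofReal_exp_Ioi_le hη _).trans ?_
        rw [← ofReal_measureReal, ENNReal.ofReal_rpow_of_nonneg measureReal_nonneg (by positivity)]
        refine (mul_le_mul' (ENNReal.rpow_le_rpow hm (by positivity)) le_rfl).trans ?_
        rw [ENNReal.ofReal_rpow_of_nonneg hB (by positivity), ← ENNReal.ofReal_mul (by positivity)]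
        exact ENNReal.ofReal_le_ofReal htail
    _ = ENNReal.ofReal ((J + 1) * M) := by
      rw [Finset.sum_const, Finset.card_range, nsmul_eq_mul, ← ENNReal.ofReal_natCast,
        ← ENNReal.ofReal_mul (by positivity), ← ENNReal.ofReal_add (by positivity) hM]
      ring_nf

theorem add_log_measureReal_Ioi_le_log_integral_call {δ ρ a : ℝ} (hη : 0 < η)
    (hm : ∫⁻ y, ENNReal.ofReal (exp ((1 + η) * y)) ∂μ ≠ ⊤) (hρ : 1 < ρ) (hδ : 0 < δ)
    (ha : δ ≤ a) (hpos : 0 < μ.real (Ioi (ρ * a))) :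
    a + log (exp ((ρ - 1) * δ) - 1) + log (μ.real (Ioi (ρ * a))) ≤
      log (∫ y, max (exp y - exp a) 0 ∂μ) := by
  have hgap : 0 < exp ((ρ - 1) * δ) - 1 := by
    rw [sub_pos, one_lt_exp_iff]; exact mul_pos (by linarith) hδ
  have hexp : exp a * (exp ((ρ - 1) * δ) - 1) ≤ exp (ρ * a) - exp a := by
    have h₁ : exp ((ρ - 1) * δ) ≤ exp ((ρ - 1) * a) :=
      exp_le_exp.2 (mul_le_mul_of_nonneg_left ha (by linarith))
    have h₂ : exp (ρ * a) = exp a * exp ((ρ - 1) * a) := by rw [← exp_add]; ring_nf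
    nlinarith [exp_pos a]
  calc a + log (exp ((ρ - 1) * δ) - 1) + log (μ.real (Ioi (ρ * a)))
      = log (exp a * (exp ((ρ - 1) * δ) - 1) * μ.real (Ioi (ρ * a))) := by
        rw [log_mul (by positivity) hpos.ne', log_mul (exp_pos a).ne' hgap.ne', log_exp]
    _ ≤ log ((exp (ρ * a) - exp a) * μ.real (Ioi (ρ * a))) :=
        log_le_log (by positivity) (mul_le_mul_of_nonneg_right hexp hpos.le)
    _ ≤ log (∫ y, max (exp y - exp a) 0 ∂μ) :=
        log_le_log (mul_pos ((mul_pos (exp_pos a) hgap).trans_le hexp) hpos)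
          (exp_sub_exp_mul_measureReal_Ioi_le_integral_call hη hm
            (le_mul_of_one_le_left (hδ.trans_le ha).le hρ.le))

theorem log_integral_call_le_of_grid {B a : ℝ} (hη : 0 < η) (hB : 0 < B)
    (hm : ∫⁻ y, ENNReal.ofReal (exp ((1 + η) * y)) ∂μ ≤ ENNReal.ofReal B) (ha : 0 < a)
    (hpos : ∀ ρ ≥ 1, 0 < μ.real (Ioi (ρ * a))) {ρ : ℕ → ℝ} (hρ : Monotone ρ) (hρ0 : ρ 0 = 1)
    (J : ℕ) (M : ℝ) (hgrid : ∀ j < J, ρ (j + 1) * a + log (μ.real (Ioi (ρ j * a))) ≤ M)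
    (htail : log B / (1 + η) + η / (1 + η) * log (μ.real (Ioi (ρ J * a))) ≤ M) :
    log (∫ y, max (exp y - exp a) 0 ∂μ) ≤ log (J + 1) + M := by
  have hρ1 : ∀ j, 1 ≤ ρ j := fun j => hρ0 ▸ hρ j.zero_le
  have hm' : ∫⁻ y, ENNReal.ofReal (exp ((1 + η) * y)) ∂μ ≠ ⊤ :=
    ne_top_of_le_ne_top ENNReal.ofReal_ne_top hm
  have hcall_pos : 0 < ∫ y, max (exp y - exp a) 0 ∂μ :=
    (mul_pos (sub_pos.2 (exp_lt_exp.2 (by linarith))) (hpos 2 one_le_two)).trans_le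
      (exp_sub_exp_mul_measureReal_Ioi_le_integral_call hη hm' (by linarith))
  have hcall := integral_call_le_of_grid (b := fun j => ρ j * a) (M := exp M) hη hB.le hm
    (fun i j hij => mul_le_mul_of_nonneg_right (hρ hij) ha.le) J
    (fun j hj => by
      rw [← exp_log (hpos _ (hρ1 j)), ← exp_add]
      exact exp_le_exp.2 (hgrid j hj))
    (by
      rw [rpow_def_of_pos hB, rpow_def_of_pos (hpos _ (hρ1 J)), ← exp_add]
      exact exp_le_exp.2 ((by ring : _ = _).trans_le htail))
  rw [← log_exp M, ← log_mul (by positivity) (exp_pos M).ne']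
  exact log_le_log hcall_pos (by simpa only [hρ0, one_mul] using hcall)

end CallPrice

section Asymptotics

variable {α : Type*} {l : Filter α}

theorem exists_pos_eventually_le_ofReal_of_limsup_lt_top {u : α → ℝ≥0∞} (h : limsup u l < ⊤) :
    ∃ B : ℝ, 0 < B ∧ ∀ᶠ n in l, u n ≤ ENNReal.ofReal B := by
  refine ⟨(limsup u l).toReal + 1, by positivity, (eventually_lt_of_limsup_lt ?_).mono
    fun n hn => hn.le⟩
  rw [ENNReal.ofReal_add ENNReal.toReal_nonneg zero_le_one, ENNReal.ofReal_toReal h.ne,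
    ENNReal.ofReal_one]
  exact ENNReal.lt_add_right h.ne one_ne_zero

theorem tendsto_div_nhds_one_of_bounds {x d : α → ℝ} (hd : Tendsto d l atBot)
    (hlow : ∀ ε > 0, ∃ C, ∀ᶠ n in l, (1 + ε) * d n - C ≤ x n)
    (hup : ∀ ε > 0, ∃ C, ∀ᶠ n in l, x n ≤ (1 - ε) * d n + C) :
    Tendsto (fun n => x n / d n) l (𝓝 1) := by
  refine tendsto_order.2 ⟨fun a ha => ?_, fun b hb => ?_⟩
  · obtain ⟨C, hC⟩ := hup ((1 - a) / 2) (by linarith)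
    filter_upwards [hC, hd.eventually_lt_atBot 0,
      (hd.const_mul_atBot (by linarith : 0 < (1 - a) / 2)).eventually_lt_atBot (-C)]
      with n hx hd0 hdC
    rw [lt_div_iff_of_neg hd0]
    linarith
  · obtain ⟨C, hC⟩ := hlow ((b - 1) / 2) (by linarith)
    filter_upwards [hC, hd.eventually_lt_atBot 0,
      (hd.const_mul_atBot (by linarith : 0 < (b - 1) / 2)).eventually_lt_atBot (-C)]
      with n hx hd0 hdC
    rw [div_lt_iff_of_neg hd0]
    linarith

theorem tendsto_add_atBot_of_add_mul_le {L κ : α → ℝ} {η C : ℝ} (hη : 0 < η)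
    (hL : Tendsto L l atBot) (h : ∀ᶠ n in l, L n + (1 + η) * κ n ≤ C) :
    Tendsto (fun n => L n + κ n) l atBot := by
  refine tendsto_atBot_mono' l ?_ ((tendsto_atBot_add_const_right l C
    (hL.const_mul_atBot hη)).atBot_div_const (by positivity : 0 < 1 + η))
  filter_upwards [h] with n hn
  rw [le_div_iff₀ (by positivity)]
  linarith

theorem eventually_le_mul_of_coe_lt {u v : α → ℝ} {t : EReal} (hv : ∀ᶠ n in l, v n < 0)
    (h : Tendsto (fun n => ((u n / v n : ℝ) : EReal)) l (𝓝 t)) {r : ℝ} (hr : (r : EReal) < t) :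
    ∀ᶠ n in l, u n ≤ r * v n := by
  filter_upwards [h.eventually_const_lt hr, hv] with n hn hvn
  exact ((lt_div_iff_of_neg hvn).1 (EReal.coe_lt_coe_iff.1 hn)).le

theorem eventually_mul_le_of_lt_coe {u v : α → ℝ} {t : EReal} (hv : ∀ᶠ n in l, v n < 0)
    (h : Tendsto (fun n => ((u n / v n : ℝ) : EReal)) l (𝓝 t)) {r : ℝ} (hr : t < r) :
    ∀ᶠ n in l, r * v n ≤ u n := by
  filter_upwards [h.eventually_lt_const hr, hv] with n hn hvn
  exact ((div_lt_iff_of_neg hvn).1 (EReal.coe_lt_coe_iff.1 hn)).le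

end Asymptotics

section RegularDecay

variable {α : Type*} {l : Filter α} {κ x : α → ℝ} {F : α → ℝ → ℝ} {I : ℝ → EReal} {η C₀ : ℝ}

theorem exists_eventually_one_add_mul_sub_le (hη : 0 < η)
    (hL : ∀ᶠ n in l, log (F n (κ n)) < 0)
    (hI : ∀ ρ ≥ (1 : ℝ), Tendsto (fun n => ((log (F n (ρ * κ n)) / log (F n (κ n)) : ℝ) : EReal))
      l (𝓝 (I ρ)))
    (hIcont : Tendsto I (𝓝[>] (1 : ℝ)) (𝓝 (1 : EReal)))
    (hmarkov : ∀ᶠ n in l, log (F n (κ n)) + (1 + η) * κ n ≤ C₀)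
    (hcall : ∀ ρ > 1, ∃ C, ∀ᶠ n in l, κ n + log (F n (ρ * κ n)) - C ≤ x n)
    {ε : ℝ} (hε : 0 < ε) :
    ∃ C, ∀ᶠ n in l, (1 + ε) * (log (F n (κ n)) + κ n) - C ≤ x n := by
  -- with this `θ`, the Markov bound gives `θ * L n ≥ ε * d n - const`
  set θ := ε * η / (1 + η)
  have hθ : (1 : EReal) < ((1 + θ : ℝ) : EReal) := by
    exact_mod_cast lt_add_of_pos_right 1 (by positivity : 0 < θ)
  obtain ⟨ρ, hIρ, hρ⟩ := ((hIcont.eventually_lt_const hθ).and self_mem_nhdsWithin).exists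
  obtain ⟨C, hC⟩ := hcall ρ hρ
  refine ⟨C + ε * C₀ / (1 + η), ?_⟩
  filter_upwards [hmarkov, eventually_mul_le_of_lt_coe hL (hI ρ (le_of_lt hρ)) hIρ, hC]
    with n hmk hdec hx
  have hslack : 0 ≤ ε / (1 + η) * (C₀ - (log (F n (κ n)) + (1 + η) * κ n)) :=
    mul_nonneg (by positivity) (by linarith)
  have hid : κ n + (1 + θ) * log (F n (κ n)) =
      (1 + ε) * (log (F n (κ n)) + κ n) - ε * C₀ / (1 + η) +
        ε / (1 + η) * (C₀ - (log (F n (κ n)) + (1 + η) * κ n)) := by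
    simp only [θ]; field_simp; ring
  linarith

theorem log_grid_term_le {L κ C₀ η ρ R s ε G : ℝ} (hη : 0 < η) (hκ : 0 < κ) (hd : L + κ < 0)
    (hmarkov : L + (1 + η) * κ ≤ C₀) (hρ : 1 ≤ ρ) (hρR : ρ ≤ R) (hs : 0 ≤ s) (hs1 : s ≤ 1)
    (hε : s * (1 + (1 + R) / η) ≤ ε) (hG : G ≤ (1 - s) * ρ * L) :
    (ρ + s) * κ + G ≤ (1 - ε) * (L + κ) + s * (1 + R) / η * C₀ := by
  have hηκ : η * κ ≤ C₀ - (L + κ) := by linarith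
  calc (ρ + s) * κ + G ≤ (1 - s) * ρ * (L + κ) + s * (1 + ρ) * κ := by linarith
    _ ≤ (1 - s) * (L + κ) + s * (1 + R) / η * (η * κ) := by
        have : (1 - s) * (ρ - 1) * (L + κ) ≤ 0 :=
          mul_nonpos_of_nonneg_of_nonpos (by nlinarith) hd.le
        have : s * (1 + ρ) * κ ≤ s * (1 + R) * κ := by gcongr
        field_simp
        linarith
    _ ≤ (1 - s) * (L + κ) + s * (1 + R) / η * (C₀ - (L + κ)) := by
        gcongr
        exact div_nonneg (mul_nonneg hs (by linarith)) hη.le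
    _ ≤ (1 - ε) * (L + κ) + s * (1 + R) / η * C₀ := by
        have : (ε - s * (1 + (1 + R) / η)) * (L + κ) ≤ 0 :=
          mul_nonpos_of_nonneg_of_nonpos (by linarith) hd.le
        have : s * (1 + (1 + R) / η) = s + s * (1 + R) / η := by ring
        nlinarith

theorem exists_eventually_le_one_sub_mul_add (hη : 0 < η) (hκ : ∀ᶠ n in l, 0 < κ n)
    (hd : ∀ᶠ n in l, log (F n (κ n)) + κ n < 0)
    (hI : ∀ ρ ≥ (1 : ℝ), Tendsto (fun n => ((log (F n (ρ * κ n)) / log (F n (κ n)) : ℝ) : EReal))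
      l (𝓝 (I ρ)))
    (hIρ : ∀ ρ ≥ (1 : ℝ), (ρ : EReal) ≤ I ρ)
    (hmarkov : ∀ᶠ n in l, log (F n (κ n)) + (1 + η) * κ n ≤ C₀)
    (hcall : ∀ᶠ n in l, ∀ ρ : ℕ → ℝ, Monotone ρ → ρ 0 = 1 → ∀ (J : ℕ) (M : ℝ),
      (∀ j < J, ρ (j + 1) * κ n + log (F n (ρ j * κ n)) ≤ M) →
      C₀ / (1 + η) + η / (1 + η) * log (F n (ρ J * κ n)) ≤ M → x n ≤ log (J + 1) + M)
    {ε : ℝ} (hε : 0 < ε) :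
    ∃ C, ∀ᶠ n in l, x n ≤ (1 - ε) * (log (F n (κ n)) + κ n) + C := by
  -- beyond `R * κ n` the Hölder bound is already at most a constant times `F n (κ n)`
  set R : ℝ := 2 * (1 + η) / η
  have hR : 2 < R := by rw [lt_div_iff₀ hη]; linarith
  have hK : 0 < 1 + (1 + R) / η := by positivity
  have hs0 : Tendsto (fun J : ℕ => (R - 1) / J) atTop (𝓝 0) :=
    tendsto_const_div_atTop_nhds_zero_nat _
  obtain ⟨J, hJ, hsε, hs2⟩ := ((eventually_ge_atTop 1).and
    ((hs0.eventually_lt_const (div_pos hε hK)).and (hs0.eventually_lt_const one_half_pos))).exists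
  -- the grid step `s` is also the slack in `I ρ ≥ ρ > (1 - s) * ρ`
  set s := (R - 1) / J
  have hs : 0 < s := div_pos (by linarith) (by exact_mod_cast hJ)
  set ρ : ℕ → ℝ := fun j => 1 + j * s
  have hρ : Monotone ρ := fun i j hij => by simp only [ρ]; gcongr
  have hρ1 : ∀ j, 1 ≤ ρ j := fun j => le_add_of_nonneg_right (by positivity)
  have hρJ : ρ J = R := by simp only [ρ, s]; field_simp; ring
  have hL : ∀ᶠ n in l, log (F n (κ n)) < 0 := by
    filter_upwards [hκ, hd] with n h₁ h₂
    linarith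
  have hdec : ∀ᶠ n in l, ∀ j ∈ Finset.range (J + 1),
      log (F n (ρ j * κ n)) ≤ (1 - s) * ρ j * log (F n (κ n)) :=
    (eventually_all_finset _).2 fun j _ => eventually_le_mul_of_coe_lt hL (hI _ (hρ1 j))
      ((EReal.coe_lt_coe_iff.2 (by nlinarith [hρ1 j])).trans_le (hIρ _ (hρ1 j)))
  refine ⟨log (J + 1) + max (C₀ / (1 + η)) (s * (1 + R) / η * C₀), ?_⟩
  filter_upwards [hκ, hd, hmarkov, hcall, hdec] with n hκn hdn hmk hcn hdecn
  have hgrid : ∀ j < J, ρ (j + 1) * κ n + log (F n (ρ j * κ n)) ≤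
      (1 - ε) * (log (F n (κ n)) + κ n) + max (C₀ / (1 + η)) (s * (1 + R) / η * C₀) := by
    intro j hj
    have hρs : ρ (j + 1) = ρ j + s := by simp only [ρ]; push_cast; ring
    rw [hρs]
    refine (log_grid_term_le hη hκn hdn hmk (hρ1 j) (hρJ ▸ hρ hj.le) hs.le (by linarith)
      ((lt_div_iff₀ hK).1 hsε).le (hdecn j (Finset.mem_range.2 (by omega)))).trans ?_
    gcongr
    exact le_max_right _ _
  have htail : η / (1 + η) * log (F n (ρ J * κ n)) ≤ (1 - ε) * (log (F n (κ n)) + κ n) := by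
    have hq : η / (1 + η) * ((1 - s) * ρ J) = 2 * (1 - s) := by
      rw [hρJ]; simp only [R]; field_simp
    have := mul_le_mul_of_nonneg_left (hdecn J (by simp)) (by positivity : 0 ≤ η / (1 + η))
    nlinarith
  have := hcn ρ hρ (by simp [ρ]) J _ hgrid
    (by linarith [le_max_left (C₀ / (1 + η)) (s * (1 + R) / η * C₀)])
  linarith

end RegularDecay

/-- `μ n` is the law of `X_n`, so that `E_n[f(X_n)] = ∫ f ∂(μ n)`. -/
theorem right_tail_atypical_kappa_bounded_away_general
    (μ : ℕ → Measure ℝ) (hprob : ∀ n, IsProbabilityMeasure (μ n))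
    (κ : ℕ → ℝ)
    (hκbdd : ∃ δ > (0:ℝ), ∀ᶠ n in atTop, δ ≤ κ n)
    (F : ℕ → ℝ → ℝ)
    (hF : ∀ n x, F n x = ((μ n) {y | x < y}).toReal)
    (hF01 : ∀ n, ∀ ρ ≥ (1:ℝ), 0 < F n (ρ * κ n) ∧ F n (ρ * κ n) < 1)
    (hFto0 : Tendsto (fun n => F n (κ n)) atTop (𝓝 0))
    (I : ℝ → EReal)
    (hI : ∀ ρ ≥ (1:ℝ),
      Tendsto (fun n => ((Real.log (F n (ρ * κ n)) / Real.log (F n (κ n)) : ℝ) : EReal))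
        atTop (𝓝 (I ρ)))
    (hIcont : Tendsto I (𝓝[>] (1:ℝ)) (𝓝 (1:EReal)))
    (hIρ : ∀ ρ ≥ (1:ℝ), (ρ : EReal) ≤ I ρ)
    (η : ℝ) (hη : 0 < η)
    (hmom : limsup
        (fun n => ∫⁻ x, ENNReal.ofReal (Real.exp ((1+η)*x)) ∂(μ n)) atTop < ⊤)
    (c : ℕ → ℝ)
    (hc : ∀ n, c n = ∫ x, max (Real.exp x - Real.exp (κ n)) 0 ∂(μ n)) :
    Tendsto (fun n => Real.log (c n) / (Real.log (F n (κ n)) + κ n)) atTop (𝓝 1) := by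
  obtain ⟨δ, hδ, hκδ⟩ := hκbdd
  obtain ⟨B, hB, hmomB⟩ := exists_pos_eventually_le_ofReal_of_limsup_lt_top hmom
  have hF' : ∀ n x, F n x = (μ n).real (Ioi x) := hF
  have hκ : ∀ᶠ n in atTop, 0 < κ n := hκδ.mono fun n => hδ.trans_le
  have hFκ : ∀ n, 0 < F n (κ n) ∧ F n (κ n) < 1 := fun n => by simpa using hF01 n 1 le_rfl
  have hmarkov : ∀ᶠ n in atTop, log (F n (κ n)) + (1 + η) * κ n ≤ log B :=
    hmomB.mono fun n hm => by
      rw [hF']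
      exact log_measureReal_Ioi_add_mul_le (by positivity) hB.le hm (hF' n _ ▸ (hFκ n).1)
  have hd : Tendsto (fun n => log (F n (κ n)) + κ n) atTop atBot :=
    tendsto_add_atBot_of_add_mul_le hη (tendsto_log_nhdsGT_zero.comp
      (tendsto_nhdsWithin_iff.2 ⟨hFto0, .of_forall fun n => (hFκ n).1⟩)) hmarkov
  refine tendsto_div_nhds_one_of_bounds hd (fun ε hε => ?_) (fun ε hε => ?_)
  · refine exists_eventually_one_add_mul_sub_le hη
      (.of_forall fun n => log_neg (hFκ n).1 (hFκ n).2) hI hIcont hmarkov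
      (fun ρ hρ => ⟨-log (exp ((ρ - 1) * δ) - 1), ?_⟩) hε
    filter_upwards [hmomB, hκδ] with n hm hδn
    have := add_log_measureReal_Ioi_le_log_integral_call hη
      (ne_top_of_le_ne_top ENNReal.ofReal_ne_top hm) hρ hδ hδn (hF' n _ ▸ (hF01 n ρ hρ.le).1)
    rw [hc, hF']
    linarith
  · refine exists_eventually_le_one_sub_mul_add hη hκ (hd.eventually_lt_atBot 0) hI hIρ hmarkov
      ?_ hε
    filter_upwards [hmomB, hκ] with n hm hκn
    simp only [hc, hF']
    exact fun ρ => log_integral_call_le_of_grid hη hB hm hκn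
      fun ρ' hρ' => hF' n _ ▸ (hF01 n ρ' hρ').1

/-- **Right-tail atypical deviations, κ bounded away from zero, general case.**
For each `n`, the law of the log-return `X_n` is the probability measure `μ n` on `ℝ`,
so that `E_n[f(X_n)] = ∫ f dμ n` and the right tail is `F n x = μ n {y | x < y}`.
Under the regular decay hypothesis with limit function `I`, with `I ρ ≥ ρ` for `ρ ≥ 1`,
and the moment condition `limsup_n E_n[e^{(1+η)X_n}] < ∞` for some `η > 0`, the call prices
`c n = E_n[(e^{X_n} - e^{κ n})⁺]` satisfy `log (c n) ~ log (F n (κ n)) + κ n`. -/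
theorem right_tail_atypical_kappa_bounded_away
    (μ : ℕ → Measure ℝ) (hprob : ∀ n, IsProbabilityMeasure (μ n))
    (κ : ℕ → ℝ) (hκpos : ∀ n, 0 < κ n)
    (hκbdd : ∃ δ > (0:ℝ), ∀ᶠ n in atTop, δ ≤ κ n)
    (F : ℕ → ℝ → ℝ)
    (hF : ∀ n x, F n x = ((μ n) {y | x < y}).toReal)
    (hF01 : ∀ n, ∀ ρ ≥ (1:ℝ), 0 < F n (ρ * κ n) ∧ F n (ρ * κ n) < 1)
    (hFto0 : Tendsto (fun n => F n (κ n)) atTop (𝓝 0))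
    (I : ℝ → EReal)
    (hI0 : ∀ ρ ≥ (1:ℝ), (0:EReal) ≤ I ρ)
    (hI : ∀ ρ ≥ (1:ℝ),
      Tendsto (fun n => ((Real.log (F n (ρ * κ n)) / Real.log (F n (κ n)) : ℝ) : EReal))
        atTop (𝓝 (I ρ)))
    (hIcont : Tendsto I (𝓝[>] (1:ℝ)) (𝓝 (1:EReal)))
    (hIρ : ∀ ρ ≥ (1:ℝ), (ρ : EReal) ≤ I ρ)
    (η : ℝ) (hη : 0 < η)
    (hmom : limsup
        (fun n => ∫⁻ x, ENNReal.ofReal (Real.exp ((1+η)*x)) ∂(μ n)) atTop < ⊤)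
    (c : ℕ → ℝ)
    (hc : ∀ n, c n = ∫ x, max (Real.exp x - Real.exp (κ n)) 0 ∂(μ n)) :
    Tendsto (fun n => Real.log (c n) / (Real.log (F n (κ n)) + κ n)) atTop (𝓝 1) :=
  right_tail_atypical_kappa_bounded_away_general μ hprob κ hκbdd F hF hF01 hFto0 I hI hIcont hIρ η
    hη hmom c hc
end

section
/- Let (X_n) be a sequence of real random variables and (κ_n) a sequence with κ_n > 0 and liminf_n κ_n > 0. Assume the regular decay hypothesis for the right tails at (κ_n) with limit function I, that (−log F̄_n(κ_n))/κ_n → ∞, that I(ρ) → ∞ as ρ → ∞, and that there exists η > 0 with limsup_n E_n[e^{(1+η)X_n}] < ∞. Then, with c_n := E_n[(e^{X_n} − e^{κ_n})^+], one has log c_n ~ log F̄_n(κ_n), i.e. (log c_n)/(log F̄_n(κ_n)) → 1 as n → ∞. -/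
/-!
Write `L n = log F̄_n(κ_n)`; then `L n → -∞`. Lower bound: on `{X_n > ρ κ_n}` the payoff is at
least `e^{(ρ-1)δ} - 1`, so `c_n ≳ F̄_n(ρ κ_n) = e^{(I(ρ) + o(1)) L n}`, and `I(ρ)` is close to `1`
for `ρ` close to `1`. Upper bound: splitting at `R κ_n` and applying Hölder with exponents
`p = 1 + η`, `q = p / (p - 1)` gives `c_n ≤ e^{R κ_n} F̄_n(κ_n) + ‖e^{X_n}‖_p F̄_n(R κ_n)^{1/q}`.
The first term is `e^{(1 + o(1)) L n}` because `κ_n = o(L n)`, and the second is `O(e^{L n})`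
as soon as `I(R) > q`, which happens for large `R` since `I(R) → ∞`.
-/

open MeasureTheory Filter Topology Set Real
open scoped ENNReal

theorem exp_mul_sub_one_le_exp_mul_sub_exp {δ κ ρ : ℝ} (hδ : 0 ≤ δ) (hδκ : δ ≤ κ) (hρ : 1 ≤ ρ) :
    exp ((ρ - 1) * δ) - 1 ≤ exp (ρ * κ) - exp κ := by
  have hmono : exp ((ρ - 1) * δ) ≤ exp ((ρ - 1) * κ) := by gcongr
  have hone : 1 ≤ exp ((ρ - 1) * δ) := one_le_exp (mul_nonneg (by linarith) hδ)
  have hκ : 1 ≤ exp κ := one_le_exp (hδ.trans hδκ)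
  have hsplit : exp (ρ * κ) = exp κ * exp ((ρ - 1) * κ) := by rw [← exp_add]; ring_nf
  nlinarith

theorem tendsto_atTop_of_tendsto_div_atTop {α : Type*} {l : Filter α} {f g : α → ℝ} {δ : ℝ}
    (hδ : 0 < δ) (hg : ∀ᶠ x in l, δ ≤ g x) (h : Tendsto (fun x => f x / g x) l atTop) :
    Tendsto f l atTop := by
  refine tendsto_atTop_mono' l ?_ (h.atTop_mul_const hδ)
  filter_upwards [hg, h.eventually_ge_atTop 0] with x hgx hfx
  calc f x / g x * δ ≤ f x / g x * g x := mul_le_mul_of_nonneg_left hgx hfx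
    _ = f x := div_mul_cancel₀ _ (hδ.trans_le hgx).ne'

theorem exp_mul_le_iff_log_div_le {L x θ : ℝ} (hL : L < 0) (hx : 0 < x) :
    exp (θ * L) ≤ x ↔ log x / L ≤ θ := by
  rw [div_le_iff_of_neg hL, ← exp_le_exp (x := θ * L), exp_log hx]

theorem le_exp_mul_iff_le_log_div {L x θ : ℝ} (hL : L < 0) (hx : 0 < x) :
    x ≤ exp (θ * L) ↔ θ ≤ log x / L := by
  rw [le_div_iff_of_neg hL, ← exp_le_exp (y := θ * L), exp_log hx]

theorem setLIntegral_le_lintegral_rpow_mul_measure_rpow {α : Type*} [MeasurableSpace α]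
    (μ : Measure α) {p q : ℝ} (hpq : p.HolderConjugate q) {f : α → ℝ≥0∞}
    (hf : AEMeasurable f μ) {s : Set α} (hs : MeasurableSet s) :
    ∫⁻ x in s, f x ∂μ ≤ (∫⁻ x, f x ^ p ∂μ) ^ (1 / p) * μ s ^ (1 / q) := by
  have hind : ∫⁻ x, s.indicator 1 x ^ q ∂μ = μ s := by
    rw [← lintegral_indicator_one hs]
    refine lintegral_congr fun x => ?_
    by_cases hx : x ∈ s <;> simp [hx, hpq.symm.pos]
  calc ∫⁻ x in s, f x ∂μ = ∫⁻ x, (f * s.indicator (1 : α → ℝ≥0∞)) x ∂μ := by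
        rw [← lintegral_indicator hs]
        refine lintegral_congr fun x => ?_
        by_cases hx : x ∈ s <;> simp [hx]
    _ ≤ _ := ENNReal.lintegral_mul_le_Lp_mul_Lq μ hpq hf
        ((measurable_one.indicator hs).aemeasurable)
    _ = _ := by rw [hind]

section CallPayoff

variable (μ : Measure ℝ) {k : ℝ}

theorem ofReal_mul_measure_Ioi_le_lintegral_callPayoff (t : ℝ) :
    ENNReal.ofReal (exp t - exp k) * μ (Ioi t) ≤
      ∫⁻ x, ENNReal.ofReal (max (exp x - exp k) 0) ∂μ :=
  calc ENNReal.ofReal (exp t - exp k) * μ (Ioi t)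
      = ∫⁻ _ in Ioi t, ENNReal.ofReal (exp t - exp k) ∂μ := (setLIntegral_const _ _).symm
    _ ≤ ∫⁻ x in Ioi t, ENNReal.ofReal (max (exp x - exp k) 0) ∂μ := by
        refine setLIntegral_mono (by fun_prop) fun x hx => ENNReal.ofReal_le_ofReal ?_
        have := exp_le_exp.2 (le_of_lt hx)
        exact le_max_of_le_left (by linarith)
    _ ≤ _ := setLIntegral_le_lintegral _ _

theorem lintegral_callPayoff_le (s : ℝ) {p q : ℝ} (hpq : p.HolderConjugate q) :
    ∫⁻ x, ENNReal.ofReal (max (exp x - exp k) 0) ∂μ ≤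
      ENNReal.ofReal (exp s) * μ (Ioi k) +
        (∫⁻ x, ENNReal.ofReal (exp (p * x)) ∂μ) ^ (1 / p) * μ (Ioi s) ^ (1 / q) := by
  have hpayoff : ∀ x, ENNReal.ofReal (max (exp x - exp k) 0) ≤
      (Ioi k).indicator (fun _ => ENNReal.ofReal (exp s)) x +
        (Ioi s).indicator (fun y => ENNReal.ofReal (exp y)) x := by
    intro x
    rcases le_or_gt x k with hxk | hxk
    · rw [max_eq_right (by linarith [exp_le_exp.2 hxk]), ENNReal.ofReal_zero]
      exact zero_le
    have hk := exp_pos k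
    rcases le_or_gt x s with hxs | hxs
    · rw [indicator_of_mem (mem_Ioi.2 hxk)]
      refine le_add_right (ENNReal.ofReal_le_ofReal ?_)
      exact max_le (by linarith [exp_le_exp.2 hxs]) (exp_pos s).le
    · rw [indicator_of_mem (mem_Ioi.2 hxs)]
      exact le_add_left (ENNReal.ofReal_le_ofReal (max_le (by linarith) (exp_pos x).le))
  have hmom : ∫⁻ x, ENNReal.ofReal (exp x) ^ p ∂μ = ∫⁻ x, ENNReal.ofReal (exp (p * x)) ∂μ := by
    refine lintegral_congr fun x => ?_
    rw [ENNReal.ofReal_rpow_of_pos (exp_pos x), ← exp_mul, mul_comm]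
  calc _ ≤ ∫⁻ x, ((Ioi k).indicator (fun _ => ENNReal.ofReal (exp s)) x +
        (Ioi s).indicator (fun y => ENNReal.ofReal (exp y)) x) ∂μ := lintegral_mono hpayoff
    _ = ENNReal.ofReal (exp s) * μ (Ioi k) + ∫⁻ x in Ioi s, ENNReal.ofReal (exp x) ∂μ := by
        rw [lintegral_add_left (measurable_const.indicator measurableSet_Ioi),
          lintegral_indicator_const measurableSet_Ioi, lintegral_indicator measurableSet_Ioi]
    _ ≤ _ := by
        gcongr
        rw [← hmom]
        exact setLIntegral_le_lintegral_rpow_mul_measure_rpow μ hpq (by fun_prop) measurableSet_Ioi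

theorem integral_callPayoff_eq_toReal_lintegral :
    ∫ x, max (exp x - exp k) 0 ∂μ = (∫⁻ x, ENNReal.ofReal (max (exp x - exp k) 0) ∂μ).toReal :=
  integral_eq_lintegral_of_nonneg_ae (ae_of_all _ fun _ => le_max_right _ _) (by fun_prop)

variable [IsFiniteMeasure μ] {p q : ℝ}

theorem ofReal_mul_measure_add_rpow_mul_measure_rpow_ne_top (a : ℝ) (A B : Set ℝ) {M : ℝ≥0∞}
    (hM : M ≠ ⊤) (hp : 0 ≤ p) (hq : 0 ≤ q) :
    ENNReal.ofReal a * μ A + M ^ p * μ B ^ q ≠ ⊤ :=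
  ENNReal.add_ne_top.2 ⟨ENNReal.mul_ne_top ENNReal.ofReal_ne_top (measure_ne_top _ _),
    ENNReal.mul_ne_top (ENNReal.rpow_ne_top_of_nonneg hp hM)
      (ENNReal.rpow_ne_top_of_nonneg hq (measure_ne_top _ _))⟩

theorem lintegral_callPayoff_ne_top (hpq : p.HolderConjugate q)
    (hM : ∫⁻ x, ENNReal.ofReal (exp (p * x)) ∂μ ≠ ⊤) :
    ∫⁻ x, ENNReal.ofReal (max (exp x - exp k) 0) ∂μ ≠ ⊤ :=
  ne_top_of_le_ne_top (ofReal_mul_measure_add_rpow_mul_measure_rpow_ne_top μ _ _ _ hM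
    (one_div_pos.2 hpq.pos).le (one_div_pos.2 hpq.symm.pos).le) (lintegral_callPayoff_le μ k hpq)

theorem mul_measureReal_Ioi_le_integral_callPayoff {a t : ℝ} (ha : 0 ≤ a)
    (hat : a ≤ exp t - exp k) (hpq : p.HolderConjugate q)
    (hM : ∫⁻ x, ENNReal.ofReal (exp (p * x)) ∂μ ≠ ⊤) :
    a * μ.real (Ioi t) ≤ ∫ x, max (exp x - exp k) 0 ∂μ := by
  rw [integral_callPayoff_eq_toReal_lintegral, measureReal_def, ← ENNReal.toReal_ofReal ha,
    ← ENNReal.toReal_mul]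
  refine ENNReal.toReal_mono (lintegral_callPayoff_ne_top μ hpq hM) ?_
  grw [hat]
  exact ofReal_mul_measure_Ioi_le_lintegral_callPayoff μ t

theorem integral_callPayoff_le (s : ℝ) (hpq : p.HolderConjugate q) {M : ℝ≥0∞}
    (hM : ∫⁻ x, ENNReal.ofReal (exp (p * x)) ∂μ ≤ M) (hMtop : M ≠ ⊤) :
    ∫ x, max (exp x - exp k) 0 ∂μ ≤
      exp s * μ.real (Ioi k) + M.toReal ^ (1 / p) * μ.real (Ioi s) ^ (1 / q) := by
  have hp := (one_div_pos.2 hpq.pos).le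
  have hbound := ofReal_mul_measure_add_rpow_mul_measure_rpow_ne_top μ (exp s) (Ioi k) (Ioi s)
    hMtop hp (one_div_pos.2 hpq.symm.pos).le
  rw [integral_callPayoff_eq_toReal_lintegral]
  calc _ ≤ (ENNReal.ofReal (exp s) * μ (Ioi k) + M ^ (1 / p) * μ (Ioi s) ^ (1 / q)).toReal := by
        refine ENNReal.toReal_mono hbound ((lintegral_callPayoff_le μ s hpq).trans ?_)
        gcongr
    _ = _ := by
        rw [ENNReal.toReal_add (ENNReal.add_ne_top.1 hbound).1 (ENNReal.add_ne_top.1 hbound).2]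
        simp only [ENNReal.toReal_mul, ENNReal.toReal_rpow, ENNReal.toReal_ofReal (exp_pos s).le,
          measureReal_def]

end CallPayoff

section ExponentialScale

variable {L : ℕ → ℝ} {θ θ' : ℝ}

theorem eventually_mul_exp_le_exp (hL : Tendsto L atTop atBot) (hθ : θ' < θ) (K : ℝ) :
    ∀ᶠ n in atTop, K * exp (θ * L n) ≤ exp (θ' * L n) := by
  have h := tendsto_exp_atTop.comp (hL.const_mul_atBot_of_neg (sub_neg.2 hθ))
  filter_upwards [h.eventually_ge_atTop K] with n hn
  calc K * exp (θ * L n) ≤ exp ((θ' - θ) * L n) * exp (θ * L n) := by gcongr; exact hn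
    _ = exp (θ' * L n) := by rw [← exp_add]; ring_nf

theorem eventually_exp_le_mul_exp (hL : Tendsto L atTop atBot) (hθ : θ < θ') {K : ℝ}
    (hK : 0 < K) : ∀ᶠ n in atTop, exp (θ' * L n) ≤ K * exp (θ * L n) := by
  have h := tendsto_exp_atBot.comp (hL.const_mul_atBot (sub_pos.2 hθ))
  filter_upwards [h.eventually_le_const hK] with n hn
  calc exp (θ' * L n) = exp ((θ' - θ) * L n) * exp (θ * L n) := by rw [← exp_add]; ring_nf
    _ ≤ K * exp (θ * L n) := by gcongr; exact hn

theorem tendsto_log_div_of_exp_bounds {c : ℕ → ℝ} (hL : Tendsto L atTop atBot)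
    (hlow : ∀ ε > 0, ∀ᶠ n in atTop, exp ((1 + ε) * L n) ≤ c n)
    (hup : ∀ ε > 0, ∀ᶠ n in atTop, c n ≤ exp ((1 - ε) * L n)) :
    Tendsto (fun n => log (c n) / L n) atTop (𝓝 1) := by
  rw [tendsto_order]
  refine ⟨fun a ha => ?_, fun b hb => ?_⟩
  · filter_upwards [hup ((1 - a) / 2) (by linarith), hlow 1 one_pos, hL.eventually_lt_atBot 0]
      with n hu hl hn
    have := (le_exp_mul_iff_le_log_div hn ((exp_pos _).trans_le hl)).1 hu
    linarith
  · filter_upwards [hlow ((b - 1) / 2) (by linarith), hL.eventually_lt_atBot 0] with n hl hn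
    have := (exp_mul_le_iff_log_div_le hn ((exp_pos _).trans_le hl)).1 hl
    linarith

theorem eventually_exp_le_of_mul_le {G c : ℕ → ℝ} {a : ℝ} (hL : Tendsto L atTop atBot)
    (ha : 0 < a) (hθ : θ < θ')
    (hG : ∀ᶠ n in atTop, 0 < G n ∧ log (G n) / L n ≤ θ ∧ a * G n ≤ c n) :
    ∀ᶠ n in atTop, exp (θ' * L n) ≤ c n := by
  filter_upwards [eventually_exp_le_mul_exp hL hθ ha, hG, hL.eventually_lt_atBot 0]
    with n h ⟨hGpos, hGrate, hc⟩ hn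
  calc exp (θ' * L n) ≤ a * exp (θ * L n) := h
    _ ≤ a * G n := by gcongr; exact (exp_mul_le_iff_log_div_le hn hGpos).2 hGrate
    _ ≤ c n := hc

theorem eventually_le_exp_of_le_add {G κ c : ℕ → ℝ} {K q R : ℝ} (hL : Tendsto L atTop atBot)
    (hθ : θ' < θ) (hθ1 : θ < 1) (hK : 0 ≤ K) (hq : 0 < q)
    (hκ : Tendsto (fun n => -L n / κ n) atTop atTop) (hκpos : ∀ᶠ n in atTop, 0 < κ n)
    (hG : ∀ᶠ n in atTop, 0 < G n ∧ q ≤ log (G n) / L n)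
    (hc : ∀ᶠ n in atTop, c n ≤ exp (R * κ n + L n) + K * G n ^ (1 / q)) :
    ∀ᶠ n in atTop, c n ≤ exp (θ' * L n) := by
  filter_upwards [eventually_mul_exp_le_exp hL hθ 2, eventually_mul_exp_le_exp hL hθ1 K,
    hκ.eventually_ge_atTop (R / (1 - θ)), hκpos, hG, hc, hL.eventually_lt_atBot 0]
    with n h2 hK1 hRκ hκn ⟨hGpos, hGrate⟩ hc hn
  rw [div_le_div_iff₀ (sub_pos.2 hθ1) hκn] at hRκ
  have hGq : G n ^ (1 / q) ≤ exp (1 * L n) := by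
    calc G n ^ (1 / q) ≤ exp (q * L n) ^ (1 / q) :=
          rpow_le_rpow hGpos.le ((le_exp_mul_iff_le_log_div hn hGpos).2 hGrate) (by positivity)
      _ = exp (1 * L n) := by rw [← exp_mul]; field_simp
  calc c n ≤ exp (R * κ n + L n) + K * G n ^ (1 / q) := hc
    _ ≤ exp (θ * L n) + K * exp (1 * L n) := by gcongr; linarith
    _ ≤ 2 * exp (θ * L n) := by linarith
    _ ≤ exp (θ' * L n) := h2

end ExponentialScale

section RegularDecay

variable {r : ℝ → ℕ → ℝ} {I : ℝ → EReal}

theorem exists_gt_one_eventually_lt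
    (hI : ∀ ρ ≥ 1, Tendsto (fun n => (r ρ n : EReal)) atTop (𝓝 (I ρ)))
    (hIcont : Tendsto I (𝓝[>] 1) (𝓝 1)) {t : ℝ} (ht : 1 < t) :
    ∃ ρ > 1, ∀ᶠ n in atTop, r ρ n < t := by
  have h1 : (1 : EReal) < t := by exact_mod_cast ht
  obtain ⟨ρ, hρI, hρ⟩ := ((hIcont.eventually_lt_const h1).and self_mem_nhdsWithin).exists
  exact ⟨ρ, hρ, ((hI ρ hρ.le).eventually_lt_const hρI).mono fun _ hn => by exact_mod_cast hn⟩

theorem exists_ge_one_eventually_gt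
    (hI : ∀ ρ ≥ 1, Tendsto (fun n => (r ρ n : EReal)) atTop (𝓝 (I ρ)))
    (hIinf : Tendsto I atTop (𝓝 ⊤)) (b : ℝ) :
    ∃ R ≥ 1, ∀ᶠ n in atTop, b < r R n := by
  obtain ⟨R, hRI, hR⟩ :=
    ((hIinf.eventually_const_lt (EReal.coe_lt_top b)).and (eventually_ge_atTop 1)).exists
  exact ⟨R, hR, ((hI R hR).eventually_const_lt hRI).mono fun _ hn => by exact_mod_cast hn⟩

end RegularDecay

theorem right_tail_atypical_special_case_general
    (μ : ℕ → Measure ℝ) (hprob : ∀ n, IsProbabilityMeasure (μ n))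
    (κ : ℕ → ℝ)
    (hκbdd : ∃ δ > (0:ℝ), ∀ᶠ n in atTop, δ ≤ κ n)
    (F : ℕ → ℝ → ℝ)
    (hF : ∀ n x, F n x = ((μ n) {y | x < y}).toReal)
    (hF01 : ∀ n, ∀ ρ ≥ (1:ℝ), 0 < F n (ρ * κ n) ∧ F n (ρ * κ n) < 1)
    (hfast : Tendsto (fun n => (-Real.log (F n (κ n))) / κ n) atTop atTop)
    (I : ℝ → EReal)
    (hI : ∀ ρ ≥ (1:ℝ),
      Tendsto (fun n => ((Real.log (F n (ρ * κ n)) / Real.log (F n (κ n)) : ℝ) : EReal))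
        atTop (𝓝 (I ρ)))
    (hIcont : Tendsto I (𝓝[>] (1:ℝ)) (𝓝 (1:EReal)))
    (hIinf : Tendsto I atTop (𝓝 (⊤:EReal)))
    (η : ℝ) (hη : 0 < η)
    (hmom : limsup
        (fun n => ∫⁻ x, ENNReal.ofReal (Real.exp ((1+η)*x)) ∂(μ n)) atTop < ⊤)
    (c : ℕ → ℝ)
    (hc : ∀ n, c n = ∫ x, max (Real.exp x - Real.exp (κ n)) 0 ∂(μ n)) :
    Tendsto (fun n => Real.log (c n) / Real.log (F n (κ n))) atTop (𝓝 1) := by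
  obtain ⟨δ, hδ, hκδ⟩ := hκbdd
  have := hprob
  have hF' : ∀ n x, F n x = (μ n).real (Ioi x) := hF
  have hL : Tendsto (fun n => log (F n (κ n))) atTop atBot :=
    tendsto_neg_atTop_iff.1 (tendsto_atTop_of_tendsto_div_atTop hδ hκδ hfast)
  obtain ⟨M, hMlt, hM⟩ := exists_between hmom
  have hMev := (eventually_lt_of_limsup_lt hMlt).mono fun _ h => h.le
  have hpq := Real.HolderConjugate.conjExponent (lt_add_of_pos_right 1 hη)
  refine tendsto_log_div_of_exp_bounds hL (fun ε hε => ?_) (fun ε hε => ?_)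
  · obtain ⟨ρ, hρ, hr⟩ := exists_gt_one_eventually_lt hI hIcont (t := 1 + ε / 2) (by linarith)
    have ha : 0 < exp ((ρ - 1) * δ) - 1 := sub_pos.2 (one_lt_exp_iff.2 (by nlinarith))
    refine eventually_exp_le_of_mul_le hL ha (by linarith : 1 + ε / 2 < 1 + ε)
      (G := fun n => F n (ρ * κ n)) ?_
    filter_upwards [hr, hκδ, hMev] with n hrn hκn hMn
    refine ⟨(hF01 n ρ hρ.le).1, hrn.le, ?_⟩
    rw [hF', hc]
    exact mul_measureReal_Ioi_le_integral_callPayoff (μ n) ha.le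
      (exp_mul_sub_one_le_exp_mul_sub_exp hδ.le hκn hρ.le) hpq (ne_top_of_le_ne_top hM.ne hMn)
  · obtain ⟨R, hR, hr⟩ := exists_ge_one_eventually_gt hI hIinf (1 + η).conjExponent
    refine eventually_le_exp_of_le_add hL (θ := 1 - ε / 2) (R := R)
      (K := M.toReal ^ (1 / (1 + η))) (by linarith) (by linarith) (by positivity) hpq.symm.pos hfast
      (hκδ.mono fun n h => hδ.trans_le h) (hr.mono fun n hrn => ⟨(hF01 n R hR).1, hrn.le⟩) ?_
    filter_upwards [hMev] with n hMn
    rw [hc, exp_add, exp_log (by simpa using (hF01 n 1 le_rfl).1), hF', hF']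
    exact integral_callPayoff_le (μ n) (R * κ n) hpq hMn hM.ne

/-- **Right-tail atypical deviations, special case `-log F̄_n(κ_n)/κ_n → ∞`.**
For each `n`, the law of `X_n` is the probability measure `μ n` on `ℝ`; the right tail is
`F n x = μ n {y | x < y}`. Under the regular decay hypothesis with limit function `I`,
with `I(ρ) → ∞` as `ρ → ∞`, with `(-log F n (κ n))/κ n → ∞`, and the moment condition
`limsup_n E_n[e^{(1+η)X_n}] < ∞` for some `η > 0`, the call prices
`c n = E_n[(e^{X_n} - e^{κ n})⁺]` satisfy `log (c n) ~ log (F n (κ n))`. -/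
theorem right_tail_atypical_special_case
    (μ : ℕ → Measure ℝ) (hprob : ∀ n, IsProbabilityMeasure (μ n))
    (κ : ℕ → ℝ) (hκpos : ∀ n, 0 < κ n)
    (hκbdd : ∃ δ > (0:ℝ), ∀ᶠ n in atTop, δ ≤ κ n)
    (F : ℕ → ℝ → ℝ)
    (hF : ∀ n x, F n x = ((μ n) {y | x < y}).toReal)
    (hF01 : ∀ n, ∀ ρ ≥ (1:ℝ), 0 < F n (ρ * κ n) ∧ F n (ρ * κ n) < 1)
    (hFto0 : Tendsto (fun n => F n (κ n)) atTop (𝓝 0))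
    (hfast : Tendsto (fun n => (-Real.log (F n (κ n))) / κ n) atTop atTop)
    (I : ℝ → EReal)
    (hI0 : ∀ ρ ≥ (1:ℝ), (0:EReal) ≤ I ρ)
    (hI : ∀ ρ ≥ (1:ℝ),
      Tendsto (fun n => ((Real.log (F n (ρ * κ n)) / Real.log (F n (κ n)) : ℝ) : EReal))
        atTop (𝓝 (I ρ)))
    (hIcont : Tendsto I (𝓝[>] (1:ℝ)) (𝓝 (1:EReal)))
    (hIinf : Tendsto I atTop (𝓝 (⊤:EReal)))
    (η : ℝ) (hη : 0 < η)
    (hmom : limsup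
        (fun n => ∫⁻ x, ENNReal.ofReal (Real.exp ((1+η)*x)) ∂(μ n)) atTop < ⊤)
    (c : ℕ → ℝ)
    (hc : ∀ n, c n = ∫ x, max (Real.exp x - Real.exp (κ n)) 0 ∂(μ n)) :
    Tendsto (fun n => Real.log (c n) / Real.log (F n (κ n))) atTop (𝓝 1) :=
  right_tail_atypical_special_case_general μ hprob κ hκbdd F hF hF01 hfast I hI hIcont hIinf η hη
    hmom c hc
end

section
/- Let (X_n) be a sequence of real random variables and (κ_n) a sequence with κ_n > 0 and κ_n → 0. Assume the regular decay hypothesis for the right tails at (κ_n), and assume that for every η > 0 one has limsup_n E_n[|(e^{X_n} − 1)/κ_n|^{1+η}] < ∞. Then, with c_n := E_n[(e^{X_n} − e^{κ_n})^+], one has log(c_n/κ_n) ~ log F̄_n(κ_n), i.e. (log(c_n/κ_n))/(log F̄_n(κ_n)) → 1 as n → ∞. -/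
/-!
Lower bound: on `{X > ρκ}` the payoff `(e^X - e^κ)⁺` is at least `(ρ - 1)κ`, so
`c ≥ (ρ - 1) κ F̄(ρκ)`, and regular decay gives `F̄(ρκ) ≥ F̄(κ)^θ` for any `θ > 1` once `ρ` is
close to `1`. Upper bound: `(e^X - e^κ)⁺ ≤ |e^X - 1| 𝟙{X > κ}`, so Hölder with exponents
`p = 1/(1-θ)`, `q = 1/θ` and the moment bound give `c ≤ B κ F̄(κ)^θ` for any `θ < 1`. Taking
logarithms and dividing by `log F̄(κ) → -∞` squeezes the ratio to `1`.
-/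

open MeasureTheory Filter Topology Real Set
open scoped ENNReal NNReal

lemma Real.sub_le_exp_sub_exp {a b : ℝ} (ha : 0 ≤ a) (hab : a ≤ b) : b - a ≤ exp b - exp a := by
  have h := add_one_le_exp (b - a)
  have hexp : exp b = exp a * exp (b - a) := by rw [← exp_add]; ring_nf
  nlinarith [one_le_exp ha]

lemma integrable_and_integral_le_of_lintegral_ofReal_le {α : Type*} [MeasurableSpace α]
    {ν : Measure α} {f : α → ℝ} {R : ℝ} (hf : 0 ≤ f) (hfm : AEStronglyMeasurable f ν) (hR : 0 ≤ R)
    (h : ∫⁻ x, ENNReal.ofReal (f x) ∂ν ≤ ENNReal.ofReal R) :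
    Integrable f ν ∧ ∫ x, f x ∂ν ≤ R := by
  have hf' : 0 ≤ᵐ[ν] f := ae_of_all _ hf
  refine ⟨⟨hfm, (hasFiniteIntegral_iff_ofReal hf').2 (h.trans_lt ENNReal.ofReal_lt_top)⟩, ?_⟩
  rw [integral_eq_lintegral_of_nonneg_ae hf' hfm]
  exact ENNReal.toReal_le_of_le_ofReal hR h

section CallPayoff

variable (ν : Measure ℝ) {κ : ℝ}

lemma ofReal_mul_measure_Ioi_le_lintegral_call {ρ : ℝ} (hκ : 0 ≤ κ) (hρ : 1 ≤ ρ) :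
    ENNReal.ofReal ((ρ - 1) * κ) * ν (Ioi (ρ * κ)) ≤
      ∫⁻ x, ENNReal.ofReal (max (exp x - exp κ) 0) ∂ν := by
  rw [← setLIntegral_const]
  refine (setLIntegral_mono' measurableSet_Ioi fun x (hx : ρ * κ < x) => ?_).trans
    (setLIntegral_le_lintegral _ _)
  gcongr
  calc (ρ - 1) * κ ≤ x - κ := by linarith
    _ ≤ exp x - exp κ := sub_le_exp_sub_exp hκ (by nlinarith)
    _ ≤ max (exp x - exp κ) 0 := le_max_left _ _

lemma mul_measureReal_Ioi_le_integral_call {ρ : ℝ} (hκ : 0 ≤ κ) (hρ : 1 ≤ ρ)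
    (hint : Integrable (fun x => max (exp x - exp κ) 0) ν) :
    (ρ - 1) * κ * ν.real (Ioi (ρ * κ)) ≤ ∫ x, max (exp x - exp κ) 0 ∂ν := by
  have h := ofReal_mul_measure_Ioi_le_lintegral_call ν hκ hρ
  rw [← ofReal_integral_eq_lintegral_ofReal hint (ae_of_all _ fun _ => le_max_right _ _)] at h
  refine (ENNReal.ofReal_le_ofReal_iff (integral_nonneg fun _ => le_max_right _ _)).1 ?_
  rw [ENNReal.ofReal_mul (mul_nonneg (sub_nonneg.2 hρ) hκ)]
  refine le_trans ?_ h
  gcongr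
  exact ENNReal.ofReal_toReal_le

lemma lintegral_call_le_holder {p q : ℝ} (hκ : 0 < κ) (hpq : p.HolderConjugate q) :
    ∫⁻ x, ENNReal.ofReal (max (exp x - exp κ) 0) ∂ν ≤
      ENNReal.ofReal κ * (∫⁻ x, ENNReal.ofReal (|(exp x - 1) / κ| ^ p) ∂ν) ^ (1 / p) *
        ν (Ioi κ) ^ (1 / q) := by
  set f : ℝ → ℝ≥0∞ := fun x => ENNReal.ofReal |(exp x - 1) / κ|
  set g : ℝ → ℝ≥0∞ := (Ioi κ).indicator 1
  have hpayoff : ∀ x, ENNReal.ofReal (max (exp x - exp κ) 0) ≤ ENNReal.ofReal κ * (f * g) x := by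
    intro x
    by_cases hx : κ < x
    · have h1 : 1 ≤ exp κ := one_le_exp hκ.le
      have h2 : exp κ ≤ exp x := exp_le_exp.2 hx.le
      simp only [Pi.mul_apply, f, g, indicator_of_mem (mem_Ioi.2 hx), Pi.one_apply, mul_one]
      rw [← ENNReal.ofReal_mul hκ.le, abs_div, abs_of_pos hκ, mul_div_cancel₀ _ hκ.ne',
        abs_of_nonneg (by linarith)]
      gcongr
      exact max_le (by linarith) (by linarith)
    · have : exp x ≤ exp κ := exp_le_exp.2 (not_lt.1 hx)
      simp [max_eq_right (sub_nonpos.2 this)]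
  have hf : AEMeasurable f ν := by fun_prop
  have hg : AEMeasurable g ν := (measurable_one.indicator measurableSet_Ioi).aemeasurable
  have hgq : ∀ x, g x ^ q = g x := by
    intro x
    by_cases hx : κ < x
    · simp [g, hx]
    · simp [g, hx, ENNReal.zero_rpow_of_pos hpq.symm.pos]
  calc ∫⁻ x, ENNReal.ofReal (max (exp x - exp κ) 0) ∂ν
      ≤ ∫⁻ x, ENNReal.ofReal κ * (f * g) x ∂ν := lintegral_mono hpayoff
    _ = ENNReal.ofReal κ * ∫⁻ x, (f * g) x ∂ν := lintegral_const_mul' _ _ ENNReal.ofReal_ne_top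
    _ ≤ ENNReal.ofReal κ * ((∫⁻ x, f x ^ p ∂ν) ^ (1 / p) * (∫⁻ x, g x ^ q ∂ν) ^ (1 / q)) := by
      gcongr
      exact ENNReal.lintegral_mul_le_Lp_mul_Lq ν hpq hf hg
    _ = _ := by
      simp only [f, hgq, g, ← ENNReal.ofReal_rpow_of_nonneg (abs_nonneg _) hpq.nonneg,
        lintegral_indicator_one measurableSet_Ioi, mul_assoc]

end CallPayoff

lemma tendsto_div_of_affine_bounds {α : Type*} {l : Filter α} {u L : α → ℝ}
    (hL : Tendsto L l atBot)
    (hupper : ∀ᶠ θ in 𝓝[<] (1 : ℝ), ∃ B, ∀ᶠ x in l, u x ≤ B + θ * L x)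
    (hlower : ∀ᶠ θ in 𝓝[>] (1 : ℝ), ∃ A, ∀ᶠ x in l, A + θ * L x ≤ u x) :
    Tendsto (fun x => u x / L x) l (𝓝 1) := by
  have hLneg : ∀ᶠ x in l, L x < 0 := hL.eventually_lt_atBot 0
  have hsmall (C : ℝ) : Tendsto (fun x => C / L x) l (𝓝 0) := hL.const_div_atBot C
  refine tendsto_order.2 ⟨fun a ha => ?_, fun b hb => ?_⟩
  · obtain ⟨θ, ⟨B, hB⟩, hθ⟩ := (hupper.and (Ioo_mem_nhdsLT ha)).exists
    filter_upwards [hB, hLneg, (hsmall B).eventually (lt_mem_nhds (sub_neg.2 hθ.1))]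
      with x hx hLx hBx
    have : B / L x + θ ≤ u x / L x := by
      rw [div_add' _ _ _ hLx.ne, div_le_div_right_of_neg hLx]
      linarith
    linarith
  · obtain ⟨θ, ⟨A, hA⟩, hθ⟩ := (hlower.and (Ioo_mem_nhdsGT hb)).exists
    filter_upwards [hA, hLneg, (hsmall A).eventually (gt_mem_nhds (sub_pos.2 hθ.2))]
      with x hx hLx hAx
    have : u x / L x ≤ A / L x + θ := by
      rw [div_add' _ _ _ hLx.ne, div_le_div_right_of_neg hLx]
      linarith
    linarith

lemma tendsto_log_div_log_of_rpow_bounds {α : Type*} {l : Filter α} {v G : α → ℝ}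
    (hG : Tendsto G l (𝓝[>] 0))
    (hupper : ∀ᶠ θ in 𝓝[<] (1 : ℝ), ∃ B, ∀ᶠ x in l, v x ≤ B * G x ^ θ)
    (hlower : ∀ᶠ θ in 𝓝[>] (1 : ℝ), ∃ A > 0, ∀ᶠ x in l, A * G x ^ θ ≤ v x) :
    Tendsto (fun x => log (v x) / log (G x)) l (𝓝 1) := by
  have hGpos : ∀ᶠ x in l, 0 < G x := hG self_mem_nhdsWithin
  have hvpos : ∀ᶠ x in l, 0 < v x := by
    obtain ⟨θ, A, hA, hAv⟩ := hlower.exists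
    filter_upwards [hAv, hGpos] with x hx hGx
    exact (mul_pos hA (rpow_pos_of_pos hGx θ)).trans_le hx
  refine tendsto_div_of_affine_bounds (tendsto_log_nhdsGT_zero.comp hG) ?_ ?_
  · filter_upwards [hupper] with θ ⟨B, hB⟩
    refine ⟨log B, ?_⟩
    filter_upwards [hB, hvpos, hGpos] with x hx hvx hGx
    have hGθ := rpow_pos_of_pos hGx θ
    have hBpos : 0 < B := pos_of_mul_pos_left (hvx.trans_le hx) hGθ.le
    calc log (v x) ≤ log (B * G x ^ θ) := log_le_log hvx hx
      _ = log B + θ * log (G x) := by rw [log_mul hBpos.ne' hGθ.ne', log_rpow hGx]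
  · filter_upwards [hlower] with θ ⟨A, hA, hAv⟩
    refine ⟨log A, ?_⟩
    filter_upwards [hAv, hGpos] with x hx hGx
    have hGθ := rpow_pos_of_pos hGx θ
    calc log A + θ * log (G x) = log (A * G x ^ θ) := by
          rw [log_mul hA.ne' hGθ.ne', log_rpow hGx]
      _ ≤ log (v x) := log_le_log (mul_pos hA hGθ) hx

lemma exists_gt_one_eventually_rpow_le {F : ℕ → ℝ → ℝ} {κ : ℕ → ℝ} {I : ℝ → EReal}
    (hF01 : ∀ n, ∀ ρ ≥ (1:ℝ), 0 < F n (ρ * κ n) ∧ F n (ρ * κ n) < 1)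
    (hI : ∀ ρ ≥ (1:ℝ),
      Tendsto (fun n => ((log (F n (ρ * κ n)) / log (F n (κ n)) : ℝ) : EReal))
        atTop (𝓝 (I ρ)))
    (hIcont : Tendsto I (𝓝[>] (1:ℝ)) (𝓝 (1:EReal))) {θ : ℝ} (hθ : 1 < θ) :
    ∃ ρ > 1, ∀ᶠ n in atTop, F n (κ n) ^ θ ≤ F n (ρ * κ n) := by
  have hθ' : (1 : EReal) < θ := by exact_mod_cast hθ
  obtain ⟨ρ, hIρ, hρ⟩ := ((hIcont.eventually_lt_const hθ').and self_mem_nhdsWithin).exists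
  refine ⟨ρ, hρ, ?_⟩
  filter_upwards [(hI ρ hρ.le).eventually_lt_const hIρ] with n hn
  obtain ⟨hF0, hF1⟩ : 0 < F n (κ n) ∧ F n (κ n) < 1 := by simpa using hF01 n 1 le_rfl
  have hFρ := (hF01 n ρ hρ.le).1
  have hlog : θ * log (F n (κ n)) < log (F n (ρ * κ n)) := by
    rwa [EReal.coe_lt_coe_iff, div_lt_iff_of_neg (log_neg hF0 hF1)] at hn
  rw [← log_le_log_iff (rpow_pos_of_pos hF0 θ) hFρ, log_rpow hF0]
  exact hlog.le

lemma exists_eventually_integral_call_div_le {μ : ℕ → Measure ℝ} {κ : ℕ → ℝ}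
    (hκ : ∀ n, 0 < κ n) (hfin : ∀ n, μ n (Ioi (κ n)) ≠ ⊤)
    (hmom : ∀ η > (0:ℝ), limsup
        (fun n => ∫⁻ x, ENNReal.ofReal (|(exp x - 1) / κ n| ^ (1+η)) ∂(μ n)) atTop < ⊤)
    {θ : ℝ} (hθ : θ ∈ Ioo 0 1) :
    ∃ B, ∀ᶠ n in atTop, Integrable (fun x => max (exp x - exp (κ n)) 0) (μ n) ∧
      (∫ x, max (exp x - exp (κ n)) 0 ∂μ n) / κ n ≤ B * (μ n).real (Ioi (κ n)) ^ θ := by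
  have hpq := HolderConjugate.one_sub_inv_inv hθ.1 hθ.2
  have hη : 0 < (1 - θ)⁻¹ - 1 :=
    sub_pos.2 ((one_lt_inv₀ (sub_pos.2 hθ.2)).2 (by linarith [hθ.1]))
  obtain ⟨m, hm, -⟩ := ENNReal.lt_iff_exists_nnreal_btwn.1 (hmom _ hη)
  refine ⟨(m : ℝ) ^ (1 - θ), ?_⟩
  filter_upwards [eventually_lt_of_limsup_lt hm] with n hn
  rw [add_sub_cancel] at hn
  have hR : ENNReal.ofReal (κ n * (m : ℝ) ^ (1 - θ) * (μ n).real (Ioi (κ n)) ^ θ) =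
      ENNReal.ofReal (κ n) * (m : ℝ≥0∞) ^ (1 - θ) * μ n (Ioi (κ n)) ^ θ := by
    rw [ENNReal.ofReal_mul (mul_nonneg (hκ n).le (by positivity)), ENNReal.ofReal_mul (hκ n).le,
      ← ENNReal.ofReal_rpow_of_nonneg m.coe_nonneg (sub_pos.2 hθ.2).le, ENNReal.ofReal_coe_nnreal,
      ← ENNReal.ofReal_rpow_of_nonneg measureReal_nonneg hθ.1.le, measureReal_def,
      ENNReal.ofReal_toReal (hfin n)]
  have hbound : ∫⁻ x, ENNReal.ofReal (max (exp x - exp (κ n)) 0) ∂μ n ≤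
      ENNReal.ofReal (κ n * (m : ℝ) ^ (1 - θ) * (μ n).real (Ioi (κ n)) ^ θ) := by
    refine (lintegral_call_le_holder (μ n) (hκ n) hpq).trans ?_
    rw [hR, one_div, one_div, inv_inv, inv_inv]
    gcongr
    exact (sub_pos.2 hθ.2).le
  rw [div_le_iff₀ (hκ n), mul_comm, ← mul_assoc]
  exact integrable_and_integral_le_of_lintegral_ofReal_le (fun _ => le_max_right _ _)
    (by fun_prop) (by have := hκ n; positivity) hbound

theorem right_tail_atypical_kappa_to_zero_general
    (μ : ℕ → Measure ℝ)
    (κ : ℕ → ℝ) (hκpos : ∀ n, 0 < κ n)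
    (F : ℕ → ℝ → ℝ)
    (hF : ∀ n x, F n x = ((μ n) {y | x < y}).toReal)
    (hF01 : ∀ n, ∀ ρ ≥ (1:ℝ), 0 < F n (ρ * κ n) ∧ F n (ρ * κ n) < 1)
    (hFto0 : Tendsto (fun n => F n (κ n)) atTop (𝓝 0))
    (I : ℝ → EReal)
    (hI : ∀ ρ ≥ (1:ℝ),
      Tendsto (fun n => ((Real.log (F n (ρ * κ n)) / Real.log (F n (κ n)) : ℝ) : EReal))
        atTop (𝓝 (I ρ)))
    (hIcont : Tendsto I (𝓝[>] (1:ℝ)) (𝓝 (1:EReal)))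
    (hmom : ∀ η > (0:ℝ), limsup
        (fun n => ∫⁻ x, ENNReal.ofReal (|(Real.exp x - 1) / κ n| ^ (1+η)) ∂(μ n)) atTop < ⊤)
    (c : ℕ → ℝ)
    (hc : ∀ n, c n = ∫ x, max (Real.exp x - Real.exp (κ n)) 0 ∂(μ n)) :
    Tendsto (fun n => Real.log (c n / κ n) / Real.log (F n (κ n))) atTop (𝓝 1) := by
  have hFμ : ∀ n x, F n x = (μ n).real (Ioi x) := hF
  have hFκ : ∀ n, 0 < F n (κ n) := fun n => by simpa using (hF01 n 1 le_rfl).1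
  have hfin : ∀ n, μ n (Ioi (κ n)) ≠ ⊤ := fun n =>
    (ENNReal.toReal_pos_iff.1 ((hFμ n (κ n)).symm.trans_gt (hFκ n))).2.ne
  have hupper := fun θ (hθ : θ ∈ Ioo (0:ℝ) 1) =>
    exists_eventually_integral_call_div_le hκpos hfin hmom hθ
  obtain ⟨_, hhalf⟩ := hupper (1 / 2) ⟨by norm_num, by norm_num⟩
  have hint := hhalf.mono fun _ => And.left
  refine tendsto_log_div_log_of_rpow_bounds
    (tendsto_nhdsWithin_iff.2 ⟨hFto0, .of_forall hFκ⟩) ?_ ?_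
  · filter_upwards [Ioo_mem_nhdsLT one_pos] with θ hθ
    obtain ⟨B, hB⟩ := hupper θ hθ
    exact ⟨B, hB.mono fun n hn => by rw [hc, hFμ]; exact hn.2⟩
  · filter_upwards [self_mem_nhdsWithin] with θ (hθ : 1 < θ)
    obtain ⟨ρ, hρ, hdecay⟩ := exists_gt_one_eventually_rpow_le hF01 hI hIcont hθ
    refine ⟨ρ - 1, sub_pos.2 hρ, ?_⟩
    filter_upwards [hdecay, hint] with n hn hintn
    rw [hc, le_div_iff₀ (hκpos n)]
    have hρκ : 0 ≤ (ρ - 1) * κ n := mul_nonneg (sub_pos.2 hρ).le (hκpos n).le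
    calc (ρ - 1) * F n (κ n) ^ θ * κ n = (ρ - 1) * κ n * F n (κ n) ^ θ := by ring
      _ ≤ (ρ - 1) * κ n * F n (ρ * κ n) := by gcongr
      _ ≤ _ := by
          rw [hFμ]
          exact mul_measureReal_Ioi_le_integral_call (μ n) (hκpos n).le hρ.le hintn

/-- **Right-tail atypical deviations, regime `κ_n → 0`.**
For each `n`, the law of `X_n` is the probability measure `μ n` on `ℝ`; the right tail is
`F n x = μ n {y | x < y}`. Under the regular decay hypothesis with limit function `I`,
and the moment condition `limsup_n E_n[|(e^{X_n}-1)/κ_n|^{1+η}] < ∞` for every `η > 0`,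
the call prices `c n = E_n[(e^{X_n} - e^{κ n})⁺]` satisfy
`log (c n / κ n) ~ log (F n (κ n))`. -/
theorem right_tail_atypical_kappa_to_zero
    (μ : ℕ → Measure ℝ) (hprob : ∀ n, IsProbabilityMeasure (μ n))
    (κ : ℕ → ℝ) (hκpos : ∀ n, 0 < κ n)
    (hκ0 : Tendsto κ atTop (𝓝 0))
    (F : ℕ → ℝ → ℝ)
    (hF : ∀ n x, F n x = ((μ n) {y | x < y}).toReal)
    (hF01 : ∀ n, ∀ ρ ≥ (1:ℝ), 0 < F n (ρ * κ n) ∧ F n (ρ * κ n) < 1)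
    (hFto0 : Tendsto (fun n => F n (κ n)) atTop (𝓝 0))
    (I : ℝ → EReal)
    (hI0 : ∀ ρ ≥ (1:ℝ), (0:EReal) ≤ I ρ)
    (hI : ∀ ρ ≥ (1:ℝ),
      Tendsto (fun n => ((Real.log (F n (ρ * κ n)) / Real.log (F n (κ n)) : ℝ) : EReal))
        atTop (𝓝 (I ρ)))
    (hIcont : Tendsto I (𝓝[>] (1:ℝ)) (𝓝 (1:EReal)))
    (hmom : ∀ η > (0:ℝ), limsup
        (fun n => ∫⁻ x, ENNReal.ofReal (|(Real.exp x - 1) / κ n| ^ (1+η)) ∂(μ n)) atTop < ⊤)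
    (c : ℕ → ℝ)
    (hc : ∀ n, c n = ∫ x, max (Real.exp x - Real.exp (κ n)) 0 ∂(μ n)) :
    Tendsto (fun n => Real.log (c n / κ n) / Real.log (F n (κ n))) atTop (𝓝 1) :=
  right_tail_atypical_kappa_to_zero_general μ κ hκpos F hF hF01 hFto0 I hI hIcont hmom c hc
end

section
/- Let (X_n) be a sequence of real random variables and (κ_n) a sequence with κ_n > 0 and liminf_n κ_n > 0. Assume the regular decay hypothesis for the left tails at (κ_n). Then, with no moment condition, the put prices p_n := E_n[(e^{−κ_n} − e^{X_n})^+] satisfy log p_n ~ log F_n(−κ_n) − κ_n, i.e. (log p_n)/(log F_n(−κ_n) − κ_n) → 1 as n → ∞. -/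
open MeasureTheory Filter Topology Real Set

/-!
The put payoff `(e^{-κ} - e^x)⁺` is at most `e^{-κ}` and vanishes for `x > -κ`, so
`p ≤ e^{-κ} F(-κ)`. For `ρ > 1` it is at least `e^{-κ} - e^{-ρκ} ≥ e^{-κ} c_ρ` on `x ≤ -ρκ`,
where `c_ρ = 1 - e^{-(ρ-1)δ}` and `κ ≥ δ`, so `p ≥ e^{-κ} c_ρ F(-ρκ)`. Choosing `ρ` with
`I(ρ) < 1 + ε` gives eventually `log F(-ρκ) ≥ (1 + ε) log F(-κ)`, hence
`log c_ρ + (1 + ε)(log F(-κ) - κ) ≤ log p ≤ log F(-κ) - κ`, and the constant `log c_ρ` is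
negligible because `log F(-κ) - κ → -∞`.
-/

noncomputable def putPayoff (k x : ℝ) : ℝ := max (exp (-k) - exp x) 0

lemma putPayoff_nonneg (k x : ℝ) : 0 ≤ putPayoff k x := le_max_right _ _

lemma continuous_putPayoff (k : ℝ) : Continuous (putPayoff k) := by
  unfold putPayoff; fun_prop

lemma putPayoff_le_indicator (k x : ℝ) :
    putPayoff k x ≤ (Iic (-k)).indicator (fun _ => exp (-k)) x := by
  by_cases hx : x ≤ -k
  · rw [indicator_of_mem (show x ∈ Iic (-k) from hx)]
    exact max_le (by linarith [exp_pos x]) (exp_pos _).le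
  · rw [indicator_of_notMem (show x ∉ Iic (-k) from hx)]
    exact max_le (by linarith [exp_lt_exp.2 (not_le.1 hx)]) le_rfl

lemma indicator_le_putPayoff {k r : ℝ} (x : ℝ) :
    (Iic (-r)).indicator (fun _ => exp (-k) - exp (-r)) x ≤ putPayoff k x := by
  by_cases hx : x ≤ -r
  · rw [indicator_of_mem (show x ∈ Iic (-r) from hx)]
    exact le_max_of_le_left (by linarith [exp_le_exp.2 hx])
  · rw [indicator_of_notMem (show x ∉ Iic (-r) from hx)]
    exact le_max_right _ _

lemma one_sub_exp_pos {δ ρ : ℝ} (hδ : 0 < δ) (hρ : 1 < ρ) : 0 < 1 - exp (-((ρ - 1) * δ)) :=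
  sub_pos.2 (exp_lt_one_iff.2 (by nlinarith))

lemma exp_mul_one_sub_exp_le {k δ ρ : ℝ} (hδk : δ ≤ k) (hρ : 1 ≤ ρ) :
    exp (-k) * (1 - exp (-((ρ - 1) * δ))) ≤ exp (-k) - exp (-(ρ * k)) := by
  have : exp (-(ρ * k)) ≤ exp (-k) * exp (-((ρ - 1) * δ)) := by
    rw [← exp_add, exp_le_exp]
    nlinarith
  linarith

section Integral

variable {μ : Measure ℝ} {k : ℝ}

lemma integrable_putPayoff (hk : μ (Iic (-k)) ≠ ⊤) : Integrable (putPayoff k) μ :=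
  Integrable.mono'
    ((integrableOn_const (C := exp (-k)) hk).integrable_indicator measurableSet_Iic)
    (continuous_putPayoff k).aestronglyMeasurable
    (Eventually.of_forall fun x => by
      rw [Real.norm_of_nonneg (putPayoff_nonneg k x)]
      exact putPayoff_le_indicator k x)

lemma integral_putPayoff_le (hk : μ (Iic (-k)) ≠ ⊤) :
    ∫ x, putPayoff k x ∂μ ≤ exp (-k) * μ.real (Iic (-k)) := by
  calc ∫ x, putPayoff k x ∂μ ≤ ∫ x, (Iic (-k)).indicator (fun _ => exp (-k)) x ∂μ :=
        integral_mono (integrable_putPayoff hk)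
          ((integrableOn_const (C := exp (-k)) hk).integrable_indicator measurableSet_Iic)
          (putPayoff_le_indicator k)
    _ = exp (-k) * μ.real (Iic (-k)) := by
        rw [integral_indicator_const _ measurableSet_Iic, smul_eq_mul, mul_comm]

lemma le_integral_putPayoff {r : ℝ} (hkr : k ≤ r) (hk : μ (Iic (-k)) ≠ ⊤) :
    (exp (-k) - exp (-r)) * μ.real (Iic (-r)) ≤ ∫ x, putPayoff k x ∂μ := by
  have hr : μ (Iic (-r)) ≠ ⊤ :=
    ne_top_of_le_ne_top hk (measure_mono (Iic_subset_Iic.2 (neg_le_neg hkr)))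
  calc (exp (-k) - exp (-r)) * μ.real (Iic (-r))
      = ∫ x, (Iic (-r)).indicator (fun _ => exp (-k) - exp (-r)) x ∂μ := by
        rw [integral_indicator_const _ measurableSet_Iic, smul_eq_mul, mul_comm]
    _ ≤ ∫ x, putPayoff k x ∂μ :=
        integral_mono
          ((integrableOn_const (C := exp (-k) - exp (-r)) hr).integrable_indicator
            measurableSet_Iic)
          (integrable_putPayoff hk) indicator_le_putPayoff

lemma mul_measureReal_le_integral_putPayoff {δ ρ : ℝ} (hδ : 0 ≤ δ) (hδk : δ ≤ k) (hρ : 1 ≤ ρ)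
    (hk : μ (Iic (-k)) ≠ ⊤) :
    exp (-k) * (1 - exp (-((ρ - 1) * δ))) * μ.real (Iic (-(ρ * k))) ≤ ∫ x, putPayoff k x ∂μ :=
  (mul_le_mul_of_nonneg_right (exp_mul_one_sub_exp_le hδk hρ) measureReal_nonneg).trans
    (le_integral_putPayoff (by nlinarith) hk)

lemma integral_putPayoff_pos {δ ρ : ℝ} (hδ : 0 < δ) (hδk : δ ≤ k) (hρ : 1 < ρ)
    (hρk : 0 < μ.real (Iic (-(ρ * k)))) (hk : μ (Iic (-k)) ≠ ⊤) :
    0 < ∫ x, putPayoff k x ∂μ :=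
  lt_of_lt_of_le (by have := one_sub_exp_pos hδ hρ; positivity)
    (mul_measureReal_le_integral_putPayoff hδ.le hδk hρ.le hk)

lemma log_integral_putPayoff_le (hμ : 0 < μ.real (Iic (-k)))
    (hpos : 0 < ∫ x, putPayoff k x ∂μ) :
    log (∫ x, putPayoff k x ∂μ) ≤ log (μ.real (Iic (-k))) - k := by
  have := log_le_log hpos (integral_putPayoff_le (ENNReal.toReal_pos_iff.1 hμ).2.ne)
  rwa [log_mul (exp_ne_zero _) hμ.ne', log_exp, neg_add_eq_sub] at this

lemma log_integral_putPayoff_ge {δ ρ : ℝ} (hδ : 0 < δ) (hδk : δ ≤ k) (hρ : 1 < ρ)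
    (hρk : 0 < μ.real (Iic (-(ρ * k)))) (hk : μ (Iic (-k)) ≠ ⊤) :
    log (1 - exp (-((ρ - 1) * δ))) - k + log (μ.real (Iic (-(ρ * k))))
      ≤ log (∫ x, putPayoff k x ∂μ) := by
  have hc := one_sub_exp_pos hδ hρ
  have := log_le_log (by positivity) (mul_measureReal_le_integral_putPayoff hδ.le hδk hρ.le hk)
  rw [log_mul (by positivity) hρk.ne', log_mul (exp_ne_zero _) hc.ne', log_exp] at this
  linarith

end Integral

lemma tendsto_div_nhds_one_of_le_of_forall_ge {α : Type*} {l : Filter α} {a D : α → ℝ}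
    (hD : Tendsto D l atBot) (hle : ∀ᶠ n in l, a n ≤ D n)
    (hge : ∀ ε > 0, ∃ C, ∀ᶠ n in l, C + (1 + ε) * D n ≤ a n) :
    Tendsto (fun n => a n / D n) l (𝓝 1) := by
  have hDneg : ∀ᶠ n in l, D n < 0 := hD.eventually_lt_atBot 0
  refine tendsto_order.2 ⟨fun b hb => ?_, fun b hb => ?_⟩
  · filter_upwards [hDneg, hle] with n hDn han
    rw [lt_div_iff_of_neg hDn]
    nlinarith
  · obtain ⟨C, hC⟩ := hge ((b - 1) / 2) (by linarith)
    have hCD : ∀ᶠ n in l, C / D n < (b - 1) / 2 :=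
      (tendsto_const_nhds.div_atBot hD).eventually_lt_const (by linarith)
    filter_upwards [hDneg, hC, hCD] with n hDn hCn hCDn
    rw [div_lt_iff_of_neg hDn] at hCDn ⊢
    linarith

lemma exists_gt_one_eventually_mul_le {α : Type*} {l : Filter α} {L : ℝ → α → ℝ} {L₁ : α → ℝ}
    {I : ℝ → EReal} (hI : ∀ ρ > 1, Tendsto (fun n => ((L ρ n / L₁ n : ℝ) : EReal)) l (𝓝 (I ρ)))
    (hIcont : Tendsto I (𝓝[>] 1) (𝓝 1)) (hneg : ∀ᶠ n in l, L₁ n < 0) {ε : ℝ} (hε : 0 < ε) :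
    ∃ ρ > 1, ∀ᶠ n in l, (1 + ε) * L₁ n ≤ L ρ n := by
  have h1 : (1 : EReal) < ((1 + ε : ℝ) : EReal) := by
    exact_mod_cast (by linarith : (1 : ℝ) < 1 + ε)
  obtain ⟨ρ, hIρ, hρ⟩ := ((hIcont.eventually_lt_const h1).and self_mem_nhdsWithin).exists
  refine ⟨ρ, hρ, ?_⟩
  filter_upwards [(hI ρ hρ).eventually_lt_const hIρ, hneg] with n hn hL₁
  have : L ρ n / L₁ n < 1 + ε := by exact_mod_cast hn
  rw [div_lt_iff_of_neg hL₁] at this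
  linarith

theorem left_tail_atypical_kappa_bounded_away_general
    (μ : ℕ → Measure ℝ)
    (κ : ℕ → ℝ)
    (hκbdd : ∃ δ > (0:ℝ), ∀ᶠ n in atTop, δ ≤ κ n)
    (G : ℕ → ℝ → ℝ)
    (hG : ∀ n x, G n x = ((μ n) {y | y ≤ -x}).toReal)
    (hG01 : ∀ n, ∀ ρ ≥ (1:ℝ), 0 < G n (ρ * κ n) ∧ G n (ρ * κ n) < 1)
    (hGto0 : Tendsto (fun n => G n (κ n)) atTop (𝓝 0))
    (I : ℝ → EReal)
    (hI : ∀ ρ ≥ (1:ℝ),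
      Tendsto (fun n => ((Real.log (G n (ρ * κ n)) / Real.log (G n (κ n)) : ℝ) : EReal))
        atTop (𝓝 (I ρ)))
    (hIcont : Tendsto I (𝓝[>] (1:ℝ)) (𝓝 (1:EReal)))
    (p : ℕ → ℝ)
    (hp : ∀ n, p n = ∫ x, max (Real.exp (-κ n) - Real.exp x) 0 ∂(μ n)) :
    Tendsto (fun n => Real.log (p n) / (Real.log (G n (κ n)) - κ n)) atTop (𝓝 1) := by
  obtain ⟨δ, hδ, hκδ⟩ := hκbdd
  have hG' : ∀ n x, G n x = (μ n).real (Iic (-x)) := hG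
  have hp' : ∀ n, p n = ∫ x, putPayoff (κ n) x ∂μ n := hp
  have hGpos : ∀ n, ∀ ρ ≥ (1:ℝ), 0 < (μ n).real (Iic (-(ρ * κ n))) := fun n ρ hρ => by
    rw [← hG']; exact (hG01 n ρ hρ).1
  have hμκ : ∀ n, 0 < (μ n).real (Iic (-κ n)) := fun n => by simpa using hGpos n 1 le_rfl
  have hGκpos : ∀ n, 0 < G n (κ n) := fun n => by rw [hG']; exact hμκ n
  have hfin : ∀ n, μ n (Iic (-κ n)) ≠ ⊤ := fun n => (ENNReal.toReal_pos_iff.1 (hμκ n)).2.ne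
  have hlogG : Tendsto (fun n => log (G n (κ n))) atTop atBot :=
    tendsto_log_nhdsGT_zero.comp
      (tendsto_nhdsWithin_iff.2 ⟨hGto0, Eventually.of_forall hGκpos⟩)
  have hD : Tendsto (fun n => log (G n (κ n)) - κ n) atTop atBot :=
    tendsto_atBot_mono' _ (hκδ.mono fun n hn => by linarith) hlogG
  refine tendsto_div_nhds_one_of_le_of_forall_ge hD ?_ fun ε hε => ?_
  · filter_upwards [hκδ] with n hn
    rw [hp', hG']
    exact log_integral_putPayoff_le (hμκ n)
      (integral_putPayoff_pos hδ hn one_lt_two (hGpos n 2 one_le_two) (hfin n))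
  · obtain ⟨ρ, hρ, hdecay⟩ := exists_gt_one_eventually_mul_le
      (L := fun ρ n => log (G n (ρ * κ n))) (fun ρ hρ => hI ρ hρ.le) hIcont
      (hlogG.eventually_lt_atBot 0) hε
    refine ⟨log (1 - exp (-((ρ - 1) * δ))), ?_⟩
    filter_upwards [hdecay, hκδ] with n hn hδn
    have := log_integral_putPayoff_ge hδ hδn hρ (hGpos n ρ hρ.le) (hfin n)
    rw [← hp', ← hG'] at this
    nlinarith [mul_nonneg hε.le (hδ.le.trans hδn)]

/-- **Left-tail atypical deviations, κ bounded away from zero.**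
For each `n`, the law of `X_n` is the probability measure `μ n` on `ℝ`; the left tail is
`G n x = μ n {y | y ≤ -x}` (i.e. `F_n(-x)`). Under the regular decay hypothesis for the
left tails with limit function `I`, with no moment condition, the put prices
`p n = E_n[(e^{-κ n} - e^{X_n})⁺]` satisfy `log (p n) ~ log (G n (κ n)) - κ n`. -/
theorem left_tail_atypical_kappa_bounded_away
    (μ : ℕ → Measure ℝ) (hprob : ∀ n, IsProbabilityMeasure (μ n))
    (κ : ℕ → ℝ) (hκpos : ∀ n, 0 < κ n)
    (hκbdd : ∃ δ > (0:ℝ), ∀ᶠ n in atTop, δ ≤ κ n)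
    (G : ℕ → ℝ → ℝ)
    (hG : ∀ n x, G n x = ((μ n) {y | y ≤ -x}).toReal)
    (hG01 : ∀ n, ∀ ρ ≥ (1:ℝ), 0 < G n (ρ * κ n) ∧ G n (ρ * κ n) < 1)
    (hGto0 : Tendsto (fun n => G n (κ n)) atTop (𝓝 0))
    (I : ℝ → EReal)
    (hI0 : ∀ ρ ≥ (1:ℝ), (0:EReal) ≤ I ρ)
    (hI : ∀ ρ ≥ (1:ℝ),
      Tendsto (fun n => ((Real.log (G n (ρ * κ n)) / Real.log (G n (κ n)) : ℝ) : EReal))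
        atTop (𝓝 (I ρ)))
    (hIcont : Tendsto I (𝓝[>] (1:ℝ)) (𝓝 (1:EReal)))
    (p : ℕ → ℝ)
    (hp : ∀ n, p n = ∫ x, max (Real.exp (-κ n) - Real.exp x) 0 ∂(μ n)) :
    Tendsto (fun n => Real.log (p n) / (Real.log (G n (κ n)) - κ n)) atTop (𝓝 1) :=
  left_tail_atypical_kappa_bounded_away_general μ κ hκbdd G hG hG01 hGto0 I hI hIcont p hp
end

section
/- Let (X_n) be a sequence of real random variables and (κ_n) a sequence with κ_n > 0 and κ_n → 0. Assume the regular decay hypothesis for the left tails at (κ_n), and assume that for every η > 0 one has limsup_n E_n[|(e^{X_n} − 1)/κ_n|^{1+η}] < ∞. Then, with p_n := E_n[(e^{−κ_n} − e^{X_n})^+], one has log(p_n/κ_n) ~ log F_n(−κ_n), i.e. (log(p_n/κ_n))/(log F_n(−κ_n)) → 1 as n → ∞. -/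
/-!
On `{x ≤ -ρκ}` the put payoff is at least `e^{-κ} - e^{-ρκ} ≥ (ρ - 1) κ e^{-ρκ}`, so
`p/κ ≥ (ρ - 1) e^{-ρκ} F(-ρκ)`; dividing logarithms by `log F(-κ) → -∞` bounds
`log (p/κ) / log F(-κ)` above by `I(ρ) + o(1)`, which is close to `1` for `ρ` close to `1`.
Conversely the payoff vanishes off `{x ≤ -κ}` and is at most `κ |(e^x - 1)/κ|` on it, so Hölder's
inequality with exponents `1 + η` and `(1 + η)/η` gives `p/κ ≤ C_η F(-κ)^{η/(1+η)}`, bounding the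
ratio below by `η/(1+η) + o(1)`.
-/

open MeasureTheory Filter Topology Real

-- `putPrice (μ n) (κ n)` is `p_n`, and `leftTail (μ n) x` is `F_n(-x)`.
noncomputable def putPrice (μ : Measure ℝ) (k : ℝ) : ℝ := ∫ x, max (exp (-k) - exp x) 0 ∂μ

noncomputable def leftTail (μ : Measure ℝ) (x : ℝ) : ℝ := (μ {y | y ≤ -x}).toReal

theorem sub_mul_exp_le_exp_sub_exp (a b : ℝ) : (a - b) * exp b ≤ exp a - exp b := by
  have h := mul_le_mul_of_nonneg_right (add_one_le_exp (a - b)) (exp_pos b).le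
  rw [← exp_add, sub_add_cancel] at h
  linarith

theorem integrable_max_sub_exp (μ : Measure ℝ) [IsFiniteMeasure μ] (a : ℝ) :
    Integrable (fun x => max (a - exp x) 0) μ := by
  refine (integrable_const (max a 0)).mono' (by fun_prop) (Eventually.of_forall fun x => ?_)
  rw [norm_of_nonneg (le_max_right _ _)]
  exact max_le_max_right 0 (by linarith [exp_pos x])

theorem sub_mul_measure_le_integral_max_sub_exp (μ : Measure ℝ) [IsFiniteMeasure μ] (a b : ℝ) :
    (exp a - exp b) * (μ {y | y ≤ b}).toReal ≤ ∫ x, max (exp a - exp x) 0 ∂μ := by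
  rw [mul_comm, ← smul_eq_mul, ← measureReal_def, Set.Iic_def,
    ← integral_indicator_const _ measurableSet_Iic]
  refine integral_mono ((integrable_const _).indicator measurableSet_Iic)
    (integrable_max_sub_exp μ _) fun x => ?_
  by_cases hx : x ≤ b
  · rw [Set.indicator_of_mem (show x ∈ Set.Iic b from hx)]
    exact le_max_of_le_left (by gcongr)
  · rw [Set.indicator_of_notMem (show x ∉ Set.Iic b from hx)]
    exact le_max_right _ _

theorem leftTail_mul_le_putPrice_div (μ : Measure ℝ) [IsFiniteMeasure μ] {k : ℝ} (hk : 0 < k)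
    (ρ : ℝ) :
    (ρ - 1) * exp (-(ρ * k)) * leftTail μ (ρ * k) ≤ putPrice μ k / k := by
  rw [le_div_iff₀ hk]
  calc (ρ - 1) * exp (-(ρ * k)) * leftTail μ (ρ * k) * k
      = (-k - -(ρ * k)) * exp (-(ρ * k)) * leftTail μ (ρ * k) := by ring
    _ ≤ (exp (-k) - exp (-(ρ * k))) * leftTail μ (ρ * k) := by
      gcongr
      · exact ENNReal.toReal_nonneg
      · exact sub_mul_exp_le_exp_sub_exp _ _
    _ ≤ putPrice μ k := sub_mul_measure_le_integral_max_sub_exp μ _ _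

theorem setLIntegral_enorm_le {α E : Type*} [MeasurableSpace α] [NormedAddCommGroup E]
    (μ : Measure α) {f : α → E} (hf : AEStronglyMeasurable f μ) (s : Set α) {r : ℝ}
    (hr : 1 ≤ r) :
    ∫⁻ x in s, ‖f x‖ₑ ∂μ ≤ (∫⁻ x, ‖f x‖ₑ ^ r ∂μ) ^ (1 / r) * μ s ^ (1 - 1 / r) := by
  have h := eLpNorm_le_eLpNorm_mul_rpow_measure_univ (p := 1) (q := ENNReal.ofReal r)
    (ENNReal.one_le_ofReal.2 hr) (hf.restrict (s := s))
  rw [eLpNorm_one_eq_lintegral_enorm, eLpNorm_eq_lintegral_rpow_enorm_toReal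
    (ENNReal.ofReal_pos.2 (by linarith)).ne' ENNReal.ofReal_ne_top, ENNReal.toReal_ofReal (by linarith),
    Measure.restrict_apply_univ, ENNReal.toReal_one, div_one] at h
  refine h.trans ?_
  gcongr
  exact Measure.restrict_le_self

theorem putPrice_div_le (μ : Measure ℝ) [IsFiniteMeasure μ] {k r : ℝ} (hk : 0 < k) (hr : 1 ≤ r)
    (hmom : ∫⁻ x, ENNReal.ofReal (|(exp x - 1) / k| ^ r) ∂μ ≠ ⊤) :
    putPrice μ k / k ≤ (∫⁻ x, ENNReal.ofReal (|(exp x - 1) / k| ^ r) ∂μ).toReal ^ (1 / r)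
      * leftTail μ k ^ (1 - 1 / r) := by
  set g : ℝ → ℝ := fun x => (exp x - 1) / k
  have hpayoff : ∀ x, ENNReal.ofReal (max (exp (-k) - exp x) 0 / k)
      ≤ {y : ℝ | y ≤ -k}.indicator (fun x => ‖g x‖ₑ) x := by
    intro x
    by_cases hx : x ≤ -k
    · rw [Set.indicator_of_mem (show x ∈ {y : ℝ | y ≤ -k} from hx), ← ofReal_norm,
        norm_eq_abs, abs_div, abs_of_pos hk, abs_sub_comm, abs_of_nonneg]
      · gcongr
        exact max_le (by linarith [exp_le_one_iff.2 (neg_nonpos.2 hk.le)])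
          (by linarith [exp_le_one_iff.2 (hx.trans (neg_nonpos.2 hk.le))])
      · linarith [exp_le_one_iff.2 (hx.trans (neg_nonpos.2 hk.le))]
    · have : exp (-k) - exp x ≤ 0 := by linarith [exp_lt_exp.2 (not_le.1 hx)]
      simp [max_eq_right this]
  have hholder := setLIntegral_enorm_le μ (f := g) (by fun_prop) {y : ℝ | y ≤ -k} hr
  have hmom' : ∫⁻ x, ‖g x‖ₑ ^ r ∂μ = ∫⁻ x, ENNReal.ofReal (|(exp x - 1) / k| ^ r) ∂μ := by
    refine lintegral_congr fun x => ?_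
    rw [← ofReal_norm, norm_eq_abs, ENNReal.ofReal_rpow_of_nonneg (abs_nonneg _)
      (by linarith)]
  rw [hmom'] at hholder
  have hbound : ENNReal.ofReal (putPrice μ k / k)
      ≤ (∫⁻ x, ENNReal.ofReal (|(exp x - 1) / k| ^ r) ∂μ) ^ (1 / r)
        * μ {y | y ≤ -k} ^ (1 - 1 / r) := by
    rw [putPrice, ← integral_div, ofReal_integral_eq_lintegral_ofReal
      ((integrable_max_sub_exp μ _).div_const k)
      (Eventually.of_forall fun x => div_nonneg (le_max_right _ _) hk.le)]
    refine (lintegral_mono hpayoff).trans ?_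
    rwa [lintegral_indicator (show MeasurableSet {y : ℝ | y ≤ -k} from measurableSet_Iic)]
  have hfin : (∫⁻ x, ENNReal.ofReal (|(exp x - 1) / k| ^ r) ∂μ) ^ (1 / r)
      * μ {y | y ≤ -k} ^ (1 - 1 / r) ≠ ⊤ :=
    ENNReal.mul_ne_top (ENNReal.rpow_ne_top_of_nonneg (by positivity) hmom)
      (ENNReal.rpow_ne_top_of_nonneg (by simpa using inv_le_one_of_one_le₀ hr)
        (measure_ne_top _ _))
  rw [ENNReal.ofReal_le_iff_le_toReal hfin, ENNReal.toReal_mul, ← ENNReal.toReal_rpow,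
    ← ENNReal.toReal_rpow] at hbound
  exact hbound

section LogRatio

variable {ι : Type*} {l : Filter ι} {f b g L : ι → ℝ} {b₀ c d : ℝ}

theorem eventually_lt_div_of_le_add (hL : Tendsto L l atBot) (hb : Tendsto b l (𝓝 b₀))
    (hfg : ∀ᶠ i in l, f i ≤ b i + g i) (hg : ∀ᶠ i in l, c ≤ g i / L i) (hdc : d < c) :
    ∀ᶠ i in l, d < f i / L i := by
  have hbL : ∀ᶠ i in l, d - c < b i / L i :=
    (hb.div_atBot hL).eventually (eventually_gt_nhds (by linarith))
  filter_upwards [hfg, hg, hbL, hL.eventually (eventually_lt_atBot 0)] with i hfg hg hbL hL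
  calc d < b i / L i + g i / L i := by linarith
    _ = (b i + g i) / L i := (add_div _ _ _).symm
    _ ≤ f i / L i := div_le_div_of_nonpos_of_le hL.le hfg

theorem eventually_div_lt_of_add_le (hL : Tendsto L l atBot) (hb : Tendsto b l (𝓝 b₀))
    (hfg : ∀ᶠ i in l, b i + g i ≤ f i) (hg : ∀ᶠ i in l, g i / L i ≤ c) (hcd : c < d) :
    ∀ᶠ i in l, f i / L i < d := by
  have hbL : ∀ᶠ i in l, b i / L i < d - c :=
    (hb.div_atBot hL).eventually (eventually_lt_nhds (by linarith))
  filter_upwards [hfg, hg, hbL, hL.eventually (eventually_lt_atBot 0)] with i hfg hg hbL hL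
  calc f i / L i ≤ (b i + g i) / L i := div_le_div_of_nonpos_of_le hL.le hfg
    _ = b i / L i + g i / L i := add_div _ _ _
    _ < d := by linarith

end LogRatio

section PutPriceAsymptotics

variable {μ : ℕ → Measure ℝ} [∀ n, IsFiniteMeasure (μ n)] {κ : ℕ → ℝ}

theorem eventually_lt_log_putPrice_div (hκ : ∀ n, 0 < κ n)
    (hL : Tendsto (fun n => log (leftTail (μ n) (κ n))) atTop atBot)
    (htail : ∀ n, ∀ ρ ≥ (1 : ℝ), 0 < leftTail (μ n) (ρ * κ n))
    (hmom : ∀ η > (0 : ℝ), limsup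
      (fun n => ∫⁻ x, ENNReal.ofReal (|(exp x - 1) / κ n| ^ (1 + η)) ∂(μ n)) atTop < ⊤)
    {c : ℝ} (hc : c < 1) :
    ∀ᶠ n in atTop, c < log (putPrice (μ n) (κ n) / κ n) / log (leftTail (μ n) (κ n)) := by
  set η := 1 / (1 - c)
  have hη : 0 < η := one_div_pos.2 (sub_pos.2 hc)
  have hcη : c < 1 - 1 / (1 + η) := by
    have : 1 / (1 + η) < 1 - c := by
      rw [div_lt_iff₀ (by linarith), ← div_lt_iff₀' (sub_pos.2 hc)]
      linarith
    linarith
  obtain ⟨M, hM, hMtop⟩ := exists_between (hmom η hη)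
  have hMpos : 0 < M.toReal := ENNReal.toReal_pos (pos_of_gt hM).ne' hMtop.ne
  have hbound : ∀ᶠ n in atTop, log (putPrice (μ n) (κ n) / κ n)
      ≤ 1 / (1 + η) * log M.toReal + (1 - 1 / (1 + η)) * log (leftTail (μ n) (κ n)) := by
    filter_upwards [eventually_lt_of_limsup_lt hM] with n hn
    have htail₁ : 0 < leftTail (μ n) (κ n) := by simpa using htail n 1 le_rfl
    have hpos : 0 < putPrice (μ n) (κ n) / κ n :=
      (mul_pos (mul_pos (by norm_num) (exp_pos _)) (htail n 2 one_le_two)).trans_le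
        (leftTail_mul_le_putPrice_div (μ n) (hκ n) 2)
    have hle := (putPrice_div_le (μ n) (hκ n) (by linarith) (hn.trans hMtop).ne).trans
      (mul_le_mul_of_nonneg_right (rpow_le_rpow ENNReal.toReal_nonneg
        (ENNReal.toReal_mono hMtop.ne hn.le) (by positivity)) (by positivity))
    rw [← log_rpow hMpos, ← log_rpow htail₁, ← log_mul (by positivity) (by positivity)]
    exact log_le_log hpos hle
  refine eventually_lt_div_of_le_add hL tendsto_const_nhds hbound ?_ hcη
  filter_upwards [hL.eventually (eventually_lt_atBot 0)] with n hn
  rw [mul_div_cancel_right₀ _ hn.ne]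

theorem eventually_log_putPrice_div_lt (hκ : ∀ n, 0 < κ n) (hκ0 : Tendsto κ atTop (𝓝 0))
    (hL : Tendsto (fun n => log (leftTail (μ n) (κ n))) atTop atBot)
    (htail : ∀ n, ∀ ρ ≥ (1 : ℝ), 0 < leftTail (μ n) (ρ * κ n)) {I : ℝ → EReal}
    (hI : ∀ ρ ≥ (1 : ℝ), Tendsto (fun n =>
      ((log (leftTail (μ n) (ρ * κ n)) / log (leftTail (μ n) (κ n)) : ℝ) : EReal))
        atTop (𝓝 (I ρ)))
    (hIcont : Tendsto I (𝓝[>] (1 : ℝ)) (𝓝 (1 : EReal))) {c : ℝ} (hc : 1 < c) :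
    ∀ᶠ n in atTop, log (putPrice (μ n) (κ n) / κ n) / log (leftTail (μ n) (κ n)) < c := by
  obtain ⟨ρ, hIρ, hρ⟩ := ((hIcont.eventually_lt_const (show (1 : EReal) < ((1 + c) / 2 : ℝ) by
    exact_mod_cast (by linarith : (1 : ℝ) < (1 + c) / 2))).and self_mem_nhdsWithin).exists
  replace hρ : 1 < ρ := hρ
  have hfactor : ∀ t, 0 < (ρ - 1) * exp (-t) := fun t => mul_pos (sub_pos.2 hρ) (exp_pos _)
  have hratio : ∀ᶠ n in atTop,
      log (leftTail (μ n) (ρ * κ n)) / log (leftTail (μ n) (κ n)) ≤ (1 + c) / 2 := by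
    filter_upwards [(hI ρ hρ.le).eventually_lt_const hIρ] with n hn
    exact_mod_cast hn.le
  have hb : Tendsto (fun n => log ((ρ - 1) * exp (-(ρ * κ n)))) atTop
      (𝓝 (log ((ρ - 1) * exp (-(ρ * 0))))) :=
    ((tendsto_const_nhds (x := ρ - 1)).mul (hκ0.const_mul ρ).neg.rexp).log (hfactor _).ne'
  refine eventually_div_lt_of_add_le hL hb (Eventually.of_forall fun n => ?_) hratio
    (by linarith)
  rw [← log_mul (hfactor _).ne' (htail n ρ hρ.le).ne']
  exact log_le_log (mul_pos (hfactor _) (htail n ρ hρ.le))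
    (leftTail_mul_le_putPrice_div (μ n) (hκ n) ρ)

end PutPriceAsymptotics

theorem left_tail_atypical_kappa_to_zero_general
    (μ : ℕ → Measure ℝ) (hprob : ∀ n, IsProbabilityMeasure (μ n))
    (κ : ℕ → ℝ) (hκpos : ∀ n, 0 < κ n)
    (hκ0 : Tendsto κ atTop (𝓝 0))
    (G : ℕ → ℝ → ℝ)
    (hG : ∀ n x, G n x = ((μ n) {y | y ≤ -x}).toReal)
    (hG01 : ∀ n, ∀ ρ ≥ (1:ℝ), 0 < G n (ρ * κ n) ∧ G n (ρ * κ n) < 1)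
    (hGto0 : Tendsto (fun n => G n (κ n)) atTop (𝓝 0))
    (I : ℝ → EReal)
    (hI : ∀ ρ ≥ (1:ℝ),
      Tendsto (fun n => ((Real.log (G n (ρ * κ n)) / Real.log (G n (κ n)) : ℝ) : EReal))
        atTop (𝓝 (I ρ)))
    (hIcont : Tendsto I (𝓝[>] (1:ℝ)) (𝓝 (1:EReal)))
    (hmom : ∀ η > (0:ℝ), limsup
        (fun n => ∫⁻ x, ENNReal.ofReal (|(Real.exp x - 1) / κ n| ^ (1+η)) ∂(μ n)) atTop < ⊤)
    (p : ℕ → ℝ)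
    (hp : ∀ n, p n = ∫ x, max (Real.exp (-κ n) - Real.exp x) 0 ∂(μ n)) :
    Tendsto (fun n => Real.log (p n / κ n) / Real.log (G n (κ n))) atTop (𝓝 1) := by
  obtain rfl : G = fun n x => leftTail (μ n) x := funext fun n => funext (hG n)
  obtain rfl : p = fun n => putPrice (μ n) (κ n) := funext hp
  have htail : ∀ n, ∀ ρ ≥ (1 : ℝ), 0 < leftTail (μ n) (ρ * κ n) := fun n ρ hρ => (hG01 n ρ hρ).1
  have hL : Tendsto (fun n => log (leftTail (μ n) (κ n))) atTop atBot :=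
    tendsto_log_nhdsGT_zero.comp (tendsto_nhdsWithin_iff.2
      ⟨hGto0, Eventually.of_forall fun n => by simpa using htail n 1 le_rfl⟩)
  exact tendsto_order.2 ⟨fun c hc => eventually_lt_log_putPrice_div hκpos hL htail hmom hc,
    fun c hc => eventually_log_putPrice_div_lt hκpos hκ0 hL htail hI hIcont hc⟩

/-- **Left-tail atypical deviations, regime `κ_n → 0`.**
For each `n`, the law of `X_n` is the probability measure `μ n` on `ℝ`; the left tail is
`G n x = μ n {y | y ≤ -x}` (i.e. `F_n(-x)`). Under the regular decay hypothesis for the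
left tails with limit function `I`, and the moment condition
`limsup_n E_n[|(e^{X_n}-1)/κ_n|^{1+η}] < ∞` for every `η > 0`, the put prices
`p n = E_n[(e^{-κ n} - e^{X_n})⁺]` satisfy `log (p n / κ n) ~ log (G n (κ n))`. -/
theorem left_tail_atypical_kappa_to_zero
    (μ : ℕ → Measure ℝ) (hprob : ∀ n, IsProbabilityMeasure (μ n))
    (κ : ℕ → ℝ) (hκpos : ∀ n, 0 < κ n)
    (hκ0 : Tendsto κ atTop (𝓝 0))
    (G : ℕ → ℝ → ℝ)
    (hG : ∀ n x, G n x = ((μ n) {y | y ≤ -x}).toReal)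
    (hG01 : ∀ n, ∀ ρ ≥ (1:ℝ), 0 < G n (ρ * κ n) ∧ G n (ρ * κ n) < 1)
    (hGto0 : Tendsto (fun n => G n (κ n)) atTop (𝓝 0))
    (I : ℝ → EReal)
    (hI0 : ∀ ρ ≥ (1:ℝ), (0:EReal) ≤ I ρ)
    (hI : ∀ ρ ≥ (1:ℝ),
      Tendsto (fun n => ((Real.log (G n (ρ * κ n)) / Real.log (G n (κ n)) : ℝ) : EReal))
        atTop (𝓝 (I ρ)))
    (hIcont : Tendsto I (𝓝[>] (1:ℝ)) (𝓝 (1:EReal)))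
    (hmom : ∀ η > (0:ℝ), limsup
        (fun n => ∫⁻ x, ENNReal.ofReal (|(Real.exp x - 1) / κ n| ^ (1+η)) ∂(μ n)) atTop < ⊤)
    (p : ℕ → ℝ)
    (hp : ∀ n, p n = ∫ x, max (Real.exp (-κ n) - Real.exp x) 0 ∂(μ n)) :
    Tendsto (fun n => Real.log (p n / κ n) / Real.log (G n (κ n))) atTop (𝓝 1) :=
  left_tail_atypical_kappa_to_zero_general μ hprob κ hκpos hκ0 G hG hG01 hGto0 I hI hIcont hmom p hp
end

section
/- Let (X_n) be a sequence of real random variables and (γ_n) a sequence of positive reals with γ_n → 0, such that X_n/γ_n converges in distribution to a real random variable Y. Assume E_n[e^{X_n}] = 1 for every n, and that there exists η > 0 with limsup_n E_n[|(e^{X_n} − 1)/γ_n|^{1+η}] < ∞. Then Y is integrable and E[Y] = 0. -/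
/-!
Put `Z_n = (e^{X_n} - 1)/γ_n`: these are centred and bounded in `L^{1+η}`. A second-order
Taylor expansion of `exp` gives `Z_n - X_n/γ_n → 0` in probability (where `|X_n/γ_n|` is large,
so is `|Z_n|`, and Markov's inequality controls that set), hence `∫ f(Z_n) → ∫ f dν` for
bounded Lipschitz `f`. Truncating at level `M`, this gives `∫ min(|y|, M) dν ≤ sup E|Z_n|`,
hence integrability, and `|∫ clamp_M dν| ≤ lim |E[clamp_M Z_n - Z_n]| ≤ C / M^η`, which
vanishes as `M → ∞`.
-/

open MeasureTheory Filter Topology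
open scoped NNReal

noncomputable def clamp (M t : ℝ) : ℝ := max (-M) (min t M)

section Clamp

variable {M t : ℝ}

lemma lipschitzWith_clamp (M : ℝ) : LipschitzWith 1 (clamp M) :=
  (LipschitzWith.id.min_const M).const_max (-M)

lemma continuous_clamp (M : ℝ) : Continuous (clamp M) := (lipschitzWith_clamp M).continuous

lemma clamp_of_abs_le (h : |t| ≤ M) : clamp M t = t := by
  rw [abs_le] at h
  rw [clamp, min_eq_left h.2, max_eq_right h.1]

lemma abs_clamp_le (hM : 0 ≤ M) (t : ℝ) : |clamp M t| ≤ M :=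
  abs_le.2 ⟨le_max_left _ _, max_le (by linarith) (min_le_right _ _)⟩

lemma abs_clamp_le_abs (hM : 0 ≤ M) (t : ℝ) : |clamp M t| ≤ |t| := by
  rcases le_total |t| M with h | h
  · rw [clamp_of_abs_le h]
  · exact (abs_clamp_le hM t).trans h

lemma tendsto_clamp_atTop (t : ℝ) : Tendsto (fun M => clamp M t) atTop (𝓝 t) :=
  tendsto_const_nhds.congr' <| (eventually_ge_atTop |t|).mono fun _ h => (clamp_of_abs_le h).symm

lemma abs_clamp_sub_le (hM : 0 < M) {η : ℝ} (hη : 0 ≤ η) (t : ℝ) :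
    |clamp M t - t| ≤ |t| ^ (1 + η) / M ^ η := by
  rcases le_total |t| M with h | h
  · rw [clamp_of_abs_le h, sub_self, abs_zero]
    positivity
  · have hclamp : |clamp M t - t| ≤ |t| := by
      rcases le_total 0 t with ht | ht
      · rw [abs_of_nonneg ht] at h ⊢
        rw [clamp, min_eq_right h, max_eq_right (by linarith), abs_le]
        constructor <;> linarith
      · rw [abs_of_nonpos ht] at h ⊢
        rw [clamp, min_eq_left (by linarith), max_eq_left (by linarith), abs_le]
        constructor <;> linarith
    calc |clamp M t - t| ≤ |t| := hclamp
      _ = |t| * M ^ η / M ^ η := by field_simp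
      _ ≤ |t| * |t| ^ η / M ^ η := by gcongr
      _ = |t| ^ (1 + η) / M ^ η := by
        rw [Real.rpow_add (hM.trans_le h), Real.rpow_one]

end Clamp

lemma abs_le_one_add_abs_rpow (t : ℝ) {p : ℝ} (hp : 1 ≤ p) : |t| ≤ 1 + |t| ^ p := by
  rcases le_total |t| 1 with h | h
  · linarith [Real.rpow_nonneg (abs_nonneg t) p]
  · linarith [Real.self_le_rpow_of_one_le h hp]

lemma le_two_mul_abs_exp_sub_one {c x : ℝ} (hc : c ≤ 1) (hx : c ≤ |x|) :
    c ≤ 2 * |Real.exp x - 1| := by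
  rcases le_or_gt c 0 with hc0 | hc0
  · linarith [abs_nonneg (Real.exp x - 1)]
  rcases le_total 0 x with h | h
  · rw [abs_of_nonneg h] at hx
    rw [abs_of_nonneg (by linarith [Real.add_one_le_exp x])]
    linarith [Real.add_one_le_exp x]
  · rw [abs_of_nonpos h] at hx
    have hexp_c : Real.exp x * Real.exp c ≤ 1 := by
      rw [← Real.exp_add]
      exact Real.exp_le_one_iff.2 (by linarith)
    rw [abs_of_nonpos (by linarith [Real.exp_le_one_iff.2 h])]
    -- `e^x ≤ 1 / (1 + c) ≤ 1 - c / 2`, the last step because `c ≤ 1`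
    nlinarith [Real.exp_pos x, Real.add_one_le_exp c]

lemma abs_exp_sub_one_div_sub_div_le {γ K x : ℝ} (hγ : 0 < γ) (hγK : γ * K ≤ 1)
    (hsmall : |(Real.exp x - 1) / γ| < K / 2) :
    |(Real.exp x - 1) / γ - x / γ| ≤ γ * K ^ 2 := by
  rw [abs_div, abs_of_pos hγ, div_lt_iff₀ hγ] at hsmall
  have hx : |x| ≤ γ * K := by
    by_contra! hx
    linarith [le_two_mul_abs_exp_sub_one hγK hx.le]
  have hx1 : |x| ≤ 1 := hx.trans hγK
  have hx2 : x ^ 2 ≤ (γ * K) ^ 2 := by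
    rw [← sq_abs]
    exact pow_le_pow_left₀ (abs_nonneg x) hx 2
  rw [← sub_div, abs_div, abs_of_pos hγ, div_le_iff₀ hγ]
  calc |Real.exp x - 1 - x| ≤ x ^ 2 := Real.abs_exp_sub_one_sub_id_le hx1
    _ ≤ (γ * K) ^ 2 := hx2
    _ = γ * K ^ 2 * γ := by ring

section Integrals

variable {Ω : Type*} [MeasurableSpace Ω]

lemma measureReal_abs_ge_le_integral_rpow_div {μ : Measure Ω} {Z : Ω → ℝ} {p a : ℝ}
    (hp : 0 < p) (ha : 0 < a) (hZ : Integrable (fun ω => |Z ω| ^ p) μ) :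
    μ.real {ω | a ≤ |Z ω|} ≤ (∫ ω, |Z ω| ^ p ∂μ) / a ^ p := by
  have hset : {ω | a ≤ |Z ω|} = {ω | a ^ p ≤ |Z ω| ^ p} := by
    ext ω
    exact (Real.rpow_le_rpow_iff ha.le (abs_nonneg _) hp).symm
  rw [hset, le_div_iff₀ (by positivity), mul_comm]
  exact mul_meas_ge_le_integral_of_nonneg (ae_of_all _ fun ω => by positivity) hZ _

lemma abs_integral_comp_sub_integral_comp_le {μ : Measure Ω} [IsProbabilityMeasure μ]
    {f : ℝ → ℝ} {L : ℝ≥0} {M : ℝ} (hf : LipschitzWith L f) (hfM : ∀ t, |f t| ≤ M)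
    {U V : Ω → ℝ} (hU : Measurable U) (hV : Measurable V) {ε : ℝ} (hε : 0 ≤ ε) :
    |∫ ω, f (U ω) ∂μ - ∫ ω, f (V ω) ∂μ| ≤
      L * ε + 2 * M * μ.real {ω | ε ≤ |U ω - V ω|} := by
  set S := {ω | ε ≤ |U ω - V ω|}
  have hS : MeasurableSet S := measurableSet_le measurable_const (hU.sub hV).abs
  have hfint : ∀ W : Ω → ℝ, Measurable W → Integrable (fun ω => f (W ω)) μ := fun W hW =>
    .of_bound (hf.continuous.measurable.comp hW).aestronglyMeasurable M
      (ae_of_all _ (hfM <| W ·))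
  have hpointwise : ∀ ω, |f (U ω) - f (V ω)| ≤ L * ε + S.indicator (fun _ => 2 * M) ω := by
    intro ω
    by_cases hω : ω ∈ S
    · rw [Set.indicator_of_mem hω]
      have := abs_sub (f (U ω)) (f (V ω))
      linarith [hfM (U ω), hfM (V ω), mul_nonneg L.coe_nonneg hε]
    · rw [Set.indicator_of_notMem hω, add_zero]
      have hUV : |U ω - V ω| < ε := not_le.1 hω
      calc |f (U ω) - f (V ω)| ≤ L * |U ω - V ω| := by
            simpa only [Real.dist_eq] using hf.dist_le_mul (U ω) (V ω)
        _ ≤ L * ε := by gcongr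
  calc |∫ ω, f (U ω) ∂μ - ∫ ω, f (V ω) ∂μ|
      = |∫ ω, (f (U ω) - f (V ω)) ∂μ| := by rw [integral_sub (hfint U hU) (hfint V hV)]
    _ ≤ ∫ ω, |f (U ω) - f (V ω)| ∂μ := abs_integral_le_integral_abs
    _ ≤ ∫ ω, (L * ε + S.indicator (fun _ => 2 * M) ω) ∂μ :=
        integral_mono ((hfint U hU).sub (hfint V hV)).abs
          ((integrable_const _).add ((integrable_const _).indicator hS)) hpointwise
    _ = L * ε + 2 * M * μ.real S := by
        rw [integral_add (integrable_const _) ((integrable_const _).indicator hS),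
          integral_indicator_const _ hS, integral_const, probReal_univ, smul_eq_mul,
          smul_eq_mul, one_mul, mul_comm (μ.real S)]

lemma tendsto_integral_comp_sub_integral_comp_nhds_zero {ι : Type*} {l : Filter ι}
    {μ : ι → Measure Ω} [∀ i, IsProbabilityMeasure (μ i)] {U V : ι → Ω → ℝ}
    (hU : ∀ i, Measurable (U i)) (hV : ∀ i, Measurable (V i))
    (hUV : ∀ ε > 0, Tendsto (fun i => (μ i).real {ω | ε ≤ |U i ω - V i ω|}) l (𝓝 0))
    {f : ℝ → ℝ} {L : ℝ≥0} {M : ℝ} (hf : LipschitzWith L f) (hfM : ∀ t, |f t| ≤ M) :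
    Tendsto (fun i => ∫ ω, f (U i ω) ∂μ i - ∫ ω, f (V i ω) ∂μ i) l (𝓝 0) := by
  refine Metric.tendsto_nhds.2 fun δ hδ => ?_
  set ε := δ / (L + 1)
  have hε : 0 < ε := by positivity
  have hLε : L * ε < δ := by
    rw [mul_div_assoc', div_lt_iff₀ (by positivity)]
    linarith
  have hbound : Tendsto (fun i => L * ε + 2 * M * (μ i).real {ω | ε ≤ |U i ω - V i ω|}) l
      (𝓝 (L * ε)) := by
    simpa using ((hUV ε hε).const_mul (2 * M)).const_add (L * ε)
  filter_upwards [hbound.eventually (gt_mem_nhds hLε)] with i hi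
  rw [Real.dist_eq, sub_zero]
  exact (abs_integral_comp_sub_integral_comp_le hf hfM (hU i) (hV i) hε.le).trans_lt hi

end Integrals

lemma tendsto_measureReal_abs_exp_sub_one_div_sub_div_ge {ι : Type*} {l : Filter ι}
    {μ : ι → Measure ℝ} [∀ i, IsFiniteMeasure (μ i)] {γ : ι → ℝ} (hγ : ∀ i, 0 < γ i)
    (hγ0 : Tendsto γ l (𝓝 0)) {p C : ℝ} (hp : 0 < p)
    (hmom : ∀ᶠ i in l, Integrable (fun x => |(Real.exp x - 1) / γ i| ^ p) (μ i) ∧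
      ∫ x, |(Real.exp x - 1) / γ i| ^ p ∂μ i ≤ C)
    {ε : ℝ} (hε : 0 < ε) :
    Tendsto (fun i => (μ i).real {x | ε ≤ |(Real.exp x - 1) / γ i - x / γ i|}) l (𝓝 0) := by
  refine Metric.tendsto_nhds.2 fun δ hδ => ?_
  have htail : Tendsto (fun K : ℝ => C / (K / 2) ^ p) atTop (𝓝 0) :=
    tendsto_const_nhds.div_atTop
      ((tendsto_rpow_atTop hp).comp (tendsto_id.atTop_div_const two_pos))
  obtain ⟨K, hKδ, hK⟩ :=
    ((htail.eventually (gt_mem_nhds hδ)).and (eventually_gt_atTop 0)).exists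
  have hγK : ∀ᶠ i in l, γ i * K ≤ 1 ∧ γ i * K ^ 2 < ε := by
    have h1 : Tendsto (fun i => γ i * K) l (𝓝 0) := by simpa using hγ0.mul_const K
    have h2 : Tendsto (fun i => γ i * K ^ 2) l (𝓝 0) := by simpa using hγ0.mul_const (K ^ 2)
    exact (h1.eventually (ge_mem_nhds one_pos)).and (h2.eventually (gt_mem_nhds hε))
  filter_upwards [hmom, hγK] with i ⟨hint, hC⟩ ⟨hγK1, hγK2⟩
  have hsub : {x | ε ≤ |(Real.exp x - 1) / γ i - x / γ i|}
      ⊆ {x | K / 2 ≤ |(Real.exp x - 1) / γ i|} := by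
    intro x hx
    by_contra h
    exact not_le.2
      ((abs_exp_sub_one_div_sub_div_le (hγ i) hγK1 (not_le.1 h)).trans_lt hγK2) hx
  rw [Real.dist_eq, sub_zero, abs_of_nonneg measureReal_nonneg]
  calc (μ i).real {x | ε ≤ |(Real.exp x - 1) / γ i - x / γ i|}
      ≤ (μ i).real {x | K / 2 ≤ |(Real.exp x - 1) / γ i|} := measureReal_mono hsub
    _ ≤ (∫ x, |(Real.exp x - 1) / γ i| ^ p ∂μ i) / (K / 2) ^ p :=
        measureReal_abs_ge_le_integral_rpow_div hp (by positivity) hint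
    _ ≤ C / (K / 2) ^ p := by gcongr
    _ < δ := hKδ

section Truncation

variable {Ω : Type*} [MeasurableSpace Ω] {μ : Measure Ω} {Z : Ω → ℝ} {M η : ℝ}

lemma abs_integral_clamp_le (hM : 0 < M) (hη : 0 ≤ η) (hZ : Integrable Z μ)
    (hmean : ∫ ω, Z ω ∂μ = 0) (hZη : Integrable (fun ω => |Z ω| ^ (1 + η)) μ) :
    |∫ ω, clamp M (Z ω) ∂μ| ≤ (∫ ω, |Z ω| ^ (1 + η) ∂μ) / M ^ η := by
  have hclamp : Integrable (fun ω => clamp M (Z ω)) μ :=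
    hZ.mono ((continuous_clamp M).comp_aestronglyMeasurable hZ.1)
      (ae_of_all _ fun ω => abs_clamp_le_abs hM.le (Z ω))
  calc |∫ ω, clamp M (Z ω) ∂μ| = |∫ ω, (clamp M (Z ω) - Z ω) ∂μ| := by
        rw [integral_sub hclamp hZ, hmean, sub_zero]
    _ ≤ ∫ ω, |clamp M (Z ω) - Z ω| ∂μ := abs_integral_le_integral_abs
    _ ≤ ∫ ω, |Z ω| ^ (1 + η) / M ^ η ∂μ :=
        integral_mono (hclamp.sub hZ).abs (hZη.div_const _) fun ω => abs_clamp_sub_le hM hη _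
    _ = (∫ ω, |Z ω| ^ (1 + η) ∂μ) / M ^ η := integral_div _ _

lemma integral_abs_clamp_le [IsProbabilityMeasure μ] (hM : 0 ≤ M) (hη : 0 ≤ η)
    (hZ : Integrable Z μ) (hZη : Integrable (fun ω => |Z ω| ^ (1 + η)) μ) :
    ∫ ω, |clamp M (Z ω)| ∂μ ≤ 1 + ∫ ω, |Z ω| ^ (1 + η) ∂μ := by
  have hclamp : Integrable (fun ω => |clamp M (Z ω)|) μ :=
    (hZ.mono ((continuous_clamp M).comp_aestronglyMeasurable hZ.1)
      (ae_of_all _ fun ω => abs_clamp_le_abs hM (Z ω))).abs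
  calc ∫ ω, |clamp M (Z ω)| ∂μ ≤ ∫ ω, (1 + |Z ω| ^ (1 + η)) ∂μ :=
        integral_mono hclamp ((integrable_const 1).add hZη) fun ω =>
          (abs_clamp_le_abs hM _).trans (abs_le_one_add_abs_rpow _ (by linarith))
    _ = 1 + ∫ ω, |Z ω| ^ (1 + η) ∂μ := by
        rw [integral_add (integrable_const 1) hZη, integral_const, probReal_univ, one_smul]

lemma tendsto_integral_clamp (hZ : Integrable Z μ) :
    Tendsto (fun M => ∫ ω, clamp M (Z ω) ∂μ) atTop (𝓝 (∫ ω, Z ω ∂μ)) :=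
  tendsto_integral_filter_of_dominated_convergence (fun ω => |Z ω|)
    (.of_forall fun M => (continuous_clamp M).comp_aestronglyMeasurable hZ.1)
    ((eventually_ge_atTop 0).mono fun _ hM => ae_of_all _ fun ω => abs_clamp_le_abs hM (Z ω))
    hZ.abs (ae_of_all _ fun ω => tendsto_clamp_atTop (Z ω))

end Truncation

lemma integrable_id_of_integral_abs_clamp_le {ν : Measure ℝ} [IsFiniteMeasure ν] {B : ℝ}
    (h : ∀ n : ℕ, ∫ y, |clamp n y| ∂ν ≤ B) : Integrable (fun y => y) ν := by
  have hclamp : ∀ n : ℕ, Integrable (clamp n) ν := fun n =>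
    .of_bound (continuous_clamp n).aestronglyMeasurable n
      (ae_of_all _ fun y => abs_clamp_le n.cast_nonneg y)
  refine integrable_of_tendsto (G := fun n => clamp n)
    (ae_of_all _ fun y => (tendsto_clamp_atTop y).comp tendsto_natCast_atTop_atTop)
    (fun n => (hclamp n).1) (ne_top_of_le_ne_top (ENNReal.ofReal_ne_top (r := B))
      (liminf_le_of_frequently_le' (.of_forall fun n => ?_)))
  rw [← ofReal_integral_norm_eq_lintegral_enorm (hclamp n)]
  exact ENNReal.ofReal_le_ofReal (h n)

theorem integrable_id_and_integral_id_eq_zero_of_tendsto {ι Ω : Type*} [MeasurableSpace Ω]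
    {l : Filter ι} [l.NeBot] {μ : ι → Measure Ω} [∀ i, IsProbabilityMeasure (μ i)]
    {ν : Measure ℝ} [IsFiniteMeasure ν] {Z : ι → Ω → ℝ} {η C : ℝ} (hη : 0 < η)
    (hZ : ∀ i, Integrable (Z i) (μ i)) (hmean : ∀ i, ∫ ω, Z i ω ∂μ i = 0)
    (hmom : ∀ᶠ i in l, Integrable (fun ω => |Z i ω| ^ (1 + η)) (μ i) ∧
      ∫ ω, |Z i ω| ^ (1 + η) ∂μ i ≤ C)
    (hlim : ∀ f : ℝ → ℝ, (∃ L, LipschitzWith L f) → (∃ M, ∀ t, |f t| ≤ M) →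
      Tendsto (fun i => ∫ ω, f (Z i ω) ∂μ i) l (𝓝 (∫ y, f y ∂ν))) :
    Integrable (fun y : ℝ => y) ν ∧ ∫ y, y ∂ν = 0 := by
  have hclamp : ∀ M > 0, |∫ y, clamp M y ∂ν| ≤ C / M ^ η := fun M hM =>
    le_of_tendsto (hlim _ ⟨1, lipschitzWith_clamp M⟩ ⟨M, abs_clamp_le hM.le⟩).abs <|
      hmom.mono fun i ⟨hint, hC⟩ =>
        (abs_integral_clamp_le hM hη.le (hZ i) (hmean i) hint).trans (by gcongr)
  have habs : ∀ n : ℕ, ∫ y, |clamp n y| ∂ν ≤ 1 + C := fun n =>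
    le_of_tendsto (hlim (fun y => |clamp n y|)
        ⟨_, lipschitzWith_one_norm.comp (lipschitzWith_clamp n)⟩
        ⟨n, fun t => (abs_abs _).trans_le (abs_clamp_le n.cast_nonneg t)⟩) <|
      hmom.mono fun i ⟨hint, hC⟩ =>
        (integral_abs_clamp_le n.cast_nonneg hη.le (hZ i) hint).trans (by linarith)
  have hY := integrable_id_of_integral_abs_clamp_le habs
  refine ⟨hY, tendsto_nhds_unique (tendsto_integral_clamp hY) (squeeze_zero_norm'
    (a := fun M => C / M ^ η) ?_ (tendsto_const_nhds.div_atTop (tendsto_rpow_atTop hη)))⟩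
  filter_upwards [eventually_gt_atTop 0] with M hM using hclamp M hM

lemma exists_eventually_integral_le_of_limsup_lintegral_lt_top {ι Ω : Type*}
    [MeasurableSpace Ω] {l : Filter ι} {μ : ι → Measure Ω} {F : ι → Ω → ℝ}
    (hF : ∀ i, AEStronglyMeasurable (F i) (μ i)) (hF0 : ∀ i ω, 0 ≤ F i ω)
    (h : limsup (fun i => ∫⁻ ω, ENNReal.ofReal (F i ω) ∂μ i) l < ⊤) :
    ∃ C, ∀ᶠ i in l, Integrable (F i) (μ i) ∧ ∫ ω, F i ω ∂μ i ≤ C := by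
  obtain ⟨b, hlim, hb⟩ := exists_between h
  refine ⟨b.toReal, (eventually_lt_of_limsup_lt hlim).mono fun i hi => ⟨⟨hF i, ?_⟩, ?_⟩⟩
  · exact (hasFiniteIntegral_iff_ofReal (ae_of_all _ (hF0 i))).2 (hi.trans hb)
  · rw [integral_eq_lintegral_of_nonneg_ae (ae_of_all _ (hF0 i)) (hF i)]
    exact ENNReal.toReal_mono hb.ne hi.le

/-- **Typical deviations: the small-time limit `Y` is centered.**
For each `n`, the law of `X_n` is the probability measure `μ n` on `ℝ`, and `ν` is the law
of `Y`. Convergence in distribution of `X_n/γ_n` to `Y` is expressed by convergence of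
integrals of bounded continuous functions. If `E_n[e^{X_n}] = 1` for every `n` and
`limsup_n E_n[|(e^{X_n}-1)/γ_n|^{1+η}] < ∞` for some `η > 0`, then `Y` is integrable and
`E[Y] = 0`. -/
theorem typical_deviations_centered_limit
    (μ : ℕ → Measure ℝ) (hprob : ∀ n, IsProbabilityMeasure (μ n))
    (γ : ℕ → ℝ) (hγ : ∀ n, 0 < γ n) (hγ0 : Tendsto γ atTop (𝓝 0))
    (ν : Measure ℝ) (hν : IsProbabilityMeasure ν)
    (hconv : ∀ f : BoundedContinuousFunction ℝ ℝ,
      Tendsto (fun n => ∫ x, f (x / γ n) ∂(μ n)) atTop (𝓝 (∫ y, f y ∂ν)))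
    (hmart : ∀ n, ∫ x, Real.exp x ∂(μ n) = 1)
    (η : ℝ) (hη : 0 < η)
    (hmom : limsup
        (fun n => ∫⁻ x, ENNReal.ofReal (|(Real.exp x - 1) / γ n| ^ (1+η)) ∂(μ n)) atTop < ⊤) :
    Integrable (fun y : ℝ => y) ν ∧ ∫ y, y ∂ν = 0 := by
  set Z : ℕ → ℝ → ℝ := fun n x => (Real.exp x - 1) / γ n
  have hZ_meas : ∀ n, Measurable (Z n) := fun n =>
    (Real.measurable_exp.sub_const 1).div_const _
  have hexp : ∀ n, Integrable Real.exp (μ n) := fun n =>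
    .of_integral_ne_zero (by simp [hmart n])
  have hZ : ∀ n, Integrable (Z n) (μ n) := fun n =>
    ((hexp n).sub (integrable_const 1)).div_const _
  have hmean : ∀ n, ∫ x, Z n x ∂μ n = 0 := fun n => by
    simp [Z, integral_div, integral_sub (hexp n) (integrable_const 1), hmart n]
  obtain ⟨C, hC⟩ := exists_eventually_integral_le_of_limsup_lintegral_lt_top
    (fun n => ((hZ_meas n).abs.pow_const _).aestronglyMeasurable) (fun _ _ => by positivity) hmom
  refine integrable_id_and_integral_id_eq_zero_of_tendsto hη hZ hmean hC
    fun f ⟨L, hf⟩ ⟨M, hM⟩ => ?_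
  have hdiff := tendsto_integral_comp_sub_integral_comp_nhds_zero hZ_meas
    (fun n => measurable_id.div_const (γ n))
    (fun ε hε => tendsto_measureReal_abs_exp_sub_one_div_sub_div_ge hγ hγ0 (by linarith) hC hε)
    hf hM
  simpa using (hconv (.ofNormedAddCommGroup f hf.continuous M hM)).add hdiff
end

section
/- Let (X_n) be a sequence of real random variables and (γ_n) a sequence of positive reals with γ_n → 0, such that X_n/γ_n converges in distribution to a real random variable Y. Assume E_n[e^{X_n}] = 1 for every n and that there exists η > 0 with limsup_n E_n[|(e^{X_n} − 1)/γ_n|^{1+η}] < ∞. Let (κ_n) be a sequence with κ_n ≥ 0 and κ_n/γ_n → a for some a ∈ [0,∞). Then E_n[(e^{X_n} − e^{κ_n})^+]/γ_n → E[(Y − a)^+] and E_n[(e^{−κ_n} − e^{X_n})^+]/γ_n → E[(Y + a)^−] as n → ∞, where x^− := max(−x, 0). -/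
open MeasureTheory Filter Topology
open scoped ENNReal NNReal

/-!
Write `Z_n = (e^{X_n} - 1)/γ_n`. Since `|e^x - 1 - x| ≤ |x| |e^x - 1|`, the difference
`Z_n - X_n/γ_n` is at most `|X_n| |Z_n|`; the moment bound keeps `E|Z_n|` bounded and forces
`X_n → 0` in probability, so `Z_n → Y` in distribution. Bounded `(1+η)`-th moments make the `Z_n`
uniformly integrable, hence `E h(Z_n) → E h(Y)` for every Lipschitz `h`, also along strikes
`c_n → c` in `h(Z_n - c_n)`. The call and put prices divided by `γ_n` are `E (Z_n - c_n)⁺` and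
`E (d_n - Z_n)⁺` with `c_n = (e^{κ_n} - 1)/γ_n → a` and `d_n = (e^{-κ_n} - 1)/γ_n → -a`.
-/

lemma abs_exp_sub_one_sub_le (x : ℝ) : |Real.exp x - 1 - x| ≤ |x| * |Real.exp x - 1| := by
  have hlow : 0 ≤ Real.exp x - 1 - x := by linarith [Real.add_one_le_exp x]
  have hup : Real.exp x - 1 - x ≤ x * (Real.exp x - 1) := by
    have h := mul_le_mul_of_nonneg_left (Real.add_one_le_exp (-x)) (Real.exp_pos x).le
    rw [← Real.exp_add, add_neg_cancel, Real.exp_zero] at h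
    linarith
  rw [abs_of_nonneg hlow, ← abs_mul, abs_of_nonneg (hlow.trans hup)]
  exact hup

lemma one_sub_exp_neg_le_abs_exp_sub_one {δ x : ℝ} (hx : δ ≤ |x|) :
    1 - Real.exp (-δ) ≤ |Real.exp x - 1| := by
  rcases le_or_gt 0 x with hx0 | hx0
  · rw [abs_of_nonneg hx0] at hx
    have hcosh := Real.one_le_cosh δ
    rw [Real.cosh_eq] at hcosh
    rw [abs_of_nonneg (by linarith [Real.add_one_le_exp x])]
    linarith [Real.exp_le_exp.2 hx]
  · rw [abs_of_neg hx0] at hx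
    rw [abs_of_neg (by linarith [Real.exp_lt_one_iff.2 hx0])]
    linarith [Real.exp_le_exp.2 (show x ≤ -δ by linarith)]

lemma abs_sub_max_min_le (z : ℝ) {M : ℝ} (hM : 0 ≤ M) :
    |z - max (min z M) (-M)| ≤ max (|z| - M) 0 := by
  rcases le_total z M with hzM | hMz
  · rcases le_total (-M) z with hz | hz
    · simp [min_eq_left hzM, max_eq_left hz]
    · rw [min_eq_left hzM, max_eq_right hz, abs_of_nonpos (by linarith),
        abs_of_nonpos (by linarith)]
      exact le_max_of_le_left (by linarith)
  · rw [min_eq_right hMz, max_eq_left (by linarith), abs_of_nonneg (by linarith),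
      abs_of_nonneg (by linarith)]
    exact le_max_of_le_left le_rfl

lemma max_sub_le_rpow_div {z M p : ℝ} (hz : 0 ≤ z) (hM : 0 < M) (hp : 1 ≤ p) :
    max (z - M) 0 ≤ z ^ p / M ^ (p - 1) := by
  rcases le_or_gt z M with hzM | hMz
  · rw [max_eq_right (by linarith)]
    positivity
  · have hzp : z ^ p = z * z ^ (p - 1) := by
      rw [← Real.rpow_one_add' hz (by linarith), add_sub_cancel]
    have hmono : M ^ (p - 1) ≤ z ^ (p - 1) := Real.rpow_le_rpow hM.le hMz.le (by linarith)
    rw [max_eq_left (by linarith), le_div_iff₀ (by positivity), hzp]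
    nlinarith [Real.rpow_pos_of_pos hM (p - 1)]

lemma tendsto_exp_sub_one_div_of_tendsto_div {s γ : ℕ → ℝ} (hγ : ∀ n, γ n ≠ 0)
    (hγ0 : Tendsto γ atTop (𝓝 0)) {b : ℝ} (hs : Tendsto (fun n => s n / γ n) atTop (𝓝 b)) :
    Tendsto (fun n => (Real.exp (s n) - 1) / γ n) atTop (𝓝 b) := by
  have hs0 : Tendsto s atTop (𝓝 0) := by
    simpa [div_mul_cancel₀ _ (hγ _)] using hs.mul hγ0
  have hexp : Tendsto (fun n => |Real.exp (s n) - 1|) atTop (𝓝 0) := by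
    simpa using (((Real.continuous_exp.tendsto 0).comp hs0).sub_const 1).abs
  have hdiff : Tendsto (fun n => (Real.exp (s n) - 1) / γ n - s n / γ n) atTop (𝓝 0) := by
    refine squeeze_zero_norm (fun n => ?_) (by simpa using hs.abs.mul hexp)
    rw [← sub_div, Real.norm_eq_abs, abs_div, abs_div, div_mul_eq_mul_div]
    gcongr
    exact abs_exp_sub_one_sub_le (s n)
  simpa using hdiff.add hs

lemma tendsto_of_forall_eventually_dist_le {ι E : Type*} [PseudoMetricSpace E] {F : Filter ι}
    {u : ι → E} {l : E}
    (h : ∀ ε > 0, ∃ (v : ι → E) (m : E), Tendsto v F (𝓝 m) ∧ dist m l ≤ ε ∧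
      ∀ᶠ i in F, dist (u i) (v i) ≤ ε) :
    Tendsto u F (𝓝 l) := by
  refine Metric.tendsto_nhds.2 fun ε hε => ?_
  obtain ⟨v, m, hv, hml, huv⟩ := h (ε / 4) (by positivity)
  filter_upwards [huv, Metric.tendsto_nhds.1 hv (ε / 4) (by positivity)] with i hi hvi
  linarith [dist_triangle4 (u i) (v i) m l]

section Moments

variable {α : Type*} [MeasurableSpace α] {μ : Measure α}

lemma integrable_and_integral_le_of_lintegral_le {f : α → ℝ} {C : ℝ} (hf : 0 ≤ f)
    (hfm : AEStronglyMeasurable f μ) (hC : 0 ≤ C) (h : ∫⁻ x, ENNReal.ofReal (f x) ∂μ ≤ .ofReal C) :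
    Integrable f μ ∧ ∫ x, f x ∂μ ≤ C := by
  refine ⟨⟨hfm, (hasFiniteIntegral_iff_ofReal (ae_of_all _ hf)).2
    (h.trans_lt ENNReal.ofReal_lt_top)⟩, ?_⟩
  rw [integral_eq_lintegral_of_nonneg_ae (ae_of_all _ hf) hfm]
  exact ENNReal.toReal_le_of_le_ofReal hC h

lemma LipschitzWith.integrable_comp {E F : Type*} [NormedAddCommGroup E] [NormedAddCommGroup F]
    [IsFiniteMeasure μ] {h : E → F} {L : ℝ≥0} (hh : LipschitzWith L h) {g : α → E}
    (hg : Integrable g μ) : Integrable (fun x => h (g x)) μ := by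
  refine Integrable.mono' ((integrable_const ‖h 0‖).add (hg.norm.const_mul L))
    (hh.continuous.comp_aestronglyMeasurable hg.1) (ae_of_all _ fun x => ?_)
  have := hh.dist_le_mul (g x) 0
  rw [dist_eq_norm, dist_eq_norm, sub_zero] at this
  simp only [Pi.add_apply]
  linarith [norm_le_norm_add_norm_sub' (h (g x)) (h 0)]

variable {g : α → ℝ} {p C : ℝ}

lemma integrable_of_integrable_abs_rpow [IsFiniteMeasure μ] (hg : AEStronglyMeasurable g μ)
    (hp : 1 ≤ p) (hint : Integrable (fun x => |g x| ^ p) μ) : Integrable g μ := by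
  refine Integrable.mono' ((integrable_const 1).add hint) hg (ae_of_all _ fun x => ?_)
  rw [Real.norm_eq_abs, Pi.add_apply]
  rcases le_or_gt |g x| 1 with h1 | h1
  · linarith [Real.rpow_nonneg (abs_nonneg (g x)) p]
  · linarith [Real.self_le_rpow_of_one_le h1.le hp]

lemma integral_max_abs_sub_le [IsFiniteMeasure μ] (hg : AEStronglyMeasurable g μ) (hp : 1 ≤ p)
    (hint : Integrable (fun x => |g x| ^ p) μ) (hC : ∫ x, |g x| ^ p ∂μ ≤ C) {M : ℝ} (hM : 0 < M) :
    ∫ x, max (|g x| - M) 0 ∂μ ≤ C / M ^ (p - 1) := by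
  have hgi := integrable_of_integrable_abs_rpow hg hp hint
  calc ∫ x, max (|g x| - M) 0 ∂μ ≤ ∫ x, |g x| ^ p / M ^ (p - 1) ∂μ :=
        integral_mono ((hgi.abs.sub (integrable_const M)).pos_part) (hint.div_const _)
          fun x => max_sub_le_rpow_div (abs_nonneg _) hM hp
    _ = (∫ x, |g x| ^ p ∂μ) / M ^ (p - 1) := integral_div _ _
    _ ≤ C / M ^ (p - 1) := by gcongr

lemma integral_abs_le_one_add [IsProbabilityMeasure μ] (hg : AEStronglyMeasurable g μ)
    (hp : 1 ≤ p) (hint : Integrable (fun x => |g x| ^ p) μ) (hC : ∫ x, |g x| ^ p ∂μ ≤ C) :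
    ∫ x, |g x| ∂μ ≤ 1 + C := by
  have hgi := integrable_of_integrable_abs_rpow hg hp hint
  have htail := integral_max_abs_sub_le hg hp hint hC one_pos
  rw [Real.one_rpow, div_one] at htail
  have htail_int : Integrable (fun x => max (|g x| - 1) 0) μ :=
    (hgi.abs.sub (integrable_const 1)).pos_part
  calc ∫ x, |g x| ∂μ ≤ ∫ x, (1 + max (|g x| - 1) 0) ∂μ :=
        integral_mono hgi.abs ((integrable_const 1).add htail_int)
          fun x => by linarith [le_max_left (|g x| - 1) 0]
    _ = 1 + ∫ x, max (|g x| - 1) 0 ∂μ := by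
        rw [integral_add (integrable_const 1) htail_int, integral_const, probReal_univ, one_smul]
    _ ≤ 1 + C := by linarith

end Moments

lemma exists_eventually_integrable_and_integral_le {α : Type*} [MeasurableSpace α]
    {μ : ℕ → Measure α} {F : ℕ → α → ℝ} (hF : ∀ n, 0 ≤ F n)
    (hFm : ∀ n, AEStronglyMeasurable (F n) (μ n))
    (h : limsup (fun n => ∫⁻ x, ENNReal.ofReal (F n x) ∂(μ n)) atTop < ⊤) :
    ∃ C, ∀ᶠ n in atTop, Integrable (F n) (μ n) ∧ ∫ x, F n x ∂(μ n) ≤ C := by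
  obtain ⟨C, hlt, hC⟩ := exists_between h
  refine ⟨C.toReal, (eventually_lt_of_limsup_lt hlt).mono fun n hn =>
    integrable_and_integral_le_of_lintegral_le (hF n) (hFm n) ENNReal.toReal_nonneg ?_⟩
  rw [ENNReal.ofReal_toReal hC.ne]
  exact hn.le

lemma integrable_and_integral_le_of_tendsto {Ω : Type*} [MeasurableSpace Ω] [TopologicalSpace Ω]
    [OpensMeasurableSpace Ω] [HasOuterApproxClosed Ω] {ρ : ℕ → ProbabilityMeasure Ω}
    {ν : ProbabilityMeasure Ω} (hρ : Tendsto ρ atTop (𝓝 ν)) {f : Ω → ℝ} (hf : Continuous f)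
    (hf0 : 0 ≤ f) {C : ℝ}
    (hC : ∀ᶠ n in atTop, Integrable f (ρ n : Measure Ω) ∧ ∫ x, f x ∂(ρ n) ≤ C) :
    Integrable f ν ∧ ∫ x, f x ∂ν ≤ C := by
  have hC0 : 0 ≤ C := by
    obtain ⟨n, -, hn⟩ := hC.exists
    exact (integral_nonneg hf0).trans hn
  refine integrable_and_integral_le_of_lintegral_le hf0 hf.aestronglyMeasurable hC0 ?_
  refine (lintegral_le_liminf_lintegral_of_forall_isOpen_measure_le_liminf_measure hf hf0
    fun G hG => ProbabilityMeasure.le_liminf_measure_open_of_tendsto hρ hG).trans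
    (liminf_le_of_frequently_le' (hC.mono fun n hn => ?_).frequently)
  rw [← ofReal_integral_eq_lintegral_ofReal hn.1 (ae_of_all _ hf0)]
  exact ENNReal.ofReal_le_ofReal hn.2

lemma abs_integral_sub_integral_max_min_le {μ : Measure ℝ} [IsFiniteMeasure μ] {p C : ℝ}
    (hp : 1 ≤ p) (hint : Integrable (fun y => |y| ^ p) μ) (hC : ∫ y, |y| ^ p ∂μ ≤ C)
    {h : ℝ → ℝ} {L : ℝ≥0} (hh : LipschitzWith L h) {M : ℝ} (hM : 0 < M) :
    |∫ y, h y ∂μ - ∫ y, h (max (min y M) (-M)) ∂μ| ≤ L * (C / M ^ (p - 1)) := by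
  have hid : Integrable (fun y : ℝ => y) μ :=
    integrable_of_integrable_abs_rpow aestronglyMeasurable_id hp hint
  have hclip : LipschitzWith 1 fun y : ℝ => max (min y M) (-M) :=
    (LipschitzWith.id.min_const M).max_const (-M)
  have hhi : Integrable (fun y => h y) μ := hh.integrable_comp hid
  have hhci : Integrable (fun y => h (max (min y M) (-M))) μ :=
    (hh.comp hclip).integrable_comp hid
  have htail_int : Integrable (fun y => max (|y| - M) 0) μ :=
    (hid.abs.sub (integrable_const M)).pos_part
  rw [← integral_sub hhi hhci]
  calc |∫ y, (h y - h (max (min y M) (-M))) ∂μ|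
      ≤ ∫ y, |h y - h (max (min y M) (-M))| ∂μ := abs_integral_le_integral_abs
    _ ≤ ∫ y, L * max (|y| - M) 0 ∂μ := by
        refine integral_mono (hhi.sub hhci).abs (htail_int.const_mul _) fun y => ?_
        have := hh.dist_le_mul y (max (min y M) (-M))
        rw [Real.dist_eq, Real.dist_eq] at this
        exact this.trans (by gcongr; exact abs_sub_max_min_le y hM.le)
    _ = L * ∫ y, max (|y| - M) 0 ∂μ := integral_const_mul _ _
    _ ≤ L * (C / M ^ (p - 1)) := by
        gcongr
        exact integral_max_abs_sub_le aestronglyMeasurable_id hp hint hC hM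

section WeakConvergence

variable {ρ : ℕ → ProbabilityMeasure ℝ} {ν : ProbabilityMeasure ℝ} {p C : ℝ}

-- Truncating the argument to `[-M, M]` gives bounded Lipschitz integrands; the moment bound makes
-- the truncation error at most `L C / M ^ (p - 1)`, uniformly in `n`.
lemma tendsto_integral_of_lipschitzWith (hρ : Tendsto ρ atTop (𝓝 ν)) (hp : 1 < p)
    (hmom : ∀ᶠ n in atTop,
      Integrable (fun y => |y| ^ p) (ρ n : Measure ℝ) ∧ ∫ y, |y| ^ p ∂(ρ n) ≤ C)
    {h : ℝ → ℝ} {L : ℝ≥0} (hh : LipschitzWith L h) :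
    Tendsto (fun n => ∫ y, h y ∂(ρ n)) atTop (𝓝 (∫ y, h y ∂ν)) := by
  obtain ⟨hνint, hνC⟩ := integrable_and_integral_le_of_tendsto hρ
    (continuous_abs.rpow_const fun _ => Or.inr (by linarith)) (fun y => by positivity) hmom
  refine tendsto_of_forall_eventually_dist_le fun ε hε => ?_
  have hsmall : Tendsto (fun M : ℝ => L * (C / M ^ (p - 1))) atTop (𝓝 0) := by
    simpa using (tendsto_const_nhds.div_atTop (tendsto_rpow_atTop (by linarith))).const_mul (L : ℝ)
  obtain ⟨M, hMε, hM⟩ := ((hsmall.eventually (ge_mem_nhds hε)).and (eventually_gt_atTop 0)).exists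
  have hclip_le : ∀ y, |max (min y M) (-M)| ≤ M := fun y =>
    abs_le.2 ⟨le_max_right _ _, max_le (min_le_right _ _) (by linarith)⟩
  refine ⟨fun n => ∫ y, h (max (min y M) (-M)) ∂(ρ n), ∫ y, h (max (min y M) (-M)) ∂ν,
    ?_, ?_, ?_⟩
  · refine tendsto_iff_forall_lipschitz_integral_tendsto.1 hρ _ ⟨L * (2 * M), fun y z => ?_⟩
      ⟨_, hh.comp ((LipschitzWith.id.min_const M).max_const (-M))⟩
    have hdist : dist (max (min y M) (-M)) (max (min z M) (-M)) ≤ 2 * M := by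
      rw [Real.dist_eq]
      linarith [abs_sub (max (min y M) (-M)) (max (min z M) (-M)), hclip_le y, hclip_le z]
    exact (hh.dist_le_mul _ _).trans (by gcongr)
  · rw [dist_comm, Real.dist_eq]
    exact (abs_integral_sub_integral_max_min_le hp.le hνint hνC hh hM).trans hMε
  · filter_upwards [hmom] with n hn
    rw [Real.dist_eq]
    exact (abs_integral_sub_integral_max_min_le hp.le hn.1 hn.2 hh hM).trans hMε

lemma tendsto_integral_comp_sub_of_lipschitzWith (hρ : Tendsto ρ atTop (𝓝 ν)) (hp : 1 < p)
    (hmom : ∀ᶠ n in atTop,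
      Integrable (fun y => |y| ^ p) (ρ n : Measure ℝ) ∧ ∫ y, |y| ^ p ∂(ρ n) ≤ C)
    {h : ℝ → ℝ} {L : ℝ≥0} (hh : LipschitzWith L h) {c : ℕ → ℝ} {c₀ : ℝ}
    (hc : Tendsto c atTop (𝓝 c₀)) :
    Tendsto (fun n => ∫ y, h (y - c n) ∂(ρ n)) atTop (𝓝 (∫ y, h (y - c₀) ∂ν)) := by
  have hshift : ∀ c, LipschitzWith L fun y => h (y - c) := fun c => by
    simpa [Function.comp_def] using hh.comp (LipschitzWith.id.sub (LipschitzWith.const c))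
  have hfixed := tendsto_integral_of_lipschitzWith hρ hp hmom (hshift c₀)
  have hdiff : Tendsto (fun n => ∫ y, h (y - c n) ∂(ρ n) - ∫ y, h (y - c₀) ∂(ρ n))
      atTop (𝓝 0) := by
    refine squeeze_zero_norm' ?_ (by simpa using ((hc.sub_const c₀).abs.const_mul (L : ℝ)))
    filter_upwards [hmom] with n hn
    have hid : Integrable (fun y : ℝ => y) (ρ n : Measure ℝ) :=
      integrable_of_integrable_abs_rpow aestronglyMeasurable_id hp.le hn.1
    rw [← integral_sub ((hshift _).integrable_comp hid) ((hshift _).integrable_comp hid)]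
    refine (norm_integral_le_of_norm_le_const (ae_of_all _ fun y => ?_)).trans_eq
      (by rw [probReal_univ, mul_one])
    have := hh.dist_le_mul (y - c n) (y - c₀)
    rwa [Real.dist_eq, Real.dist_eq, sub_sub_sub_cancel_left, abs_sub_comm c₀, ← Real.norm_eq_abs]
      at this
  simpa using hdiff.add hfixed

end WeakConvergence

section ScaledReturns

variable {γ : ℕ → ℝ} {p C : ℝ}

lemma tendsto_measureReal_setOf_lt_abs {μ : ℕ → Measure ℝ} [∀ n, IsFiniteMeasure (μ n)]
    (hγ : ∀ n, 0 < γ n) (hγ0 : Tendsto γ atTop (𝓝 0)) (hp : 0 < p)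
    (hmom : ∀ᶠ n in atTop, Integrable (fun x => |(Real.exp x - 1) / γ n| ^ p) (μ n) ∧
      ∫ x, |(Real.exp x - 1) / γ n| ^ p ∂(μ n) ≤ C) {δ : ℝ} (hδ : 0 < δ) :
    Tendsto (fun n => (μ n).real {x | δ < |x|}) atTop (𝓝 0) := by
  set t := 1 - Real.exp (-δ)
  have ht : 0 < t := sub_pos.2 (Real.exp_lt_one_iff.2 (neg_lt_zero.2 hδ))
  refine squeeze_zero' (Eventually.of_forall fun n => measureReal_nonneg) ?_
    (show Tendsto (fun n => C * (γ n / t) ^ p) atTop (𝓝 0) by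
      simpa [Real.zero_rpow hp.ne'] using ((hγ0.div_const t).rpow_const (Or.inr hp.le)).const_mul C)
  filter_upwards [hmom] with n ⟨hint, hle⟩
  -- Markov's inequality, since `|x| > δ` forces `|exp x - 1| ≥ t`
  have hsub : {x | δ < |x|} ⊆ {x | (t / γ n) ^ p ≤ |(Real.exp x - 1) / γ n| ^ p} := by
    intro x hx
    rw [Set.mem_ofPred_eq, abs_div, abs_of_pos (hγ n)]
    have := one_sub_exp_neg_le_abs_exp_sub_one (le_of_lt hx)
    have := hγ n
    gcongr
  have hmarkov := mul_meas_ge_le_integral_of_nonneg (ae_of_all _ fun x => by positivity) hint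
    ((t / γ n) ^ p)
  have htγ : 0 < (t / γ n) ^ p := by have := hγ n; positivity
  calc (μ n).real {x | δ < |x|}
      ≤ (μ n).real {x | (t / γ n) ^ p ≤ |(Real.exp x - 1) / γ n| ^ p} := measureReal_mono hsub
    _ ≤ C / (t / γ n) ^ p := by rw [le_div_iff₀' htγ]; linarith
    _ = C * (γ n / t) ^ p := by
        rw [div_eq_mul_inv, ← Real.inv_rpow (by have := hγ n; positivity), inv_div]

lemma abs_integral_comp_exp_sub_one_div_sub_le {μ : Measure ℝ} [IsFiniteMeasure μ]
    {f : ℝ → ℝ} {K : ℝ} {L : ℝ≥0} (hK : ∀ y z, dist (f y) (f z) ≤ K) (hf : LipschitzWith L f)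
    {c δ : ℝ} (hδ : 0 ≤ δ) (hZ : Integrable (fun x => (Real.exp x - 1) / c) μ) :
    |∫ x, f ((Real.exp x - 1) / c) ∂μ - ∫ x, f (x / c) ∂μ|
      ≤ L * δ * ∫ x, |(Real.exp x - 1) / c| ∂μ + K * μ.real {x | δ < |x|} := by
  have hK0 : 0 ≤ K := dist_nonneg.trans (hK 0 0)
  have hint : ∀ g : ℝ → ℝ, Continuous g → Integrable (fun x => f (g x)) μ := fun g hg =>
    Integrable.of_bound (hf.continuous.comp hg).aestronglyMeasurable (‖f 0‖ + K)
      (ae_of_all _ fun x => by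
        linarith [norm_le_norm_add_norm_sub' (f (g x)) (f 0),
          dist_eq_norm (f (g x)) (f 0) ▸ hK (g x) 0])
  have hS : MeasurableSet {x : ℝ | δ < |x|} := measurableSet_lt measurable_const measurable_abs
  have hpointwise : ∀ x, |f ((Real.exp x - 1) / c) - f (x / c)|
      ≤ L * δ * |(Real.exp x - 1) / c| + {x : ℝ | δ < |x|}.indicator (fun _ => K) x := by
    intro x
    by_cases hx : x ∈ {x : ℝ | δ < |x|}
    · rw [Set.indicator_of_mem hx, ← Real.dist_eq]
      exact (hK _ _).trans (le_add_of_nonneg_left (by positivity))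
    · have hclose : |(Real.exp x - 1) / c - x / c| ≤ δ * |(Real.exp x - 1) / c| := by
        rw [← sub_div, abs_div, abs_div, ← mul_div_assoc]
        gcongr
        exact (abs_exp_sub_one_sub_le x).trans (by gcongr; exact not_lt.1 hx)
      rw [Set.indicator_of_notMem hx, add_zero, ← Real.dist_eq, mul_assoc]
      exact (hf.dist_le_mul _ _).trans (by rw [Real.dist_eq]; gcongr)
  rw [← integral_sub (hint _ (by fun_prop)) (hint _ (by fun_prop))]
  calc |∫ x, (f ((Real.exp x - 1) / c) - f (x / c)) ∂μ|
      ≤ ∫ x, |f ((Real.exp x - 1) / c) - f (x / c)| ∂μ := abs_integral_le_integral_abs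
    _ ≤ ∫ x, (L * δ * |(Real.exp x - 1) / c| + {x : ℝ | δ < |x|}.indicator (fun _ => K) x) ∂μ :=
        integral_mono ((hint _ (by fun_prop)).sub (hint _ (by fun_prop))).abs
          ((hZ.abs.const_mul _).add ((integrable_const K).indicator hS)) hpointwise
    _ = L * δ * ∫ x, |(Real.exp x - 1) / c| ∂μ + K * μ.real {x | δ < |x|} := by
        rw [integral_add (hZ.abs.const_mul _) ((integrable_const K).indicator hS),
          integral_const_mul, integral_indicator_const _ hS, smul_eq_mul, mul_comm K]

lemma tendsto_map_exp_sub_one_div_of_tendsto_map_div {μ : ℕ → ProbabilityMeasure ℝ}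
    (hγ : ∀ n, 0 < γ n) (hγ0 : Tendsto γ atTop (𝓝 0)) (hp : 1 ≤ p)
    (hmom : ∀ᶠ n in atTop, Integrable (fun x => |(Real.exp x - 1) / γ n| ^ p) (μ n : Measure ℝ) ∧
      ∫ x, |(Real.exp x - 1) / γ n| ^ p ∂(μ n : Measure ℝ) ≤ C) {ν : ProbabilityMeasure ℝ}
    (hX : Tendsto (fun n => (μ n).map (f := fun x => x / γ n) (by fun_prop)) atTop (𝓝 ν)) :
    Tendsto (fun n => (μ n).map (f := fun x => (Real.exp x - 1) / γ n) (by fun_prop))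
      atTop (𝓝 ν) := by
  rw [tendsto_iff_forall_lipschitz_integral_tendsto] at hX ⊢
  rintro f ⟨K, hK⟩ ⟨L, hf⟩
  have hmap : ∀ n (g : ℝ → ℝ) (hg : AEMeasurable g (μ n : Measure ℝ)),
      ∫ y, f y ∂((μ n).map hg : Measure ℝ) = ∫ x, f (g x) ∂(μ n : Measure ℝ) :=
    fun n g hg => by
      rw [ProbabilityMeasure.toMeasure_map, integral_map hg hf.continuous.aestronglyMeasurable]
  have hXf := hX f ⟨K, hK⟩ ⟨L, hf⟩
  simp only [hmap] at hXf ⊢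
  refine tendsto_of_forall_eventually_dist_le fun ε hε => ⟨_, _, hXf, by simp [hε.le], ?_⟩
  obtain ⟨δ, hδ, hδε⟩ := exists_pos_mul_lt (half_pos hε) (L * (1 + C))
  have htail := ((tendsto_measureReal_setOf_lt_abs hγ hγ0 (by linarith) hmom hδ).const_mul
    K).eventually (ge_mem_nhds (show K * 0 < ε / 2 by rw [mul_zero]; positivity))
  filter_upwards [hmom, htail] with n ⟨hint, hle⟩ hKn
  have hL1 := integral_abs_le_one_add (by fun_prop) hp hint hle
  have hZ := integrable_of_integrable_abs_rpow (by fun_prop) hp hint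
  rw [Real.dist_eq]
  calc _ ≤ L * δ * ∫ x, |(Real.exp x - 1) / γ n| ∂(μ n : Measure ℝ)
          + K * (μ n : Measure ℝ).real {x | δ < |x|} :=
        abs_integral_comp_exp_sub_one_div_sub_le hK hf hδ.le hZ
    _ ≤ L * (1 + C) * δ + ε / 2 := by
        rw [mul_right_comm]
        gcongr
    _ ≤ ε := by linarith

lemma tendsto_integral_comp_exp_sub_one_div_sub {μ : ℕ → ProbabilityMeasure ℝ}
    (hγ : ∀ n, 0 < γ n) (hγ0 : Tendsto γ atTop (𝓝 0)) (hp : 1 < p)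
    (hmom : ∀ᶠ n in atTop, Integrable (fun x => |(Real.exp x - 1) / γ n| ^ p) (μ n : Measure ℝ) ∧
      ∫ x, |(Real.exp x - 1) / γ n| ^ p ∂(μ n : Measure ℝ) ≤ C) {ν : ProbabilityMeasure ℝ}
    (hconv : ∀ f : BoundedContinuousFunction ℝ ℝ,
      Tendsto (fun n => ∫ x, f (x / γ n) ∂(μ n : Measure ℝ)) atTop (𝓝 (∫ y, f y ∂(ν : Measure ℝ))))
    {h : ℝ → ℝ} {L : ℝ≥0} (hh : LipschitzWith L h) {c : ℕ → ℝ} {c₀ : ℝ}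
    (hc : Tendsto c atTop (𝓝 c₀)) :
    Tendsto (fun n => ∫ x, h ((Real.exp x - 1) / γ n - c n) ∂(μ n : Measure ℝ)) atTop
      (𝓝 (∫ y, h (y - c₀) ∂(ν : Measure ℝ))) := by
  have hp0 : 0 ≤ p := by linarith
  have hX : Tendsto (fun n => (μ n).map (f := fun x => x / γ n) (by fun_prop)) atTop (𝓝 ν) := by
    refine ProbabilityMeasure.tendsto_iff_forall_integral_tendsto.2 fun f => (hconv f).congr
      fun n => ?_
    rw [ProbabilityMeasure.toMeasure_map]
    exact (integral_map (by fun_prop) f.continuous.aestronglyMeasurable).symm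
  let ρ : ℕ → ProbabilityMeasure ℝ := fun n =>
    (μ n).map (f := fun x => (Real.exp x - 1) / γ n) (by fun_prop)
  have hmomρ : ∀ᶠ n in atTop,
      Integrable (fun y => |y| ^ p) (ρ n : Measure ℝ) ∧ ∫ y, |y| ^ p ∂(ρ n : Measure ℝ) ≤ C := by
    filter_upwards [hmom] with n hn
    rwa [ProbabilityMeasure.toMeasure_map,
      integrable_map_measure (by fun_prop (disch := assumption)) (by fun_prop),
      integral_map (by fun_prop) (by fun_prop (disch := assumption))]
  refine (tendsto_integral_comp_sub_of_lipschitzWith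
    (tendsto_map_exp_sub_one_div_of_tendsto_map_div hγ hγ0 hp.le hmom hX) hp hmomρ hh hc).congr
    fun n => ?_
  rw [ProbabilityMeasure.toMeasure_map]
  exact integral_map (by fun_prop) (hh.continuous.comp (by fun_prop)).aestronglyMeasurable

end ScaledReturns

theorem typical_deviations_option_prices_general
    (μ : ℕ → Measure ℝ) (hprob : ∀ n, IsProbabilityMeasure (μ n))
    (γ : ℕ → ℝ) (hγ : ∀ n, 0 < γ n) (hγ0 : Tendsto γ atTop (𝓝 0))
    (ν : Measure ℝ) (hν : IsProbabilityMeasure ν)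
    (hconv : ∀ f : BoundedContinuousFunction ℝ ℝ,
      Tendsto (fun n => ∫ x, f (x / γ n) ∂(μ n)) atTop (𝓝 (∫ y, f y ∂ν)))
    (η : ℝ) (hη : 0 < η)
    (hmom : limsup
        (fun n => ∫⁻ x, ENNReal.ofReal (|(Real.exp x - 1) / γ n| ^ (1+η)) ∂(μ n)) atTop < ⊤)
    (κ : ℕ → ℝ)
    (a : ℝ)
    (hκγ : Tendsto (fun n => κ n / γ n) atTop (𝓝 a)) :
    Tendsto (fun n => (∫ x, max (Real.exp x - Real.exp (κ n)) 0 ∂(μ n)) / γ n)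
        atTop (𝓝 (∫ y, max (y - a) 0 ∂ν)) ∧
    Tendsto (fun n => (∫ x, max (Real.exp (-κ n) - Real.exp x) 0 ∂(μ n)) / γ n)
        atTop (𝓝 (∫ y, max (-(y + a)) 0 ∂ν)) := by
  have hp : 0 ≤ 1 + η := by linarith
  obtain ⟨C, hC⟩ := exists_eventually_integrable_and_integral_le
    (fun n x => by positivity) (fun n => by fun_prop (disch := assumption)) hmom
  have hcall := tendsto_integral_comp_exp_sub_one_div_sub (μ := fun n => ⟨μ n, hprob n⟩)
    (ν := ⟨ν, hν⟩) hγ hγ0 (by linarith) hC hconv (h := fun z => max z 0)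
    (LipschitzWith.id.max_const 0)
    (tendsto_exp_sub_one_div_of_tendsto_div (fun n => (hγ n).ne') hγ0 hκγ)
  have hput := tendsto_integral_comp_exp_sub_one_div_sub (μ := fun n => ⟨μ n, hprob n⟩)
    (ν := ⟨ν, hν⟩) hγ hγ0 (by linarith) hC hconv (h := fun z => max (-z) 0)
    (LipschitzWith.id.neg.max_const 0)
    (tendsto_exp_sub_one_div_of_tendsto_div (s := fun n => -κ n) (fun n => (hγ n).ne') hγ0
      (by simpa only [neg_div] using hκγ.neg))
  simp only [sub_neg_eq_add] at hput
  refine ⟨hcall.congr fun n => ?_, hput.congr fun n => ?_⟩ <;>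
  · rw [← integral_div]
    congr 1 with x
    rw [← max_div_div_right (hγ n).le, zero_div]
    ring_nf

/-- **Typical deviations: asymptotics of call and put prices.**
For each `n`, the law of `X_n` is the probability measure `μ n` on `ℝ`, and `ν` is the law
of `Y`. Convergence in distribution of `X_n/γ_n` to `Y` is expressed by convergence of
integrals of bounded continuous functions. If `E_n[e^{X_n}] = 1` for every `n`,
`limsup_n E_n[|(e^{X_n}-1)/γ_n|^{1+η}] < ∞` for some `η > 0`, and `κ n ≥ 0` with
`κ n / γ n → a ∈ [0,∞)`, then `E_n[(e^{X_n}-e^{κ n})⁺]/γ n → E[(Y-a)⁺]` and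
`E_n[(e^{-κ n}-e^{X_n})⁺]/γ n → E[(Y+a)⁻]`, where `x⁻ = max (-x) 0`. -/
theorem typical_deviations_option_prices
    (μ : ℕ → Measure ℝ) (hprob : ∀ n, IsProbabilityMeasure (μ n))
    (γ : ℕ → ℝ) (hγ : ∀ n, 0 < γ n) (hγ0 : Tendsto γ atTop (𝓝 0))
    (ν : Measure ℝ) (hν : IsProbabilityMeasure ν)
    (hconv : ∀ f : BoundedContinuousFunction ℝ ℝ,
      Tendsto (fun n => ∫ x, f (x / γ n) ∂(μ n)) atTop (𝓝 (∫ y, f y ∂ν)))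
    (hmart : ∀ n, ∫ x, Real.exp x ∂(μ n) = 1)
    (η : ℝ) (hη : 0 < η)
    (hmom : limsup
        (fun n => ∫⁻ x, ENNReal.ofReal (|(Real.exp x - 1) / γ n| ^ (1+η)) ∂(μ n)) atTop < ⊤)
    (κ : ℕ → ℝ) (hκ : ∀ n, 0 ≤ κ n)
    (a : ℝ) (ha : 0 ≤ a)
    (hκγ : Tendsto (fun n => κ n / γ n) atTop (𝓝 a)) :
    Tendsto (fun n => (∫ x, max (Real.exp x - Real.exp (κ n)) 0 ∂(μ n)) / γ n)
        atTop (𝓝 (∫ y, max (y - a) 0 ∂ν)) ∧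
    Tendsto (fun n => (∫ x, max (Real.exp (-κ n) - Real.exp x) 0 ∂(μ n)) / γ n)
        atTop (𝓝 (∫ y, max (-(y + a)) 0 ∂ν)) :=
  typical_deviations_option_prices_general μ hprob γ hγ hγ0 ν hν hconv η hη hmom κ a hκγ
end

section
/- Fix δ > 0. Let (κ_n) and (v_n) be sequences with κ_n ≥ δ and v_n > 0 for all n, and set c_n := C_BS(κ_n, v_n). If c_n → 0 as n → ∞, then v_n ~ √(2(−log c_n + κ_n)) − √(2(−log c_n)), i.e. the ratio of v_n to this expression tends to 1. -/
/-!
Write `x = κ/v - v/2`, so that `κ = v x + v²/2`, `d₁ = -x`, `d₂ = -(x + v)`, and completing the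
square turns the price into `C_BS(κ, v) = ∫_{s ≤ -x} φ(s) (1 - e^{v(s + x)}) ds`.
Mills' ratio gives `C_BS ≤ e^{-x²/2}` for `x ≥ 1`. Restricting the integral to `s ≤ -x - 1` gives
`C_BS ≥ (1 - e^{-v}) Φ(-x - 1)`; since `κ ≥ δ` keeps `v` away from `0` while `x` is bounded, this
bounds `C_BS` below by a positive constant for bounded `x` (so `c_n → 0` forces `x_n → ∞`) and by
`e^{-(x + C)²/2}` for `x ≥ 0`. Hence `x ≤ √(-2 log c) ≤ x + C`. Finally, with `A = √(-2 log c)`,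
`B = √(2(-log c + κ))` and `y = x + v`, the identities `B² - A² = 2κ = y² - x²` turn the ratio
into `(A + B)/(x + y)`, which lies between `1` and `A/x ≤ 1 + C/x`.
-/
open MeasureTheory Filter Topology

/-- Standard normal density `φ(z) = e^{-z²/2}/√(2π)`. -/
noncomputable def stdPDF (z : ℝ) : ℝ := Real.exp (-(z^2)/2) / Real.sqrt (2*Real.pi)

/-- Standard normal distribution function `Φ(z) = ∫_{-∞}^z φ(t) dt`. -/
noncomputable def stdCDF (z : ℝ) : ℝ := ∫ t in Set.Iic z, stdPDF t

/-- Black–Scholes call price `C_BS(κ,v) = Φ(d1) - e^κ Φ(d2)` with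
`d1 = -κ/v + v/2`, `d2 = -κ/v - v/2`. -/
noncomputable def CBS (κ v : ℝ) : ℝ :=
  stdCDF (-κ/v + v/2) - Real.exp κ * stdCDF (-κ/v - v/2)

open Set Real

lemma stdPDF_pos (z : ℝ) : 0 < stdPDF z := by
  unfold stdPDF; positivity

lemma stdPDF_nonneg (z : ℝ) : 0 ≤ stdPDF z := (stdPDF_pos z).le

lemma stdPDF_le_exp (z : ℝ) : stdPDF z ≤ exp (-(z ^ 2) / 2) := by
  have h : 1 ≤ √(2 * π) := one_le_sqrt.2 (by linarith [pi_gt_three])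
  exact div_le_self (exp_pos _).le h

lemma stdPDF_le_stdPDF_of_sq_le {a b : ℝ} (h : a ^ 2 ≤ b ^ 2) : stdPDF b ≤ stdPDF a := by
  unfold stdPDF; gcongr

lemma stdPDF_sub (s v : ℝ) : stdPDF (s - v) = stdPDF s * exp (v * s - v ^ 2 / 2) := by
  rw [stdPDF, stdPDF, div_mul_eq_mul_div, ← exp_add]; ring_nf

lemma integrable_stdPDF : Integrable stdPDF := by
  have := (integrable_exp_neg_mul_sq (b := 1 / 2) (by norm_num)).div_const √(2 * π)
  convert this using 2 with z
  rw [stdPDF]; ring_nf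

lemma integrable_mul_stdPDF : Integrable fun t => t * stdPDF t := by
  have := (integrable_mul_exp_neg_mul_sq (b := 1 / 2) (by norm_num)).div_const √(2 * π)
  convert this using 2 with z
  rw [stdPDF]; ring_nf

lemma hasDerivAt_stdPDF (t : ℝ) : HasDerivAt stdPDF (-t * stdPDF t) t := by
  have h : HasDerivAt (fun z : ℝ => -(z ^ 2) / 2) (-t) t :=
    ((hasDerivAt_pow 2 t).neg.div_const 2).congr_deriv (by push_cast; ring)
  exact (h.exp.div_const _).congr_deriv (by rw [stdPDF]; ring)

lemma tendsto_stdPDF_atBot : Tendsto stdPDF atBot (𝓝 0) := by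
  have hsq : Tendsto (fun t : ℝ => (-t) ^ 2) atBot atTop :=
    (tendsto_pow_atTop two_ne_zero).comp tendsto_neg_atBot_atTop
  simp only [neg_sq] at hsq
  have h := (tendsto_neg_atTop_atBot.comp hsq).atBot_div_const two_pos
  have := (tendsto_exp_atBot.comp h).div_const √(2 * π)
  rwa [zero_div] at this

lemma stdCDF_nonneg (z : ℝ) : 0 ≤ stdCDF z :=
  setIntegral_nonneg measurableSet_Iic fun t _ => stdPDF_nonneg t

lemma stdCDF_mono : Monotone stdCDF := fun _ _ h =>
  setIntegral_mono_set integrable_stdPDF.integrableOn (.of_forall stdPDF_nonneg)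
    (Iic_subset_Iic.2 h).eventuallyLE

lemma stdCDF_sub (z v : ℝ) : stdCDF (z - v) = ∫ s in Iic z, stdPDF (s - v) := by
  rw [stdCDF, ← integral_indicator measurableSet_Iic, ← integral_indicator measurableSet_Iic,
    ← integral_sub_right_eq_self _ v]
  congr with s
  simp [indicator_apply]

-- Mills' ratio: `1 ≤ -t / z` on `Iic (-z)`, and `-t * stdPDF t` integrates to `stdPDF` there.
lemma stdCDF_neg_le_stdPDF_div {z : ℝ} (hz : 0 < z) : stdCDF (-z) ≤ stdPDF z / z := by
  have hmills : ∫ t in Iic (-z), -t * stdPDF t = stdPDF z := by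
    rw [integral_Iic_of_hasDerivAt_of_tendsto' (fun t _ => hasDerivAt_stdPDF t)
      (by simpa using integrable_mul_stdPDF.neg.integrableOn) tendsto_stdPDF_atBot]
    simp [stdPDF]
  calc stdCDF (-z) ≤ ∫ t in Iic (-z), -t * stdPDF t / z := by
        refine setIntegral_mono_on integrable_stdPDF.integrableOn
          (by simpa using (integrable_mul_stdPDF.neg.div_const z).integrableOn) measurableSet_Iic
          fun t ht => ?_
        rw [le_div_iff₀ hz]
        have : z ≤ -t := by linarith [ht.out]
        nlinarith [stdPDF_nonneg t]
    _ = stdPDF z / z := by rw [integral_div, hmills]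

lemma stdPDF_add_one_le_stdCDF_neg {z : ℝ} (hz : 0 ≤ z) : stdPDF (z + 1) ≤ stdCDF (-z) := by
  calc stdPDF (z + 1) = ∫ _ in Icc (-(z + 1)) (-z), stdPDF (z + 1) := by simp
    _ ≤ ∫ t in Icc (-(z + 1)) (-z), stdPDF t :=
        setIntegral_mono_on (by simp) integrable_stdPDF.integrableOn measurableSet_Icc
          fun t ht => stdPDF_le_stdPDF_of_sq_le (by nlinarith [ht.1, ht.2])
    _ ≤ stdCDF (-z) :=
        setIntegral_mono_set integrable_stdPDF.integrableOn (.of_forall stdPDF_nonneg)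
          Icc_subset_Iic_self.eventuallyLE

lemma CBS_eq {κ v x : ℝ} (hv : v ≠ 0) (hκ : κ = v * x + v ^ 2 / 2) :
    CBS κ v = stdCDF (-x) - exp κ * stdCDF (-x - v) := by
  rw [CBS]
  congr 3 <;> (subst hκ; field_simp; ring)

lemma stdPDF_mul_exp (v x s : ℝ) :
    stdPDF s * exp (v * (s + x)) = exp (v * x + v ^ 2 / 2) * stdPDF (s - v) := by
  rw [stdPDF_sub, mul_left_comm, ← exp_add]; ring_nf

lemma integrable_stdPDF_mul_exp (v x : ℝ) : Integrable fun s => stdPDF s * exp (v * (s + x)) := by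
  simp_rw [stdPDF_mul_exp]
  exact (integrable_stdPDF.comp_sub_right v).const_mul _

lemma CBS_eq_integral {κ v x : ℝ} (hv : v ≠ 0) (hκ : κ = v * x + v ^ 2 / 2) :
    CBS κ v = ∫ s in Iic (-x), stdPDF s * (1 - exp (v * (s + x))) := by
  have hshift : exp κ * stdCDF (-x - v) = ∫ s in Iic (-x), stdPDF s * exp (v * (s + x)) := by
    simp_rw [hκ, stdPDF_mul_exp, integral_const_mul, stdCDF_sub]
  rw [CBS_eq hv hκ, hshift, stdCDF, ← integral_sub integrable_stdPDF.integrableOn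
    (integrable_stdPDF_mul_exp v x).integrableOn]
  simp_rw [mul_one_sub]

lemma one_sub_exp_mul_stdCDF_le_CBS {κ v x : ℝ} (hv : 0 < v) (hκ : κ = v * x + v ^ 2 / 2) :
    (1 - exp (-v)) * stdCDF (-(x + 1)) ≤ CBS κ v := by
  have hint : Integrable fun s => stdPDF s * (1 - exp (v * (s + x))) := by
    simp_rw [mul_one_sub]
    exact integrable_stdPDF.sub (integrable_stdPDF_mul_exp v x)
  rw [CBS_eq_integral hv.ne' hκ, stdCDF, ← integral_const_mul]
  calc ∫ s in Iic (-(x + 1)), (1 - exp (-v)) * stdPDF s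
      ≤ ∫ s in Iic (-(x + 1)), stdPDF s * (1 - exp (v * (s + x))) := by
        refine setIntegral_mono_on (integrable_stdPDF.const_mul _).integrableOn hint.integrableOn
          measurableSet_Iic fun s hs => ?_
        have : exp (v * (s + x)) ≤ exp (-v) := exp_le_exp.2 (by nlinarith [hs.out])
        nlinarith [stdPDF_nonneg s]
    _ ≤ ∫ s in Iic (-x), stdPDF s * (1 - exp (v * (s + x))) := by
        refine setIntegral_mono_set hint.integrableOn ?_
          (Iic_subset_Iic.2 (by linarith)).eventuallyLE
        refine (ae_restrict_iff' measurableSet_Iic).2 (.of_forall fun s hs => ?_)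
        have : exp (v * (s + x)) ≤ 1 := exp_le_one_iff.2 (by nlinarith [hs.out])
        exact mul_nonneg (stdPDF_nonneg s) (by linarith)

lemma CBS_le_exp {κ v x : ℝ} (hv : v ≠ 0) (hκ : κ = v * x + v ^ 2 / 2) (hx : 1 ≤ x) :
    CBS κ v ≤ exp (-(x ^ 2) / 2) :=
  calc CBS κ v ≤ stdCDF (-x) := by
        rw [CBS_eq hv hκ]
        linarith [mul_nonneg (exp_pos κ).le (stdCDF_nonneg (-x - v))]
    _ ≤ stdPDF x / x := stdCDF_neg_le_stdPDF_div (by linarith)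
    _ ≤ stdPDF x := div_le_self (stdPDF_nonneg x) hx
    _ ≤ exp (-(x ^ 2) / 2) := stdPDF_le_exp x

lemma min_le_of_le_mul_add_sq {δ v x M : ℝ} (hv : 0 < v) (hM : 0 ≤ M) (hxM : x ≤ M)
    (hδ : δ ≤ v * x + v ^ 2 / 2) : min 1 (δ / (M + 1)) ≤ v := by
  by_contra! h
  have h1 : v < 1 := h.trans_le (min_le_left _ _)
  have h2 : v * (M + 1) < δ := (lt_div_iff₀ (by linarith)).1 (h.trans_le (min_le_right _ _))
  nlinarith

lemma CBS_ge_of_le {δ κ v x M : ℝ} (hv : 0 < v) (hκ : κ = v * x + v ^ 2 / 2) (hδ : δ ≤ κ)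
    (hM : 0 ≤ M) (hxM : x ≤ M) :
    (1 - exp (-min 1 (δ / (M + 1)))) * stdCDF (-(M + 1)) ≤ CBS κ v := by
  refine le_trans (mul_le_mul ?_ (stdCDF_mono (by linarith)) (stdCDF_nonneg _) ?_)
    (one_sub_exp_mul_stdCDF_le_CBS hv hκ)
  · gcongr
    exact min_le_of_le_mul_add_sq hv hM hxM (hκ ▸ hδ)
  · exact sub_nonneg.2 (exp_le_one_iff.2 (by linarith))

lemma tendsto_atTop_of_tendsto_CBS_zero {ι : Type*} {l : Filter ι} {δ : ℝ} (hδ : 0 < δ)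
    {κ v x : ι → ℝ} (hv : ∀ i, 0 < v i) (hκ : ∀ i, κ i = v i * x i + v i ^ 2 / 2)
    (hδκ : ∀ i, δ ≤ κ i) (h0 : Tendsto (fun i => CBS (κ i) (v i)) l (𝓝 0)) :
    Tendsto x l atTop := by
  refine tendsto_atTop.2 fun M => ?_
  set M' := max M 0
  have hw : 0 < min 1 (δ / (M' + 1)) := lt_min one_pos (div_pos hδ (by positivity))
  have hε : 0 < (1 - exp (-min 1 (δ / (M' + 1)))) * stdCDF (-(M' + 1)) :=
    mul_pos (sub_pos.2 (exp_lt_one_iff.2 (by linarith)))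
      ((stdPDF_pos _).trans_le (stdPDF_add_one_le_stdCDF_neg (by positivity)))
  filter_upwards [h0.eventually (gt_mem_nhds hε)] with i hi
  by_contra! hxi
  exact (CBS_ge_of_le (hv i) (hκ i) (hδκ i) (le_max_right M 0)
    (hxi.le.trans (le_max_left M 0))).not_gt hi

lemma exists_exp_le_CBS {δ : ℝ} (hδ : 0 < δ) :
    ∃ C, 0 ≤ C ∧ ∀ κ v x : ℝ, 0 < v → κ = v * x + v ^ 2 / 2 → δ ≤ κ → 0 ≤ x →
      exp (-(x + C) ^ 2 / 2) ≤ CBS κ v := by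
  set m := min 1 δ
  have hm : 0 < m := lt_min one_pos hδ
  set K := m / (2 * √(2 * π))
  have hK : 0 < K := by positivity
  refine ⟨3 + |log K|, by positivity, fun κ v x hv hκ hδκ hx => ?_⟩
  set w := min 1 (δ / (x + 1))
  have hw1 : w ≤ 1 := min_le_left _ _
  have hxexp : x + 1 ≤ exp x := by linarith [add_one_le_exp x]
  have hmw : m * exp (-x) ≤ w := by
    calc m * exp (-x) ≤ m / (x + 1) := by
          rw [exp_neg, ← div_eq_mul_inv]; gcongr
      _ ≤ w := le_min ((div_le_one (by linarith)).2 (by linarith [min_le_left 1 δ]))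
          (by gcongr; exact min_le_right 1 δ)
  have hw0 : 0 ≤ w := (by positivity : 0 ≤ m * exp (-x)).trans hmw
  have hw_exp : w / 2 ≤ 1 - exp (-w) := by
    have h := mul_le_mul_of_nonneg_left (add_one_le_exp w) (exp_pos (-w)).le
    rw [← exp_add, neg_add_cancel, exp_zero] at h
    nlinarith [mul_nonneg hw0 (sub_nonneg.2 hw1)]
  have hpdf : stdPDF (x + 2) ≤ stdCDF (-(x + 1)) := by
    simpa [add_assoc, one_add_one_eq_two] using
      stdPDF_add_one_le_stdCDF_neg (z := x + 1) (by linarith)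
  calc exp (-(x + (3 + |log K|)) ^ 2 / 2) ≤ exp (log K + (-x + -((x + 2) ^ 2) / 2)) :=
        exp_le_exp.2 (by nlinarith [abs_nonneg (log K), neg_abs_le (log K)])
    _ = m * exp (-x) / 2 * stdPDF (x + 2) := by
        rw [exp_add, exp_log hK, exp_add, stdPDF]; ring
    _ ≤ (1 - exp (-w)) * stdCDF (-(x + 1)) :=
        mul_le_mul (by linarith) hpdf (stdPDF_nonneg _) (by linarith)
    _ ≤ CBS κ v := CBS_ge_of_le hv hκ hδκ hx le_rfl

lemma sqrt_two_mul_neg_log_mem_Icc {a b c : ℝ} (ha : 0 ≤ a) (hb : 0 ≤ b)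
    (hlo : exp (-b ^ 2 / 2) ≤ c) (hhi : c ≤ exp (-a ^ 2 / 2)) : √(2 * -log c) ∈ Icc a b := by
  have hc : 0 < c := (exp_pos _).trans_le hlo
  have h1 : -b ^ 2 / 2 ≤ log c := (le_log_iff_exp_le hc).2 hlo
  have h2 : log c ≤ -a ^ 2 / 2 := (log_le_iff_le_exp hc).2 hhi
  exact ⟨(le_sqrt ha (by nlinarith)).2 (by linarith), (sqrt_le_left hb).2 (by linarith)⟩

lemma div_sqrt_sub_sqrt_mem_Icc {κ v x L : ℝ} (hx : 0 < x) (hv : 0 < v)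
    (hκ : κ = v * x + v ^ 2 / 2) (hL : x ≤ √(2 * L)) :
    v / (√(2 * (L + κ)) - √(2 * L)) ∈ Icc 1 (√(2 * L) / x) := by
  set A := √(2 * L)
  set B := √(2 * (L + κ))
  have hκ0 : 0 < κ := by rw [hκ]; positivity
  have hL0 : 0 < 2 * L := sqrt_pos.1 (hx.trans_le hL)
  have hA2 : A ^ 2 = 2 * L := sq_sqrt hL0.le
  have hB2 : B ^ 2 = A ^ 2 + 2 * κ := by rw [sq_sqrt (by linarith), hA2]; ring
  have hxA : x ^ 2 ≤ A ^ 2 := pow_le_pow_left₀ hx.le hL 2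
  have hyB : x + v ≤ B := (sq_le_sq₀ (by positivity) (sqrt_nonneg _)).1 (by nlinarith)
  have hAB : A < B := (sq_lt_sq₀ (sqrt_nonneg _) (sqrt_nonneg _)).1 (by linarith)
  have hratio : v / (B - A) = (A + B) / (x + (x + v)) := by
    rw [div_eq_div_iff (by linarith) (by linarith)]
    nlinarith
  have hsq : (A * (x + v)) ^ 2 - (B * x) ^ 2 = 2 * κ * (A ^ 2 - x ^ 2) := by
    rw [mul_pow, mul_pow, hB2, hκ]; ring
  have hBx : B * x ≤ A * (x + v) :=
    (sq_le_sq₀ (by positivity) (by nlinarith)).1 (by nlinarith)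
  rw [hratio]
  constructor
  · rw [one_le_div (by linarith)]; linarith
  · rw [div_le_div_iff₀ (by linarith) hx]; nlinarith

/-- **From call price to implied volatility, κ bounded away from zero.**
If `κ n ≥ δ > 0`, `v n > 0` and `c n = C_BS(κ n, v n) → 0`, then
`v n ~ √(2(-log c n + κ n)) - √(2(-log c n))`. -/
theorem implied_vol_kappa_bounded_away (δ : ℝ) (hδ : 0 < δ)
    (κ v : ℕ → ℝ) (hκ : ∀ n, δ ≤ κ n) (hv : ∀ n, 0 < v n)
    (c : ℕ → ℝ) (hc : ∀ n, c n = CBS (κ n) (v n))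
    (h0 : Tendsto c atTop (𝓝 0)) :
    Tendsto (fun n => v n /
        (Real.sqrt (2 * (-Real.log (c n) + κ n)) - Real.sqrt (2 * (-Real.log (c n)))))
      atTop (𝓝 1) := by
  set x : ℕ → ℝ := fun n => κ n / v n - v n / 2
  have hκx : ∀ n, κ n = v n * x n + v n ^ 2 / 2 := fun n => by
    simp only [x]; field_simp [(hv n).ne']; ring
  have hxtop : Tendsto x atTop atTop :=
    tendsto_atTop_of_tendsto_CBS_zero hδ hv hκx hκ (funext hc ▸ h0)
  obtain ⟨C, hC, hCBS_ge⟩ := exists_exp_le_CBS hδ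
  have hbounds : ∀ᶠ n in atTop, v n / (√(2 * (-log (c n) + κ n)) - √(2 * -log (c n))) ∈
      Icc 1 (1 + C / x n) := by
    filter_upwards [hxtop.eventually_ge_atTop 1] with n hxn
    have hL := sqrt_two_mul_neg_log_mem_Icc (by linarith) (by linarith)
      (hc n ▸ hCBS_ge _ _ _ (hv n) (hκx n) (hκ n) (by linarith))
      (hc n ▸ CBS_le_exp (hv n).ne' (hκx n) hxn)
    obtain ⟨hlo, hhi⟩ := div_sqrt_sub_sqrt_mem_Icc (by linarith) (hv n) (hκx n) hL.1
    refine ⟨hlo, hhi.trans ?_⟩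
    rw [div_le_iff₀ (by linarith), add_mul, one_mul, div_mul_cancel₀ _ (by linarith)]
    exact hL.2
  refine tendsto_of_tendsto_of_tendsto_of_le_of_le' tendsto_const_nhds ?_
    (hbounds.mono fun _ h => h.1) (hbounds.mono fun _ h => h.2)
  simpa using tendsto_const_nhds.add (tendsto_const_nhds.div_atTop hxtop)
end
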